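/- arXiv:math/9911113 — 5 statements merged into one kernel-verified Lean document; each statement's English description precedes it below -/
import Mathlib

section
/- Let D be a strongly connected simple digraph (no loops, no multiple edges) on n vertices, and let v be a vertex of D whose degree d(v) = |E⁺(v)| + |E⁻(v)| is at least n. Then there exists a vertex z ≠ v such that D − z is strongly connected. -/
namespace Stmt0Aux

variable {V : Type*}

/-- Edge relation restricted to a vertex set. -/
abbrev E (G : V → V → Prop) (s : Set V) : V → V → Prop :=
  fun x y => x ∈ s ∧ y ∈ s ∧ G x y

/-- Reachability inside a vertex set. -/
abbrev Reach (G : V → V → Prop) (s : Set V) (a b : V) : Prop :=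
  Relation.ReflTransGen (E G s) a b

/-- Strong connectivity of the induced subdigraph on `s`. -/
abbrev StrongOn (G : V → V → Prop) (s : Set V) : Prop :=
  ∀ a ∈ s, ∀ b ∈ s, Reach G s a b

theorem reach_mono {G : V → V → Prop} {s t : Set V} (hst : s ⊆ t) {a b : V}
    (h : Reach G s a b) : Reach G t a b :=
  Relation.ReflTransGen.mono (p := E G t) (fun _ _ ⟨hx, hy, hG⟩ => ⟨hst hx, hst hy, hG⟩) _ _ h

theorem reach_trans {G : V → V → Prop} {s : Set V} {a b c : V}
    (h1 : Reach G s a b) (h2 : Reach G s b c) : Reach G s a c :=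
  Relation.ReflTransGen.trans h1 h2

theorem reach_rev {G : V → V → Prop} {s : Set V} {a b : V}
    (h : Reach G s a b) : Reach (fun x y => G y x) s b a := by
  induction h with
  | refl => exact Relation.ReflTransGen.refl
  | tail hac hcb ih =>
    exact Relation.ReflTransGen.head ⟨hcb.2.1, hcb.1, hcb.2.2⟩ ih

theorem strongOn_rev {G : V → V → Prop} {s : Set V} (h : StrongOn G s) :
    StrongOn (fun x y => G y x) s := fun a ha b hb => reach_rev (h b hb a ha)

theorem strongOn_singleton {G : V → V → Prop} {v : V} : StrongOn G {v} := by
  intro a ha b hb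
  rw [Set.mem_singleton_iff] at ha hb
  subst ha; subst hb
  exact Relation.ReflTransGen.refl

/-- A walk from inside `H` to outside `H` crosses the boundary. -/
theorem cross {G : V → V → Prop} {s H : Set V} {a b : V}
    (h : Reach G s a b) (ha : a ∈ H) (hb : b ∉ H) :
    ∃ h' p, h' ∈ H ∧ p ∈ s ∧ p ∉ H ∧ G h' p := by
  induction h using Relation.ReflTransGen.head_induction_on with
  | refl => exact absurd ha hb
  | head h' htail ih =>
    rename_i x c
    by_cases hc : c ∈ H
    · exact ih hc
    · exact ⟨x, c, ha, h'.2.1, hc, h'.2.2⟩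

/-- A walk from outside `H` back into `H`: there is an initial segment outside `H`
followed by a crossing edge. -/
theorem cross2 {G : V → V → Prop} {s H : Set V} {a b : V}
    (h : Reach G s a b) (hb : b ∈ H) (ha : a ∉ H) :
    ∃ r h', r ∈ s ∧ r ∉ H ∧ h' ∈ H ∧ Reach G (s \ H) a r ∧ G r h' := by
  induction h using Relation.ReflTransGen.head_induction_on with
  | refl => exact absurd hb ha
  | head h' htail ih =>
    rename_i x c
    by_cases hc : c ∈ H
    · exact ⟨x, c, h'.1, ha, hc, Relation.ReflTransGen.refl, h'.2.2⟩
    · obtain ⟨r, h'', hr1, hr2, hr3, hr4, hr5⟩ := ih hc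
      exact ⟨r, h'', hr1, hr2, hr3,
        Relation.ReflTransGen.head ⟨⟨h'.1, ha⟩, ⟨h'.2.1, hc⟩, h'.2.2⟩ hr4, hr5⟩

/-- A walk stays inside the set of vertices reachable from its start. -/
theorem reach_closure {G : V → V → Prop} {s : Set V} {a b : V}
    (h : Reach G s a b) : Reach G {x | x ∈ s ∧ Reach G s a x} a b := by
  induction h with
  | refl => exact Relation.ReflTransGen.refl
  | tail h1 h2 ih =>
    exact Relation.ReflTransGen.tail ih
      ⟨⟨h2.1, h1⟩, ⟨h2.2.1, Relation.ReflTransGen.tail h1 h2⟩, h2.2.2⟩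


theorem chain_mem {G : V → V → Prop} {s : Set V} {a : V} {l : List V}
    (h : List.Chain (E G s) a l) (ha : a ∈ s) :
    ∀ x ∈ a :: l, x ∈ s := by
  induction l generalizing a with
  | nil => intro x hx; simp at hx; subst hx; exact ha
  | cons c t ih =>
    obtain ⟨hedge, hch⟩ := List.isChain_cons_cons.1 h
    intro x hx
    rcases List.mem_cons.1 hx with rfl | hx'
    · exact ha
    · exact ih hch hedge.2.1 x hx'

/-- Every element of a chain is reachable from the head, within the chain's vertex set. -/
theorem ham1 {G : V → V → Prop} {s : Set V} {a : V} {l : List V}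
    (h : List.Chain (E G s) a l) :
    ∀ b ∈ a :: l, Relation.ReflTransGen
      (fun x y => x ∈ {x | x ∈ a :: l} ∧ y ∈ {x | x ∈ a :: l} ∧ G x y) a b := by
  induction l generalizing a with
  | nil => intro b hb; simp at hb; subst hb; exact Relation.ReflTransGen.refl
  | cons c t ih =>
    obtain ⟨hedge, hch⟩ := List.isChain_cons_cons.1 h
    intro b hb
    rcases List.mem_cons.1 hb with rfl | hb'
    · exact Relation.ReflTransGen.refl
    · have step : Relation.ReflTransGen
        (fun x y => x ∈ {x | x ∈ a :: c :: t} ∧ y ∈ {x | x ∈ a :: c :: t} ∧ G x y) c b := by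
        refine Relation.ReflTransGen.mono ?_ _ _ (ih hch b hb')
        intro x y ⟨hx, hy, hG⟩
        exact ⟨List.mem_cons_of_mem _ hx, List.mem_cons_of_mem _ hy, hG⟩
      exact Relation.ReflTransGen.head
        ⟨List.mem_cons_self, List.mem_cons_of_mem _ (List.mem_cons_self), hedge.2.2⟩ step

/-- Every element of a chain reaches the last element, within the chain's vertex set. -/
theorem ham2 {G : V → V → Prop} {s : Set V} {a : V} {l : List V}
    (h : List.Chain (E G s) a l) :
    ∀ b ∈ a :: l, Relation.ReflTransGen
      (fun x y => x ∈ {x | x ∈ a :: l} ∧ y ∈ {x | x ∈ a :: l} ∧ G x y) b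
      ((a :: l).getLast (List.cons_ne_nil a l)) := by
  induction l generalizing a with
  | nil => intro b hb; simp at hb; subst hb; exact Relation.ReflTransGen.refl
  | cons c t ih =>
    obtain ⟨hedge, hch⟩ := List.isChain_cons_cons.1 h
    have hlast : ((a :: c :: t).getLast (List.cons_ne_nil _ _)) =
        ((c :: t).getLast (List.cons_ne_nil _ _)) := List.getLast_cons _
    intro b hb
    have liftstep : ∀ x y, (fun x y => x ∈ {x | x ∈ c :: t} ∧ y ∈ {x | x ∈ c :: t} ∧ G x y) x y →
        (fun x y => x ∈ {x | x ∈ a :: c :: t} ∧ y ∈ {x | x ∈ a :: c :: t} ∧ G x y) x y := by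
      intro x y ⟨hx, hy, hG⟩
      exact ⟨List.mem_cons_of_mem _ hx, List.mem_cons_of_mem _ hy, hG⟩
    rcases List.mem_cons.1 hb with rfl | hb'
    · rw [hlast]
      have tail := Relation.ReflTransGen.mono liftstep _ _ (ih hch c (List.mem_cons_self))
      exact Relation.ReflTransGen.head
        ⟨List.mem_cons_self, List.mem_cons_of_mem _ (List.mem_cons_self), hedge.2.2⟩ tail
    · rw [hlast]
      exact Relation.ReflTransGen.mono liftstep _ _ (ih hch b hb')

/-- Drop a prefix of a chain before an occurrence of `b`. -/
theorem chain_drop {r : V → V → Prop} {a : V} {l : List V}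
    (h : List.Chain r a l) {b : V} (hb : b ∈ a :: l) :
    ∃ l₂, List.Chain r b l₂ ∧
      (b :: l₂).getLast (List.cons_ne_nil _ _) = (a :: l).getLast (List.cons_ne_nil _ _) ∧
      (b :: l₂) <:+ (a :: l) := by
  induction l generalizing a with
  | nil =>
    simp at hb; subst hb
    exact ⟨[], List.Chain.nil, rfl, List.suffix_refl _⟩
  | cons c t ih =>
    obtain ⟨hedge, hch⟩ := List.isChain_cons_cons.1 h
    rcases List.mem_cons.1 hb with rfl | hb'
    · exact ⟨c :: t, List.Chain.cons hedge hch, rfl, List.suffix_refl _⟩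
    · obtain ⟨l₂, h1, h2, h3⟩ := ih hch hb'
      refine ⟨l₂, h1, ?_, h3.trans (List.suffix_cons _ _)⟩
      rw [h2]; exact (List.getLast_cons _).symm

/-- From any chain one can extract a duplicate-free chain with the same endpoints,
using only vertices of the original chain. -/
theorem chain_nodup {r : V → V → Prop} :
    ∀ (n : ℕ) (a : V) (l : List V), l.length ≤ n → List.Chain r a l →
    ∃ l', List.Chain r a l' ∧
      (a :: l').getLast (List.cons_ne_nil _ _) = (a :: l).getLast (List.cons_ne_nil _ _) ∧
      (a :: l').Nodup ∧ ∀ x ∈ a :: l', x ∈ a :: l := by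
  intro n
  induction n with
  | zero =>
    intro a l hlen hch
    have : l = [] := List.eq_nil_of_length_eq_zero (Nat.le_zero.1 hlen)
    subst this
    exact ⟨[], List.Chain.nil, rfl, List.nodup_singleton a, fun x hx => hx⟩
  | succ n ih =>
    intro a l hlen hch
    by_cases hnd : (a :: l).Nodup
    · exact ⟨l, hch, rfl, hnd, fun x hx => hx⟩
    · rcases l with _ | ⟨c, t⟩
      · exact absurd (List.nodup_singleton a) hnd
      obtain ⟨hedge, hcht⟩ := List.isChain_cons_cons.1 hch
      by_cases hal : a ∈ c :: t
      · -- drop the cycle through a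
        obtain ⟨l₂, h1, h2, h3⟩ := chain_drop hcht hal
        have hlen2 : l₂.length ≤ n := by
          have h4 := h3.length_le
          rw [List.length_cons, List.length_cons] at h4
          rw [List.length_cons] at hlen
          omega
        obtain ⟨l', g1, g2, g3, g4⟩ := ih a l₂ hlen2 h1
        refine ⟨l', g1, ?_, g3, ?_⟩
        · rw [g2, h2]
          exact (List.getLast_cons _).symm
        · intro x hx
          rcases List.mem_cons.1 (g4 x hx) with rfl | hx'
          · exact List.mem_cons_self
          · exact List.mem_cons_of_mem _ (h3.subset (List.mem_cons_of_mem _ hx'))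
      · -- a is not repeated, recurse on the tail
        obtain ⟨t', g1, g2, g3, g4⟩ := ih c t (by simpa using hlen) hcht
        refine ⟨c :: t', List.Chain.cons hedge g1, ?_, ?_, ?_⟩
        · rw [List.getLast_cons (List.cons_ne_nil _ _), g2]
          exact (List.getLast_cons (List.cons_ne_nil _ _)).symm
        · refine List.nodup_cons.2 ⟨fun hmem => hal (g4 a hmem), g3⟩
        · intro x hx
          rcases List.mem_cons.1 hx with rfl | hx'
          · exact List.mem_cons_self
          · exact List.mem_cons_of_mem _ (g4 x hx')

/-- Extract a duplicate-free chain witnessing reachability. -/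
theorem exists_nodup_chain {G : V → V → Prop} {s : Set V} {a b : V}
    (h : Relation.ReflTransGen (E G s) a b) :
    ∃ l, List.Chain (E G s) a l ∧
      (a :: l).getLast (List.cons_ne_nil _ _) = b ∧ (a :: l).Nodup := by
  obtain ⟨l, hch, hlast⟩ := List.exists_isChain_cons_of_relationReflTransGen h
  obtain ⟨l', g1, g2, g3, _⟩ := chain_nodup l.length a l le_rfl hch
  exact ⟨l', g1, by rw [g2, hlast], g3⟩

/-- The key structural lemma: if `H` is a maximal strong proper induced subdigraph of the
strong digraph on `s`, then `s \ H` has a unique entry vertex `q₁`, from which all of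
`s \ H` is reachable inside `s \ H`. -/
theorem core1 {G : V → V → Prop} {s H : Set V} (hs : StrongOn G s) (hH : StrongOn G H)
    (hHs : H ⊆ s) (hHne : H.Nonempty) (hPne : (s \ H).Nonempty)
    (hmax : ∀ T, H ⊆ T → T ⊆ s → StrongOn G T → T = H ∨ T = s) :
    ∃ q₁, q₁ ∈ s ∧ q₁ ∉ H ∧ (∃ h₀ ∈ H, G h₀ q₁) ∧
      (∀ p ∈ s, p ∉ H → Reach G (s \ H) q₁ p) ∧
      (∀ h ∈ H, ∀ p ∈ s, p ∉ H → G h p → p = q₁) := by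
  classical
  obtain ⟨hstar, hhstar⟩ := hHne
  obtain ⟨pstar, hpstar⟩ := hPne
  obtain ⟨h₀, q₁, hh₀, hq₁s, hq₁H, hGh₀q₁⟩ :=
    cross (hs hstar (hHs hhstar) pstar hpstar.1) hhstar hpstar.2
  set P : Set V := s \ H with hPdef
  set R : Set V := {x | x ∈ P ∧ Reach G P q₁ x} with hRdef
  have hq₁P : q₁ ∈ P := ⟨hq₁s, hq₁H⟩
  have hq₁R : q₁ ∈ R := ⟨hq₁P, Relation.ReflTransGen.refl⟩
  have hRP : R ⊆ P := fun x hx => hx.1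
  have hRs : R ⊆ s := fun x hx => hx.1.1
  have c3 : ∀ r ∈ R, Reach G R q₁ r := fun r hr => reach_closure hr.2
  have c4 : ∀ r ∈ R, ∃ h', h' ∈ H ∧ Reach G (H ∪ R) r h' := by
    intro r hr
    obtain ⟨r', h', hr's, hr'H, hh'H, hreach, hG⟩ :=
      cross2 (hs r (hRs hr) hstar (hHs hhstar)) hhstar hr.1.2
    have hr'R : r' ∈ R := ⟨⟨hr's, hr'H⟩, reach_trans hr.2 hreach⟩
    have hcl : Reach G {x | x ∈ P ∧ Reach G P r x} r r' := reach_closure hreach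
    have hsub : {x | x ∈ P ∧ Reach G P r x} ⊆ R := fun x hx => ⟨hx.1, reach_trans hr.2 hx.2⟩
    have h1 : Reach G (H ∪ R) r r' := reach_mono (hsub.trans Set.subset_union_right) hcl
    exact ⟨h', hh'H, h1.tail ⟨Or.inr hr'R, Or.inl hh'H, hG⟩⟩
  have hubH : ∀ a ∈ H, ∀ b ∈ H, Reach G (H ∪ R) a b := fun a ha b hb =>
    reach_mono Set.subset_union_left (hH a ha b hb)
  have toR : ∀ b ∈ R, Reach G (H ∪ R) h₀ b := fun b hb =>
    Relation.ReflTransGen.head ⟨Or.inl hh₀, Or.inr hq₁R, hGh₀q₁⟩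
      (reach_mono Set.subset_union_right (c3 b hb))
  have hHR : StrongOn G (H ∪ R) := by
    intro a ha b hb
    rcases ha with haH | haR
    · rcases hb with hbH | hbR
      · exact hubH a haH b hbH
      · exact reach_trans (hubH a haH h₀ hh₀) (toR b hbR)
    · obtain ⟨h', hh', hra⟩ := c4 a haR
      rcases hb with hbH | hbR
      · exact reach_trans hra (hubH h' hh' b hbH)
      · exact reach_trans hra (reach_trans (hubH h' hh' h₀ hh₀) (toR b hbR))
  have hRall : ∀ p ∈ s, p ∉ H → Reach G P q₁ p := by
    rcases hmax (H ∪ R) Set.subset_union_left (Set.union_subset hHs hRs) hHR with hEq | hEq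
    · exfalso
      have : q₁ ∈ H := by rw [← hEq]; exact Or.inr hq₁R
      exact hq₁H this
    · intro p hp hpH
      have hpm : p ∈ H ∪ R := by rw [hEq]; exact hp
      rcases hpm with h | h
      · exact absurd h hpH
      · exact h.2
  obtain ⟨y, h₁, hys, hyH, hh₁H, hyreach, hGyh₁⟩ :=
    cross2 (hs q₁ hq₁s hstar (hHs hhstar)) hhstar hq₁H
  obtain ⟨l, hch, hlast, hnd⟩ := exists_nodup_chain hyreach
  -- the generic attachment argument
  have attach : ∀ (p0 : V) (l0 : List V), List.Chain (E G P) p0 l0 → p0 ∈ P →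
      (∃ h ∈ H, G h p0) →
      (∃ h ∈ H, G ((p0 :: l0).getLast (List.cons_ne_nil _ _)) h) →
      H ∪ {x | x ∈ p0 :: l0} = s := by
    intro p0 l0 hch0 hp0 ⟨he, hhe, hGe⟩ ⟨hx, hhx, hGx⟩
    set T : Set V := {x | x ∈ p0 :: l0} with hTdef
    have hTP : T ⊆ P := fun x hxm => chain_mem hch0 hp0 x hxm
    have hlastT : (p0 :: l0).getLast (List.cons_ne_nil _ _) ∈ T := List.getLast_mem _
    have hub2 : ∀ a ∈ H, ∀ b ∈ H, Reach G (H ∪ T) a b := fun a ha b hb =>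
      reach_mono Set.subset_union_left (hH a ha b hb)
    have t1 : ∀ t ∈ T, Reach G (H ∪ T) p0 t := fun t ht =>
      reach_mono Set.subset_union_right (ham1 hch0 t ht)
    have t2 : ∀ t ∈ T, Reach G (H ∪ T) t ((p0 :: l0).getLast (List.cons_ne_nil _ _)) :=
      fun t ht => reach_mono Set.subset_union_right (ham2 hch0 t ht)
    have toT : ∀ b ∈ T, Reach G (H ∪ T) he b := fun b hb =>
      Relation.ReflTransGen.head
        ⟨Or.inl hhe, Or.inr (List.mem_cons_self), hGe⟩ (t1 b hb)
    have fromT : ∀ a ∈ T, Reach G (H ∪ T) a hx := fun a ha =>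
      (t2 a ha).tail ⟨Or.inr hlastT, Or.inl hhx, hGx⟩
    have hHT : StrongOn G (H ∪ T) := by
      intro a ha b hb
      rcases ha with haH | haT
      · rcases hb with hbH | hbT
        · exact hub2 a haH b hbH
        · exact reach_trans (hub2 a haH he hhe) (toT b hbT)
      · rcases hb with hbH | hbT
        · exact reach_trans (fromT a haT) (hub2 hx hhx b hbH)
        · exact reach_trans (fromT a haT) (reach_trans (hub2 hx hhx he hhe) (toT b hbT))
    rcases hmax (H ∪ T) Set.subset_union_left
        (Set.union_subset hHs (hTP.trans (fun x hxm => hxm.1))) hHT with hEq | hEq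
    · exfalso
      have : p0 ∈ H := by rw [← hEq]; exact Or.inr (List.mem_cons_self)
      exact (hTP ((List.mem_cons_self (a := p0) (l := l0)))).2 this
    · exact hEq
  have hTeq : H ∪ {x | x ∈ q₁ :: l} = s := by
    refine attach q₁ l hch hq₁P ⟨h₀, hh₀, hGh₀q₁⟩ ⟨h₁, hh₁H, ?_⟩
    rw [hlast]; exact hGyh₁
  have huniq : ∀ h ∈ H, ∀ p ∈ s, p ∉ H → G h p → p = q₁ := by
    intro h hh p hps hpH hG
    have hpT : p ∈ q₁ :: l := by
      have hpm : p ∈ H ∪ {x | x ∈ q₁ :: l} := by rw [hTeq]; exact hps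
      rcases hpm with hm | hm
      · exact absurd hm hpH
      · exact hm
    obtain ⟨l₂, d1, d2, d3⟩ := chain_drop hch hpT
    have hpP : p ∈ P := ⟨hps, hpH⟩
    have hTeq2 : H ∪ {x | x ∈ p :: l₂} = s := by
      refine attach p l₂ d1 hpP ⟨h, hh, hG⟩ ⟨h₁, hh₁H, ?_⟩
      rw [d2, hlast]; exact hGyh₁
    have hq₁mem : q₁ ∈ p :: l₂ := by
      have hm : q₁ ∈ H ∪ {x | x ∈ p :: l₂} := by rw [hTeq2]; exact hq₁s
      rcases hm with hm | hm
      · exact absurd hm hq₁H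
      · exact hm
    rcases List.mem_cons.1 hq₁mem with hq | hq
    · exact hq.symm
    · exfalso
      obtain ⟨t, ht⟩ := d3
      have hq₁l : q₁ ∈ l := by
        cases t with
        | nil =>
          simp only [List.nil_append] at ht
          rw [← (List.cons.inj ht).2]; exact hq
        | cons w ws =>
          have : w :: (ws ++ p :: l₂) = q₁ :: l := by simpa using ht
          rw [← (List.cons.inj this).2]
          exact List.mem_append_right _ (List.mem_cons_of_mem _ hq)
      exact (List.nodup_cons.1 hnd).1 hq₁l
  exact ⟨q₁, hq₁s, hq₁H, ⟨h₀, hh₀, hGh₀q₁⟩, hRall, huniq⟩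

/-- Lifting a witness of the subdigraph `H` to the whole digraph, using the tube structure
of `s \ H`. -/
theorem lift {G : V → V → Prop} {s H : Set V} {q₁ y zz : V}
    (hHs : H ⊆ s) (hq₁s : q₁ ∈ s) (hq₁H : q₁ ∉ H) (hys : y ∈ s) (hyH : y ∉ H)
    (hreachQ : ∀ p ∈ s, p ∉ H → Reach G (s \ H) q₁ p)
    (hreachY : ∀ p ∈ s, p ∉ H → Reach G (s \ H) p y)
    (hzz : zz ∈ H)
    (hH' : StrongOn G (H \ {zz}))
    (hen : ∃ h, h ∈ H ∧ h ≠ zz ∧ G h q₁) (hex : ∃ h, h ∈ H ∧ h ≠ zz ∧ G y h) :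
    StrongOn G (s \ {zz}) := by
  obtain ⟨he, hhe, hneE, hGe⟩ := hen
  obtain ⟨hx, hhx, hneX, hGx⟩ := hex
  have hsub1 : H \ {zz} ⊆ s \ {zz} := fun x hxm => ⟨hHs hxm.1, hxm.2⟩
  have hsub2 : s \ H ⊆ s \ {zz} := fun x hxm =>
    ⟨hxm.1, fun h => hxm.2 (by rw [Set.mem_singleton_iff] at h; rw [h]; exact hzz)⟩
  have hub : ∀ a ∈ H \ {zz}, ∀ b ∈ H \ {zz}, Reach G (s \ {zz}) a b := fun a ha b hb =>
    reach_mono hsub1 (hH' a ha b hb)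
  have hq₁zz : q₁ ∈ s \ {zz} := hsub2 ⟨hq₁s, hq₁H⟩
  have hyzz : y ∈ s \ {zz} := hsub2 ⟨hys, hyH⟩
  have hezz : he ∈ H \ {zz} := ⟨hhe, by simpa using hneE⟩
  have hxzz : hx ∈ H \ {zz} := ⟨hhx, by simpa using hneX⟩
  have toP : ∀ p ∈ s \ {zz}, p ∉ H → Reach G (s \ {zz}) q₁ p := fun p hp hpH =>
    reach_mono hsub2 (hreachQ p hp.1 hpH)
  have fromP : ∀ p ∈ s \ {zz}, p ∉ H → Reach G (s \ {zz}) p y := fun p hp hpH =>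
    reach_mono hsub2 (hreachY p hp.1 hpH)
  have enterE : ∀ p ∈ s \ {zz}, p ∉ H → ∀ a ∈ H \ {zz}, Reach G (s \ {zz}) a p :=
    fun p hp hpH a ha =>
      reach_trans (hub a ha he hezz)
        (Relation.ReflTransGen.head ⟨hsub1 hezz, hq₁zz, hGe⟩ (toP p hp hpH))
  have exitE : ∀ p ∈ s \ {zz}, p ∉ H → ∀ a ∈ H \ {zz}, Reach G (s \ {zz}) p a :=
    fun p hp hpH a ha =>
      reach_trans ((fromP p hp hpH).tail ⟨hyzz, hsub1 hxzz, hGx⟩) (hub hx hxzz a ha)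
  intro a ha b hb
  by_cases haH : a ∈ H
  · by_cases hbH : b ∈ H
    · exact hub a ⟨haH, ha.2⟩ b ⟨hbH, hb.2⟩
    · exact enterE b hb hbH a ⟨haH, ha.2⟩
  · by_cases hbH : b ∈ H
    · exact exitE a ha haH b ⟨hbH, hb.2⟩
    · exact reach_trans (exitE a ha haH he hezz) (enterE b hb hbH he hezz)

/-- Main quantitative theorem: in a strong digraph on vertex set `s`, the number of
non-separating vertices other than `v` is at least `deg v + 1 - |s|`. -/
theorem Qmain {W : Type*} [Fintype W] (G : W → W → Prop) (hirr : Irreflexive G) :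
    ∀ (n : ℕ) (s : Set W) (v : W), s.ncard ≤ n → v ∈ s → StrongOn G s →
    {u | u ∈ s ∧ G v u}.ncard + {u | u ∈ s ∧ G u v}.ncard + 1 ≤
      {z | z ∈ s ∧ z ≠ v ∧ StrongOn G (s \ {z})}.ncard + s.ncard := by
  intro n
  induction n with
  | zero =>
    intro s v hn hv _
    exfalso
    rw [Nat.le_zero, Set.ncard_eq_zero (Set.toFinite s)] at hn
    rw [hn] at hv
    exact hv
  | succ n IH =>
    intro s v hn hv hs
    classical
    by_cases hsv : s = {v}
    · have h1 : {u | u ∈ s ∧ G v u} = ∅ := by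
        ext u
        simp only [hsv, Set.mem_setOf_eq, Set.mem_singleton_iff, Set.mem_empty_iff_false,
          iff_false, not_and]
        intro hev
        rw [hev]
        exact fun h => hirr v h
      have h2 : {u | u ∈ s ∧ G u v} = ∅ := by
        ext u
        simp only [hsv, Set.mem_setOf_eq, Set.mem_singleton_iff, Set.mem_empty_iff_false,
          iff_false, not_and]
        intro hev
        rw [hev]
        exact fun h => hirr v h
      rw [h1, h2, Set.ncard_empty, hsv, Set.ncard_singleton]
      omega
    · have hex : ∃ p₀, p₀ ∈ s ∧ p₀ ≠ v := by
        by_contra h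
        push_neg at h
        apply hsv
        ext x
        simp only [Set.mem_singleton_iff]
        exact ⟨fun hx => h x hx, fun hx => hx ▸ hv⟩
      obtain ⟨p₀, hp₀s, hp₀v⟩ := hex
      have hvSS : {v} ∈ {H : Set W | v ∈ H ∧ H ⊆ s ∧ H ≠ s ∧ StrongOn G H} := by
        refine ⟨rfl, by simpa using hv, ?_, strongOn_singleton⟩
        intro h
        rw [← h] at hp₀s
        exact hp₀v hp₀s
      obtain ⟨H, hHSS, hHmax0⟩ := Set.Finite.exists_maximalFor Set.ncard
        {H : Set W | v ∈ H ∧ H ⊆ s ∧ H ≠ s ∧ StrongOn G H} (Set.toFinite _) ⟨{v}, hvSS⟩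
      obtain ⟨hvH, hHs, hHnes, hHstrong⟩ := hHSS
      have hmax : ∀ T, H ⊆ T → T ⊆ s → StrongOn G T → T = H ∨ T = s := by
        intro T hHT hTs hT
        by_cases hT' : T = s
        · exact Or.inr hT'
        · refine Or.inl ?_
          have hTSS : T ∈ {H : Set W | v ∈ H ∧ H ⊆ s ∧ H ≠ s ∧ StrongOn G H} :=
            ⟨hHT hvH, hTs, hT', hT⟩
          have hle := hHmax0 hTSS (Set.ncard_le_ncard hHT (Set.toFinite T))
          exact (Set.eq_of_subset_of_ncard_le hHT hle (Set.toFinite T)).symm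
      have hss : H ⊂ s := ⟨hHs, fun h => hHnes (subset_antisymm hHs h)⟩
      have hPne : (s \ H).Nonempty := by
        obtain ⟨x, hx1, hx2⟩ := Set.exists_of_ssubset hss
        exact ⟨x, hx1, hx2⟩
      have hHne : H.Nonempty := ⟨v, hvH⟩
      obtain ⟨q₁, hq₁s, hq₁H, ⟨h₀, hh₀, hGh₀q₁⟩, hreachQ, hUniqIn⟩ :=
        core1 hs hHstrong hHs hHne hPne hmax
      obtain ⟨y, hys, hyH, ⟨h₁, hh₁, hGyh₁⟩, hreachYrev, hUniqOutR⟩ :=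
        core1 (G := fun a b => G b a) (strongOn_rev hs) (strongOn_rev hHstrong) hHs hHne hPne
          (fun T h1 h2 h3 => hmax T h1 h2 (strongOn_rev h3))
      have hreachY : ∀ p ∈ s, p ∉ H → Reach G (s \ H) p y :=
        fun p hp hpH => reach_rev (hreachYrev p hp hpH)
      have hUniqOut : ∀ h ∈ H, ∀ p ∈ s, p ∉ H → G p h → p = y := hUniqOutR
      have key1 : {u | u ∈ s ∧ G v u}.ncard +
          {z | (z ∈ H ∧ z ≠ v ∧ StrongOn G (H \ {z})) ∧ ∀ h ∈ H, G h q₁ → h = z}.ncard ≤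
          {u | u ∈ H ∧ G v u}.ncard + 1 := by
        by_cases hvq : G v q₁
        · have hX1 : {z | (z ∈ H ∧ z ≠ v ∧ StrongOn G (H \ {z})) ∧
              ∀ h ∈ H, G h q₁ → h = z} = ∅ := by
            ext z
            simp only [Set.mem_setOf_eq, Set.mem_empty_iff_false, iff_false, not_and]
            rintro ⟨hzH, hzv, _⟩ hall
            exact hzv (hall v hvH hvq).symm
          have hsub : {u | u ∈ s ∧ G v u} ⊆ {u | u ∈ H ∧ G v u} ∪ {q₁} := by
            rintro u ⟨hus, hGu⟩
            by_cases huH : u ∈ H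
            · exact Or.inl ⟨huH, hGu⟩
            · exact Or.inr (by simp [hUniqIn v hvH u hus huH hGu])
          rw [hX1, Set.ncard_empty, Nat.add_zero]
          refine (Set.ncard_le_ncard hsub (Set.toFinite _)).trans ?_
          refine (Set.ncard_union_le _ _).trans ?_
          rw [Set.ncard_singleton]
        · have hsub : {u | u ∈ s ∧ G v u} ⊆ {u | u ∈ H ∧ G v u} := by
            rintro u ⟨hus, hGu⟩
            by_cases huH : u ∈ H
            · exact ⟨huH, hGu⟩
            · exact absurd (hUniqIn v hvH u hus huH hGu ▸ hGu) hvq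
          have hX1 : {z | (z ∈ H ∧ z ≠ v ∧ StrongOn G (H \ {z})) ∧
              ∀ h ∈ H, G h q₁ → h = z}.ncard ≤ 1 := by
            have hsub2 : {z | (z ∈ H ∧ z ≠ v ∧ StrongOn G (H \ {z})) ∧
                ∀ h ∈ H, G h q₁ → h = z} ⊆ {h₀} := by
              rintro z ⟨_, hall⟩
              simp only [Set.mem_singleton_iff]
              exact (hall h₀ hh₀ hGh₀q₁).symm
            refine (Set.ncard_le_ncard hsub2 (Set.toFinite _)).trans ?_
            rw [Set.ncard_singleton]
          have h3 := Set.ncard_le_ncard hsub (Set.toFinite _)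
          omega
      have key2 : {u | u ∈ s ∧ G u v}.ncard +
          {z | (z ∈ H ∧ z ≠ v ∧ StrongOn G (H \ {z})) ∧ ∀ h ∈ H, G y h → h = z}.ncard ≤
          {u | u ∈ H ∧ G u v}.ncard + 1 := by
        by_cases hvq : G y v
        · have hX2 : {z | (z ∈ H ∧ z ≠ v ∧ StrongOn G (H \ {z})) ∧
              ∀ h ∈ H, G y h → h = z} = ∅ := by
            ext z
            simp only [Set.mem_setOf_eq, Set.mem_empty_iff_false, iff_false, not_and]
            rintro ⟨hzH, hzv, _⟩ hall
            exact hzv (hall v hvH hvq).symm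
          have hsub : {u | u ∈ s ∧ G u v} ⊆ {u | u ∈ H ∧ G u v} ∪ {y} := by
            rintro u ⟨hus, hGu⟩
            by_cases huH : u ∈ H
            · exact Or.inl ⟨huH, hGu⟩
            · exact Or.inr (by simp [hUniqOut v hvH u hus huH hGu])
          rw [hX2, Set.ncard_empty, Nat.add_zero]
          refine (Set.ncard_le_ncard hsub (Set.toFinite _)).trans ?_
          refine (Set.ncard_union_le _ _).trans ?_
          rw [Set.ncard_singleton]
        · have hsub : {u | u ∈ s ∧ G u v} ⊆ {u | u ∈ H ∧ G u v} := by
            rintro u ⟨hus, hGu⟩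
            by_cases huH : u ∈ H
            · exact ⟨huH, hGu⟩
            · exact absurd (hUniqOut v hvH u hus huH hGu ▸ hGu) hvq
          have hX2 : {z | (z ∈ H ∧ z ≠ v ∧ StrongOn G (H \ {z})) ∧
              ∀ h ∈ H, G y h → h = z}.ncard ≤ 1 := by
            have hsub2 : {z | (z ∈ H ∧ z ≠ v ∧ StrongOn G (H \ {z})) ∧
                ∀ h ∈ H, G y h → h = z} ⊆ {h₁} := by
              rintro z ⟨_, hall⟩
              simp only [Set.mem_singleton_iff]
              exact (hall h₁ hh₁ hGyh₁).symm
            refine (Set.ncard_le_ncard hsub2 (Set.toFinite _)).trans ?_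
            rw [Set.ncard_singleton]
          have h3 := Set.ncard_le_ncard hsub (Set.toFinite _)
          omega
      have key3 : {z | z ∈ H ∧ z ≠ v ∧ StrongOn G (H \ {z})}.ncard ≤
          ({z | z ∈ H ∧ z ≠ v ∧ StrongOn G (H \ {z})} \
            ({z | (z ∈ H ∧ z ≠ v ∧ StrongOn G (H \ {z})) ∧ ∀ h ∈ H, G h q₁ → h = z} ∪
             {z | (z ∈ H ∧ z ≠ v ∧ StrongOn G (H \ {z})) ∧ ∀ h ∈ H, G y h → h = z})).ncard +
          ({z | (z ∈ H ∧ z ≠ v ∧ StrongOn G (H \ {z})) ∧ ∀ h ∈ H, G h q₁ → h = z}.ncard +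
           {z | (z ∈ H ∧ z ≠ v ∧ StrongOn G (H \ {z})) ∧ ∀ h ∈ H, G y h → h = z}.ncard) := by
        have hsub : {z | z ∈ H ∧ z ≠ v ∧ StrongOn G (H \ {z})} ⊆
            ({z | z ∈ H ∧ z ≠ v ∧ StrongOn G (H \ {z})} \
            ({z | (z ∈ H ∧ z ≠ v ∧ StrongOn G (H \ {z})) ∧ ∀ h ∈ H, G h q₁ → h = z} ∪
             {z | (z ∈ H ∧ z ≠ v ∧ StrongOn G (H \ {z})) ∧ ∀ h ∈ H, G y h → h = z})) ∪
            ({z | (z ∈ H ∧ z ≠ v ∧ StrongOn G (H \ {z})) ∧ ∀ h ∈ H, G h q₁ → h = z} ∪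
             {z | (z ∈ H ∧ z ≠ v ∧ StrongOn G (H \ {z})) ∧ ∀ h ∈ H, G y h → h = z}) := by
          intro z hz
          by_cases hzin : z ∈ ({z | (z ∈ H ∧ z ≠ v ∧ StrongOn G (H \ {z})) ∧
              ∀ h ∈ H, G h q₁ → h = z} ∪
             {z | (z ∈ H ∧ z ≠ v ∧ StrongOn G (H \ {z})) ∧ ∀ h ∈ H, G y h → h = z})
          · exact Or.inr hzin
          · exact Or.inl ⟨hz, hzin⟩
        refine (Set.ncard_le_ncard hsub (Set.toFinite _)).trans ?_
        refine (Set.ncard_union_le _ _).trans ?_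
        exact Nat.add_le_add_left (Set.ncard_union_le _ _) _
      have key4 : ({z | z ∈ H ∧ z ≠ v ∧ StrongOn G (H \ {z})} \
            ({z | (z ∈ H ∧ z ≠ v ∧ StrongOn G (H \ {z})) ∧ ∀ h ∈ H, G h q₁ → h = z} ∪
             {z | (z ∈ H ∧ z ≠ v ∧ StrongOn G (H \ {z})) ∧ ∀ h ∈ H, G y h → h = z})) ⊆
          {z | z ∈ s ∧ z ≠ v ∧ StrongOn G (s \ {z})} := by
        rintro z ⟨⟨hzH, hzv, hzstr⟩, hznot⟩
        rw [Set.mem_union] at hznot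
        push_neg at hznot
        obtain ⟨hz1, hz2⟩ := hznot
        simp only [Set.mem_setOf_eq, not_and, not_forall] at hz1 hz2
        obtain ⟨h, hh, hGh, hhz⟩ := hz1 ⟨hzH, hzv, hzstr⟩
        obtain ⟨h', hh', hGh', hhz'⟩ := hz2 ⟨hzH, hzv, hzstr⟩
        refine ⟨hHs hzH, hzv, ?_⟩
        exact lift hHs hq₁s hq₁H hys hyH hreachQ hreachY hzH hzstr
          ⟨h, hh, hhz, hGh⟩ ⟨h', hh', hhz', hGh'⟩
      have hIH := IH H v (by
          have := Set.ncard_lt_ncard hss (Set.toFinite s)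
          omega) hvH hHstrong
      have hsplit := Set.ncard_diff_add_ncard_of_subset hHs (Set.toFinite s)
      by_cases hk : s \ H = {q₁}
      · have hq₁W : q₁ ∈ {z | z ∈ s ∧ z ≠ v ∧ StrongOn G (s \ {z})} := by
          refine ⟨hq₁s, fun h => hq₁H (h ▸ hvH), ?_⟩
          have hseq : s \ {q₁} = H := by
            ext x
            constructor
            · rintro ⟨hxs, hxq⟩
              by_cases hxH : x ∈ H
              · exact hxH
              · exfalso
                apply hxq
                have hxm : x ∈ s \ H := ⟨hxs, hxH⟩
                rw [hk] at hxm
                exact hxm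
            · intro hxH
              refine ⟨hHs hxH, ?_⟩
              simp only [Set.mem_singleton_iff]
              intro h
              rw [h] at hxH
              exact hq₁H hxH
          rw [hseq]
          exact hHstrong
        have hcard1 : (s \ H).ncard = 1 := by rw [hk]; exact Set.ncard_singleton _
        have hq₁notWL : q₁ ∉ ({z | z ∈ H ∧ z ≠ v ∧ StrongOn G (H \ {z})} \
            ({z | (z ∈ H ∧ z ≠ v ∧ StrongOn G (H \ {z})) ∧ ∀ h ∈ H, G h q₁ → h = z} ∪
             {z | (z ∈ H ∧ z ≠ v ∧ StrongOn G (H \ {z})) ∧ ∀ h ∈ H, G y h → h = z})) :=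
          fun h => hq₁H h.1.1
        have hWcount : ({z | z ∈ H ∧ z ≠ v ∧ StrongOn G (H \ {z})} \
            ({z | (z ∈ H ∧ z ≠ v ∧ StrongOn G (H \ {z})) ∧ ∀ h ∈ H, G h q₁ → h = z} ∪
             {z | (z ∈ H ∧ z ≠ v ∧ StrongOn G (H \ {z})) ∧ ∀ h ∈ H, G y h → h = z})).ncard + 1 ≤
            {z | z ∈ s ∧ z ≠ v ∧ StrongOn G (s \ {z})}.ncard := by
          have hins : insert q₁ ({z | z ∈ H ∧ z ≠ v ∧ StrongOn G (H \ {z})} \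
            ({z | (z ∈ H ∧ z ≠ v ∧ StrongOn G (H \ {z})) ∧ ∀ h ∈ H, G h q₁ → h = z} ∪
             {z | (z ∈ H ∧ z ≠ v ∧ StrongOn G (H \ {z})) ∧ ∀ h ∈ H, G y h → h = z})) ⊆
            {z | z ∈ s ∧ z ≠ v ∧ StrongOn G (s \ {z})} := Set.insert_subset hq₁W key4
          have h2 := Set.ncard_le_ncard hins (Set.toFinite _)
          rw [Set.ncard_insert_of_notMem hq₁notWL (Set.toFinite _)] at h2
          omega
        omega
      · have h2le : 2 ≤ (s \ H).ncard := by
          have hexq : ∃ q', q' ∈ s \ H ∧ q' ≠ q₁ := by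
            by_contra h
            push_neg at h
            apply hk
            ext x
            simp only [Set.mem_singleton_iff]
            constructor
            · intro hx
              exact h x hx
            · rintro rfl
              exact ⟨hq₁s, hq₁H⟩
          obtain ⟨q', hq'm, hq'ne⟩ := hexq
          have hpairsub : {q₁, q'} ⊆ s \ H := by
            intro x hx
            rcases hx with rfl | hx
            · exact ⟨hq₁s, hq₁H⟩
            · rw [Set.mem_singleton_iff] at hx
              rw [hx]
              exact hq'm
          have hfin := Set.ncard_le_ncard hpairsub (Set.toFinite _)
          rw [Set.ncard_pair (Ne.symm hq'ne)] at hfin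
          exact hfin
        have hWcount := Set.ncard_le_ncard key4 (Set.toFinite _)
        omega

end Stmt0Aux

/-- A digraph (given by its adjacency relation) is strongly connected if every
vertex is reachable from every other vertex by a directed path. -/
def StronglyConnected {V : Type*} (G : V → V → Prop) : Prop :=
  ∀ a b : V, Relation.ReflTransGen G a b

/-- The digraph obtained from `G` by deleting the vertex `z`. -/
def DelVert {V : Type*} (G : V → V → Prop) (z : V) :
    {x : V // x ≠ z} → {x : V // x ≠ z} → Prop :=
  fun a b => G a.1 b.1

/-- The digraph obtained from `G` by deleting the vertex set `A`. -/
def DelSet {V : Type*} (G : V → V → Prop) (A : Set V) :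
    {x : V // x ∉ A} → {x : V // x ∉ A} → Prop :=
  fun a b => G a.1 b.1

/-- The contraction `D/A`: the set `A` is replaced by a single new vertex
(represented by `none`) whose out-neighbors are `⋃ v ∈ A, E⁺(v) \ A` and whose
in-neighbors are `⋃ v ∈ A, E⁻(v) \ A`; edges outside `A` are preserved. -/
def Contract {V : Type*} (G : V → V → Prop) (A : Set V) :
    Option {x : V // x ∉ A} → Option {x : V // x ∉ A} → Prop
  | some u, some w => G u.1 w.1
  | none, some w => ∃ x ∈ A, G x w.1
  | some u, none => ∃ x ∈ A, G u.1 x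
  | none, none => False

/-- The degree of a vertex: `|E⁺(v)| + |E⁻(v)|`. -/
noncomputable def deg {V : Type*} (G : V → V → Prop) (v : V) : ℕ :=
  {u | G v u}.ncard + {u | G u v}.ncard

/-- The number of directed edges of the digraph. -/
noncomputable def edgeCount {V : Type*} (G : V → V → Prop) : ℕ :=
  {p : V × V | G p.1 p.2}.ncard

/-- A digraph is vertex-critical strongly connected if it is strongly connected
and the removal of any vertex destroys strong connectivity. -/
def Critical {V : Type*} (G : V → V → Prop) : Prop :=
  StronglyConnected G ∧ ∀ z : V, ¬ StronglyConnected (DelVert G z)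

/-- `v : ZMod k → V` enumerates a chordless directed cycle of `G`:
the vertices are distinct, consecutive vertices are joined by the cycle edges,
and these are the only edges of `G` among the vertices of the cycle. -/
structure IsChordlessCycle {V : Type*} (G : V → V → Prop) {k : ℕ} (v : ZMod k → V) : Prop where
  inj : Function.Injective v
  edges : ∀ i, G (v i) (v (i + 1))
  chordless : ∀ i j, G (v i) (v j) → j = i + 1

theorem stmt0 {V : Type*} [Fintype V] (G : V → V → Prop)
    (hirr : Irreflexive G) (hsc : StronglyConnected G) (v : V)
    (hdeg : Fintype.card V ≤ deg G v) :
    ∃ z : V, z ≠ v ∧ StronglyConnected (DelVert G z) := by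
  classical
  have hstrong : Stmt0Aux.StrongOn G Set.univ := fun a _ b _ =>
    Relation.ReflTransGen.mono (p := Stmt0Aux.E G Set.univ) (fun x y h => ⟨trivial, trivial, h⟩) _ _ (hsc a b)
  have hQ := Stmt0Aux.Qmain G hirr (Set.univ : Set V).ncard Set.univ v le_rfl
    (Set.mem_univ v) hstrong
  have e1 : {u | u ∈ (Set.univ : Set V) ∧ G v u} = {u | G v u} := by ext u; simp
  have e2 : {u | u ∈ (Set.univ : Set V) ∧ G u v} = {u | G u v} := by ext u; simp
  have e3 : (Set.univ : Set V).ncard = Fintype.card V := by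
    rw [Set.ncard_univ, Nat.card_eq_fintype_card]
  rw [e1, e2, e3] at hQ
  have hdeg' : Fintype.card V ≤ {u | G v u}.ncard + {u | G u v}.ncard := hdeg
  have hpos : 0 < {z | z ∈ (Set.univ : Set V) ∧ z ≠ v ∧
      Stmt0Aux.StrongOn G (Set.univ \ {z})}.ncard := by omega
  obtain ⟨z, hzu, hzv, hzstr⟩ := Set.nonempty_of_ncard_ne_zero (Nat.pos_iff_ne_zero.1 hpos)
  refine ⟨z, hzv, ?_⟩
  have conv : ∀ (a b : V), Stmt0Aux.Reach G (Set.univ \ {z}) a b →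
      ∀ (ha : a ≠ z) (hb : b ≠ z),
      Relation.ReflTransGen (DelVert G z) ⟨a, ha⟩ ⟨b, hb⟩ := by
    intro a b h
    induction h with
    | refl => intro ha hb; exact Relation.ReflTransGen.refl
    | tail h1 h2 ih =>
      rename_i bmid cend
      intro ha hb
      have hcne : bmid ≠ z := by simpa using h2.1.2
      exact Relation.ReflTransGen.tail (ih ha hcne) h2.2.2
  intro a b
  have hmema : a.1 ∈ Set.univ \ {z} := ⟨Set.mem_univ _, by simpa using a.2⟩
  have hmemb : b.1 ∈ Set.univ \ {z} := ⟨Set.mem_univ _, by simpa using b.2⟩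
  have h := conv a.1 b.1 (hzstr a.1 hmema b.1 hmemb) a.2 b.2
  exact h
end

section
/- Every vertex-critical strongly connected simple digraph on n ≥ 2 vertices has at most C(n,2) edges, i.e., at most n(n−1)/2 directed edges. -/
namespace VC

open Relation Finset
open scoped Classical

universe u
variable {V : Type u}

/-- relation restricted to a finite vertex set -/
def RG (G : V → V → Prop) (s : Finset V) : V → V → Prop :=
  fun a b => a ∈ s ∧ b ∈ s ∧ G a b

/-- reachability within `s` -/
def RT (G : V → V → Prop) (s : Finset V) (a b : V) : Prop :=
  Relation.ReflTransGen (RG G s) a b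

/-- strongly connected on vertex set `s` -/
def SCs (G : V → V → Prop) (s : Finset V) : Prop :=
  ∀ a ∈ s, ∀ b ∈ s, RT G s a b

theorem RT.refl' {G : V → V → Prop} {s : Finset V} (a : V) : RT G s a a :=
  ReflTransGen.refl

theorem RT.trans' {G : V → V → Prop} {s : Finset V} {a b c : V}
    (h1 : RT G s a b) (h2 : RT G s b c) : RT G s a c :=
  ReflTransGen.trans h1 h2

theorem RT.single {G : V → V → Prop} {s : Finset V} {a b : V}
    (ha : a ∈ s) (hb : b ∈ s) (h : G a b) : RT G s a b :=
  ReflTransGen.single ⟨ha, hb, h⟩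

theorem RT.mono {G : V → V → Prop} {s t : Finset V} (hst : s ⊆ t) {a b : V}
    (h : RT G s a b) : RT G t a b := by
  induction h with
  | refl => exact ReflTransGen.refl
  | tail _ hbc ih => exact ih.tail ⟨hst hbc.1, hst hbc.2.1, hbc.2.2⟩

theorem RT_flip {G : V → V → Prop} {s : Finset V} {a b : V} :
    RT (flip G) s a b ↔ RT G s b a := by
  constructor
  · intro h
    induction h with
    | refl => exact ReflTransGen.refl
    | tail _ hbc ih => exact ReflTransGen.head ⟨hbc.2.1, hbc.1, hbc.2.2⟩ ih
  · intro h
    induction h with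
    | refl => exact ReflTransGen.refl
    | tail _ hbc ih => exact ReflTransGen.head ⟨hbc.2.1, hbc.1, hbc.2.2⟩ ih

theorem SCs_flip {G : V → V → Prop} {s : Finset V} (h : SCs G s) : SCs (flip G) s :=
  fun a ha b hb => RT_flip.2 (h b hb a ha)

theorem SCs_flip_iff {G : V → V → Prop} {s : Finset V} : SCs (flip G) s ↔ SCs G s :=
  ⟨fun h => fun a ha b hb => RT_flip.1 (h b hb a ha), SCs_flip⟩

theorem SCs_of_subsingleton {G : V → V → Prop} {s : Finset V} (h : s.card ≤ 1) :
    SCs G s := by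
  intro a ha b hb
  have : a = b := by
    by_contra hab
    have : 2 ≤ s.card := Finset.one_lt_card.2 ⟨a, ha, b, hb, hab⟩
    omega
  exact this ▸ ReflTransGen.refl

/-- first step of a nontrivial reachability -/
theorem RT.head_step {G : V → V → Prop} {s : Finset V} {a b : V}
    (h : RT G s a b) (hab : a ≠ b) : ∃ u, (a ∈ s ∧ u ∈ s ∧ G a u) ∧ RT G s u b := by
  rcases (ReflTransGen.cases_head h) with rfl | ⟨u, hu, h2⟩
  · exact absurd rfl hab
  · exact ⟨u, hu, h2⟩

/-- last step of a nontrivial reachability -/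
theorem RT.tail_step {G : V → V → Prop} {s : Finset V} {a b : V}
    (h : RT G s a b) (hab : a ≠ b) : ∃ u, RT G s a u ∧ (u ∈ s ∧ b ∈ s ∧ G u b) := by
  rcases h.cases_tail with rfl | ⟨u, h1, h2⟩
  · exact absurd rfl hab
  · exact ⟨u, h1, h2⟩

theorem RT.mem_right {G : V → V → Prop} {s : Finset V} {a b : V}
    (h : RT G s a b) (hab : a ≠ b) : b ∈ s := by
  rcases h.tail_step hab with ⟨u, _, _, hb, _⟩; exact hb

/-- out-closed subsets -/
def OutClosed (G : V → V → Prop) (s Y : Finset V) : Prop :=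
  ∀ ⦃x⦄, x ∈ Y → ∀ ⦃y⦄, y ∈ s → G x y → y ∈ Y

def InClosed (G : V → V → Prop) (s Y : Finset V) : Prop :=
  ∀ ⦃y⦄, y ∈ Y → ∀ ⦃x⦄, x ∈ s → G x y → x ∈ Y

theorem outClosed_flip {G : V → V → Prop} {s Y : Finset V} :
    OutClosed (flip G) s Y ↔ InClosed G s Y := by
  constructor
  · intro h y hy x hx hxy; exact h hy hx hxy
  · intro h x hx y hy hxy; exact h hx hy hxy

/-- reachability from an out-closed set stays inside it -/
theorem OutClosed.rt_restrict {G : V → V → Prop} {s Y : Finset V}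
    (hcl : OutClosed G s Y) {x b : V} (hx : x ∈ Y) (h : RT G s x b) :
    b ∈ Y ∧ RT G Y x b := by
  induction h with
  | refl => exact ⟨hx, ReflTransGen.refl⟩
  | tail _ hbc ih =>
      have hb := hcl ih.1 hbc.2.1 hbc.2.2
      exact ⟨hb, ih.2.tail ⟨ih.1, hb, hbc.2.2⟩⟩


/-- contraction of the set `A` to the representative `a₀ ∈ A` -/
def ctr (G : V → V → Prop) (A : Finset V) (a₀ : V) : V → V → Prop :=
  fun x y =>
    if x = a₀ then y ≠ a₀ ∧ ∃ w ∈ A, G w y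
    else if y = a₀ then ∃ w ∈ A, G x w
    else G x y

noncomputable def odeg (G : V → V → Prop) (s : Finset V) (v : V) : ℕ :=
  ((s.erase v).filter (fun u => G v u)).card
noncomputable def ideg (G : V → V → Prop) (s : Finset V) (v : V) : ℕ :=
  ((s.erase v).filter (fun u => G u v)).card
noncomputable def sdeg (G : V → V → Prop) (s : Finset V) (v : V) : ℕ :=
  odeg G s v + ideg G s v

/-- a minimal nonempty out-closed subset exists and is strongly connected -/
theorem exists_min_outClosed (G : V → V → Prop) (s : Finset V) (hs : s.Nonempty) :
    ∃ Y : Finset V, Y ⊆ s ∧ Y.Nonempty ∧ OutClosed G s Y ∧ SCs G Y := by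
  classical
  set F : Finset (Finset V) :=
    s.powerset.filter (fun T => T.Nonempty ∧ OutClosed G s T) with hF
  have hsF : s ∈ F := by
    simp only [hF, mem_filter, mem_powerset]
    exact ⟨Finset.Subset.refl s, hs, fun x _ y hy _ => hy⟩
  obtain ⟨Y, hYF, hmin⟩ := F.exists_min_image Finset.card ⟨s, hsF⟩
  simp only [hF, mem_filter, mem_powerset] at hYF
  obtain ⟨hYs, hYne, hYcl⟩ := hYF
  refine ⟨Y, hYs, hYne, hYcl, ?_⟩
  intro a ha b hb
  -- reachable set from a within s
  set R : Finset V := s.filter (fun u => RT G s a u) with hR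
  have haR : a ∈ R := by
    simp only [hR, mem_filter]
    exact ⟨hYs ha, ReflTransGen.refl⟩
  have hRcl : OutClosed G s R := by
    intro x hx y hy hxy
    simp only [hR, mem_filter] at hx ⊢
    exact ⟨hy, hx.2.tail ⟨hx.1, hy, hxy⟩⟩
  have hRY : R ⊆ Y := by
    intro x hx
    simp only [hR, mem_filter] at hx
    exact (hYcl.rt_restrict ha hx.2).1
  have hRF : R ∈ F := by
    simp only [hF, mem_filter, mem_powerset]
    exact ⟨Finset.filter_subset _ _, ⟨a, haR⟩, hRcl⟩
  have : Y = R := Finset.eq_of_subset_of_card_le hRY (hmin R hRF) |>.symm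
  have hbR : b ∈ R := this ▸ hb
  simp only [hR, mem_filter] at hbR
  exact (hYcl.rt_restrict ha hbR.2).2


theorem exists_min_inClosed (G : V → V → Prop) (s : Finset V) (hs : s.Nonempty) :
    ∃ Y : Finset V, Y ⊆ s ∧ Y.Nonempty ∧ InClosed G s Y ∧ SCs G Y := by
  obtain ⟨Y, h1, h2, h3, h4⟩ := exists_min_outClosed (flip G) s hs
  exact ⟨Y, h1, h2, outClosed_flip.1 h3, SCs_flip_iff.1 h4⟩

/-- **Claim A**: in a non-strong finite digraph, there is a strongly connected
closed set avoiding any prescribed vertex. -/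
theorem exists_closed_avoiding (G : V → V → Prop) (s : Finset V) (v : V) (hv : v ∈ s)
    (hns : ¬ SCs G s) :
    ∃ Y : Finset V, Y ⊆ s ∧ Y.Nonempty ∧ v ∉ Y ∧ SCs G Y ∧
      (OutClosed G s Y ∨ InClosed G s Y) := by
  obtain ⟨S, hSs, hSne, hScl, hSsc⟩ := exists_min_inClosed G s ⟨v, hv⟩
  by_cases hvS : v ∈ S
  · -- use out-closed set in s \ S
    have hssne : (s \ S).Nonempty := by
      rw [Finset.sdiff_nonempty]
      intro h
      exact hns ((Finset.Subset.antisymm hSs h) ▸ hSsc)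
    obtain ⟨T, hTs, hTne, hTcl, hTsc⟩ := exists_min_outClosed G (s \ S) hssne
    refine ⟨T, hTs.trans (Finset.sdiff_subset), hTne, ?_, hTsc, Or.inl ?_⟩
    · intro hvT
      exact (Finset.mem_sdiff.1 (hTs hvT)).2 hvS
    · intro x hx y hy hxy
      have hxs : x ∈ s \ S := hTs hx
      by_cases hyS : y ∈ S
      · exact absurd (hScl hyS (Finset.mem_sdiff.1 hxs).1 hxy) (Finset.mem_sdiff.1 hxs).2
      · exact hTcl hx (Finset.mem_sdiff.2 ⟨hy, hyS⟩) hxy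
  · exact ⟨S, hSs, hSne, hvS, hSsc, Or.inr hScl⟩


theorem ctr_self {G : V → V → Prop} {A : Finset V} {a₀ : V} : ¬ ctr G A a₀ a₀ a₀ := by
  simp [ctr]

theorem ctr_from {G : V → V → Prop} {A : Finset V} {a₀ y : V} (hy : y ≠ a₀)
    (h : ctr G A a₀ a₀ y) : ∃ w ∈ A, G w y := by
  simpa [ctr, hy] using h

theorem ctr_to {G : V → V → Prop} {A : Finset V} {a₀ x : V} (hx : x ≠ a₀)
    (h : ctr G A a₀ x a₀) : ∃ w ∈ A, G x w := by
  simpa [ctr, hx] using h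

theorem ctr_off {G : V → V → Prop} {A : Finset V} {a₀ x y : V} (hx : x ≠ a₀) (hy : y ≠ a₀)
    (h : ctr G A a₀ x y) : G x y := by
  simpa [ctr, hx, hy] using h

theorem ctr_mk_from {G : V → V → Prop} {A : Finset V} {a₀ w y : V} (hy : y ≠ a₀)
    (hw : w ∈ A) (h : G w y) : ctr G A a₀ a₀ y := by
  simp [ctr, hy]; exact ⟨w, hw, h⟩

theorem ctr_mk_to {G : V → V → Prop} {A : Finset V} {a₀ x w : V} (hx : x ≠ a₀)
    (hw : w ∈ A) (h : G x w) : ctr G A a₀ x a₀ := by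
  simp [ctr, hx]; exact ⟨w, hw, h⟩

theorem ctr_mk_off {G : V → V → Prop} {A : Finset V} {a₀ x y : V} (hx : x ≠ a₀) (hy : y ≠ a₀)
    (h : G x y) : ctr G A a₀ x y := by
  simp [ctr, hx, hy, h]

/-- contraction preserves strong connectivity -/
theorem ctr_proj {G : V → V → Prop} {A s : Finset V} {a₀ : V} (hA : A ⊆ s) (ha₀ : a₀ ∈ A)
    {a b : V} (h : RT G s a b) :
    RT (ctr G A a₀) (insert a₀ (s \ A))
      (if a ∈ A then a₀ else a) (if b ∈ A then a₀ else b) := by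
  induction h with
  | refl => exact ReflTransGen.refl
  | @tail b c _ hbc ih =>
      obtain ⟨hbs, hcs, hG⟩ := hbc
      by_cases hbA : b ∈ A <;> by_cases hcA : c ∈ A
      · simpa [hbA, hcA] using ih
      · -- arc a₀ → c
        have hca : c ≠ a₀ := fun h => hcA (h ▸ ha₀)
        refine ih.tail ?_
        simp only [hbA, if_pos, hcA, if_neg, if_false]
        exact ⟨Finset.mem_insert_self _ _,
          Finset.mem_insert.2 (Or.inr (Finset.mem_sdiff.2 ⟨hcs, hcA⟩)),
          ctr_mk_from hca hbA hG⟩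
      · have hba : b ≠ a₀ := fun h => hbA (h ▸ ha₀)
        refine ih.tail ?_
        simp only [hbA, if_neg, hcA, if_pos, if_false]
        exact ⟨Finset.mem_insert.2 (Or.inr (Finset.mem_sdiff.2 ⟨hbs, hbA⟩)),
          Finset.mem_insert_self _ _, ctr_mk_to hba hcA hG⟩
      · have hba : b ≠ a₀ := fun h => hbA (h ▸ ha₀)
        have hca : c ≠ a₀ := fun h => hcA (h ▸ ha₀)
        refine ih.tail ?_
        simp only [hbA, hcA, if_neg, if_false]
        exact ⟨Finset.mem_insert.2 (Or.inr (Finset.mem_sdiff.2 ⟨hbs, hbA⟩)),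
          Finset.mem_insert.2 (Or.inr (Finset.mem_sdiff.2 ⟨hcs, hcA⟩)),
          ctr_mk_off hba hca hG⟩

theorem mem_cvtx_fix {A s : Finset V} {a₀ a : V} (ha : a ∈ insert a₀ (s \ A)) (ha₀ : a₀ ∈ A) :
    (if a ∈ A then a₀ else a) = a := by
  rcases Finset.mem_insert.1 ha with rfl | h
  · simp [ha₀]
  · simp [(Finset.mem_sdiff.1 h).2]

theorem ctr_SCs {G : V → V → Prop} {A s : Finset V} {a₀ : V} (hA : A ⊆ s) (ha₀ : a₀ ∈ A)
    (h : SCs G s) : SCs (ctr G A a₀) (insert a₀ (s \ A)) := by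
  intro a ha b hb
  have has : a ∈ s := by
    rcases Finset.mem_insert.1 ha with rfl | h'
    · exact hA ha₀
    · exact (Finset.mem_sdiff.1 h').1
  have hbs : b ∈ s := by
    rcases Finset.mem_insert.1 hb with rfl | h'
    · exact hA ha₀
    · exact (Finset.mem_sdiff.1 h').1
  have := ctr_proj hA ha₀ (h a has b hbs)
  rwa [mem_cvtx_fix ha ha₀, mem_cvtx_fix hb ha₀] at this


section lift
variable {G : V → V → Prop} {A s : Finset V} {a₀ ζ : V}

/-- Lifting a path of the contraction that starts outside the contracted set. -/
theorem ctr_lift_path (hA : A ⊆ s) (ha₀ : a₀ ∈ A) (hζA : ζ ∉ A)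
    (hTRAV : ∀ e ∈ A, (∃ u, u ∈ s ∧ u ∉ A ∧ u ≠ ζ ∧ G u e) →
      ∀ x ∈ A, ∀ q, q ∈ s → q ∉ A → q ≠ ζ → G x q → ∃ x' ∈ A, RT G A e x' ∧ G x' q)
    {α β : V} (h : RT (ctr G A a₀) ((insert a₀ (s \ A)).erase ζ) α β) (hα : α ≠ a₀) :
    (β ≠ a₀ → RT G (s.erase ζ) α β) ∧
    (β = a₀ → ∃ e ∈ A, ∃ u, u ∈ s.erase ζ ∧ u ∉ A ∧ G u e ∧ RT G (s.erase ζ) α u) := by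
  have hAsub : A ⊆ s.erase ζ := fun x hx =>
    Finset.mem_erase.2 ⟨fun h => hζA (h ▸ hx), hA hx⟩
  induction h with
  | refl =>
      exact ⟨fun _ => ReflTransGen.refl, fun h => absurd h hα⟩
  | @tail β γ hαβ hβγ ih =>
      obtain ⟨hβm, hγm, harc⟩ := hβγ
      have hβs : β = a₀ ∨ (β ∈ s ∧ β ∉ A ∧ β ≠ ζ) := by
        rcases Finset.mem_erase.1 hβm with ⟨hβζ, hβi⟩
        rcases Finset.mem_insert.1 hβi with rfl | h'
        · exact Or.inl rfl
        · exact Or.inr ⟨(Finset.mem_sdiff.1 h').1, (Finset.mem_sdiff.1 h').2, hβζ⟩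
      have hγs : γ = a₀ ∨ (γ ∈ s ∧ γ ∉ A ∧ γ ≠ ζ) := by
        rcases Finset.mem_erase.1 hγm with ⟨hγζ, hγi⟩
        rcases Finset.mem_insert.1 hγi with rfl | h'
        · exact Or.inl rfl
        · exact Or.inr ⟨(Finset.mem_sdiff.1 h').1, (Finset.mem_sdiff.1 h').2, hγζ⟩
      by_cases hβ : β = a₀
      · -- previous: reached an entry (e, u)
        obtain ⟨e, heA, u, hut, huA, hue, hαu⟩ := ih.2 hβ
        have harc' : ctr G A a₀ a₀ γ := hβ ▸ harc
        by_cases hγ : γ = a₀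
        · exact absurd (hγ ▸ harc') ctr_self
        · obtain ⟨w, hwA, hwγ⟩ := ctr_from hγ harc'
          rcases hγs with hEq | ⟨hγ1, hγ2, hγ3⟩
          · exact absurd hEq hγ
          obtain ⟨x', hx'A, hex', hx'γ⟩ :=
            hTRAV e heA ⟨u, (Finset.mem_erase.1 hut).2, huA, (Finset.mem_erase.1 hut).1, hue⟩
              w hwA γ hγ1 hγ2 hγ3 hwγ
          have h1 : RT G (s.erase ζ) α e :=
            hαu.tail ⟨hut, hAsub heA, hue⟩
          have h2 : RT G (s.erase ζ) α x' := h1.trans ((hex'.mono hAsub))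
          have h3 : RT G (s.erase ζ) α γ :=
            h2.tail ⟨hAsub hx'A, Finset.mem_erase.2 ⟨hγ3, hγ1⟩, hx'γ⟩
          exact ⟨fun _ => h3, fun h => absurd h hγ⟩
      · have hprev : RT G (s.erase ζ) α β := ih.1 hβ
        rcases hβs with hEq | ⟨hβ1, hβ2, hβ3⟩
        · exact absurd hEq hβ
        by_cases hγ : γ = a₀
        · -- arc β → a₀ : record entry
          obtain ⟨w, hwA, hβw⟩ := ctr_to hβ (hγ ▸ harc)
          exact ⟨fun h => absurd hγ h, fun _ =>
            ⟨w, hwA, β, Finset.mem_erase.2 ⟨hβ3, hβ1⟩, hβ2, hβw, hprev⟩⟩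
        · have hG : G β γ := ctr_off hβ hγ harc
          rcases hγs with hEq | ⟨hγ1, hγ2, hγ3⟩
          · exact absurd hEq hγ
          exact ⟨fun _ => hprev.tail ⟨Finset.mem_erase.2 ⟨hβ3, hβ1⟩,
            Finset.mem_erase.2 ⟨hγ3, hγ1⟩, hG⟩, fun h => absurd h hγ⟩

/-- **Master lift lemma**: strong connectivity of the contraction minus `ζ`
lifts to the original digraph minus `ζ`. -/
theorem ctr_lift (hA : A ⊆ s) (ha₀ : a₀ ∈ A) (hζs : ζ ∈ s) (hζA : ζ ∉ A)
    (hSC1 : SCs (ctr G A a₀) ((insert a₀ (s \ A)).erase ζ))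
    (hEXIT : ∀ a ∈ A, ∃ x ∈ A, ∃ q, q ∈ s ∧ q ∉ A ∧ q ≠ ζ ∧ RT G A a x ∧ G x q)
    (hENTER : ∀ b ∈ A, ∃ e ∈ A, ∃ u, u ∈ s ∧ u ∉ A ∧ u ≠ ζ ∧ G u e ∧ RT G A e b)
    (hTRAV : ∀ e ∈ A, (∃ u, u ∈ s ∧ u ∉ A ∧ u ≠ ζ ∧ G u e) →
      ∀ x ∈ A, ∀ q, q ∈ s → q ∉ A → q ≠ ζ → G x q → ∃ x' ∈ A, RT G A e x' ∧ G x' q) :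
    SCs G (s.erase ζ) := by
  have hAsub : A ⊆ s.erase ζ := fun x hx =>
    Finset.mem_erase.2 ⟨fun h => hζA (h ▸ hx), hA hx⟩
  have hmem : ∀ {x : V}, x ∈ s → x ∉ A → x ≠ ζ → x ∈ (insert a₀ (s \ A)).erase ζ := by
    intro x h1 h2 h3
    exact Finset.mem_erase.2 ⟨h3, Finset.mem_insert.2 (Or.inr (Finset.mem_sdiff.2 ⟨h1, h2⟩))⟩
  have ha₀ne : ∀ {x : V}, x ∉ A → x ≠ a₀ := fun h heq => h (heq ▸ ha₀)
  -- key step for endpoints outside A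
  have key : ∀ a' ∈ s.erase ζ, a' ∉ A → ∀ b' ∈ s.erase ζ, b' ∉ A → RT G (s.erase ζ) a' b' := by
    intro a' ha' ha'A b' hb' hb'A
    have h1 := hSC1 a' (hmem (Finset.mem_erase.1 ha').2 ha'A (Finset.mem_erase.1 ha').1)
      b' (hmem (Finset.mem_erase.1 hb').2 hb'A (Finset.mem_erase.1 hb').1)
    exact (ctr_lift_path hA ha₀ hζA hTRAV h1 (ha₀ne ha'A)).1 (ha₀ne hb'A)
  intro a ha b hb
  by_cases haA : a ∈ A <;> by_cases hbA : b ∈ A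
  · -- both inside: exit then re-enter
    obtain ⟨x, hxA, q, hq1, hq2, hq3, hax, hxq⟩ := hEXIT a haA
    obtain ⟨e, heA, u, hu1, hu2, hu3, hue, heb⟩ := hENTER b hbA
    have h1 : RT G (s.erase ζ) a q :=
      (hax.mono hAsub).tail ⟨hAsub hxA, Finset.mem_erase.2 ⟨hq3, hq1⟩, hxq⟩
    have h2 : RT G (s.erase ζ) q u :=
      key q (Finset.mem_erase.2 ⟨hq3, hq1⟩) hq2 u (Finset.mem_erase.2 ⟨hu3, hu1⟩) hu2
    have h3 : RT G (s.erase ζ) u b :=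
      (ReflTransGen.head ⟨Finset.mem_erase.2 ⟨hu3, hu1⟩, hAsub heA, hue⟩ (heb.mono hAsub))
    exact (h1.trans h2).trans h3
  · obtain ⟨x, hxA, q, hq1, hq2, hq3, hax, hxq⟩ := hEXIT a haA
    have h1 : RT G (s.erase ζ) a q :=
      (hax.mono hAsub).tail ⟨hAsub hxA, Finset.mem_erase.2 ⟨hq3, hq1⟩, hxq⟩
    exact h1.trans (key q (Finset.mem_erase.2 ⟨hq3, hq1⟩) hq2 b hb hbA)
  · obtain ⟨e, heA, u, hu1, hu2, hu3, hue, heb⟩ := hENTER b hbA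
    have h3 : RT G (s.erase ζ) u b :=
      ReflTransGen.head ⟨Finset.mem_erase.2 ⟨hu3, hu1⟩, hAsub heA, hue⟩ (heb.mono hAsub)
    exact (key a ha haA u (Finset.mem_erase.2 ⟨hu3, hu1⟩) hu2).trans h3
  · exact key a ha haA b hb hbA

end lift

theorem odeg_le (G : V → V → Prop) {s : Finset V} {v : V} (hv : v ∈ s) :
    odeg G s v ≤ s.card - 1 := by
  calc ((s.erase v).filter (fun u => G v u)).card ≤ (s.erase v).card :=
        Finset.card_le_card (Finset.filter_subset _ _)
    _ = s.card - 1 := Finset.card_erase_of_mem hv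

theorem ideg_le (G : V → V → Prop) {s : Finset V} {v : V} (hv : v ∈ s) :
    ideg G s v ≤ s.card - 1 := by
  calc ((s.erase v).filter (fun u => G u v)).card ≤ (s.erase v).card :=
        Finset.card_le_card (Finset.filter_subset _ _)
    _ = s.card - 1 := Finset.card_erase_of_mem hv

section ctrdeg
variable {G : V → V → Prop} {A s : Finset V} {a₀ v : V}

theorem odeg_ctr (hA : A ⊆ s) (ha₀ : a₀ ∈ A) (hvA : v ∉ A) :
    odeg (ctr G A a₀) (insert a₀ (s \ A)) v
      + (((s.erase v).filter (fun u => G v u)) ∩ A).card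
    = odeg G s v
      + (if (((s.erase v).filter (fun u => G v u)) ∩ A).Nonempty then 1 else 0) := by
  classical
  set Nout := (s.erase v).filter (fun u => G v u) with hN
  have hva₀ : v ≠ a₀ := fun h => hvA (h ▸ ha₀)
  have h1 : (insert a₀ (s \ A)).erase v = insert a₀ ((s \ A).erase v) :=
    Finset.erase_insert_of_ne hva₀.symm
  have h2 : ((s \ A).erase v).filter (fun u => ctr G A a₀ v u)
      = ((s \ A).erase v).filter (fun u => G v u) := by
    apply Finset.filter_congr
    intro u hu
    have huA : u ∉ A := (Finset.mem_sdiff.1 (Finset.mem_erase.1 hu).2).2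
    have hua₀ : u ≠ a₀ := fun h => huA (h ▸ ha₀)
    simp [ctr, hva₀, hua₀]
  have h3 : ((s \ A).erase v).filter (fun u => G v u) = Nout \ A := by
    ext u
    simp only [hN, Finset.mem_filter, Finset.mem_erase, Finset.mem_sdiff]
    tauto
  have h4 : ctr G A a₀ v a₀ ↔ (Nout ∩ A).Nonempty := by
    constructor
    · intro h
      have : ∃ w ∈ A, G v w := by simpa [ctr, hva₀] using h
      obtain ⟨w, hwA, hGw⟩ := this
      exact ⟨w, Finset.mem_inter.2 ⟨Finset.mem_filter.2
        ⟨Finset.mem_erase.2 ⟨fun h' => hvA (h' ▸ hwA), hA hwA⟩, hGw⟩, hwA⟩⟩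
    · rintro ⟨w, hw⟩
      rcases Finset.mem_inter.1 hw with ⟨hw1, hw2⟩
      have : G v w := (Finset.mem_filter.1 hw1).2
      simp only [ctr, if_neg hva₀, if_pos rfl]
      exact ⟨w, hw2, this⟩
  have ha₀ne : a₀ ∉ Nout \ A := fun h => (Finset.mem_sdiff.1 h).2 ha₀
  have hcard : odeg (ctr G A a₀) (insert a₀ (s \ A)) v
      = (Nout \ A).card + (if (Nout ∩ A).Nonempty then 1 else 0) := by
    rw [odeg, h1, Finset.filter_insert, h2, h3]
    by_cases hc : ctr G A a₀ v a₀
    · rw [if_pos hc, Finset.card_insert_of_notMem ha₀ne, if_pos (h4.1 hc)]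
    · rw [if_neg hc, if_neg (fun hne => hc (h4.2 hne))]; omega
  have hpart : (Nout \ A).card + (Nout ∩ A).card = Nout.card :=
    Finset.card_sdiff_add_card_inter _ _
  have hodeg : odeg G s v = Nout.card := rfl
  omega

theorem ideg_ctr (hA : A ⊆ s) (ha₀ : a₀ ∈ A) (hvA : v ∉ A) :
    ideg (ctr G A a₀) (insert a₀ (s \ A)) v
      + (((s.erase v).filter (fun u => G u v)) ∩ A).card
    = ideg G s v
      + (if (((s.erase v).filter (fun u => G u v)) ∩ A).Nonempty then 1 else 0) := by
  classical
  set Nin := (s.erase v).filter (fun u => G u v) with hN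
  have hva₀ : v ≠ a₀ := fun h => hvA (h ▸ ha₀)
  have h1 : (insert a₀ (s \ A)).erase v = insert a₀ ((s \ A).erase v) :=
    Finset.erase_insert_of_ne hva₀.symm
  have h2 : ((s \ A).erase v).filter (fun u => ctr G A a₀ u v)
      = ((s \ A).erase v).filter (fun u => G u v) := by
    apply Finset.filter_congr
    intro u hu
    have huA : u ∉ A := (Finset.mem_sdiff.1 (Finset.mem_erase.1 hu).2).2
    have hua₀ : u ≠ a₀ := fun h => huA (h ▸ ha₀)
    show ctr G A a₀ u v ↔ G u v
    simp only [ctr, if_neg hua₀, if_neg hva₀]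
  have h3 : ((s \ A).erase v).filter (fun u => G u v) = Nin \ A := by
    ext u
    simp only [hN, Finset.mem_filter, Finset.mem_erase, Finset.mem_sdiff]
    tauto
  have h4 : ctr G A a₀ a₀ v ↔ (Nin ∩ A).Nonempty := by
    constructor
    · intro h
      have : ∃ w ∈ A, G w v := by simpa [ctr, hva₀] using h
      obtain ⟨w, hwA, hGw⟩ := this
      exact ⟨w, Finset.mem_inter.2 ⟨Finset.mem_filter.2
        ⟨Finset.mem_erase.2 ⟨fun h' => hvA (h' ▸ hwA), hA hwA⟩, hGw⟩, hwA⟩⟩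
    · rintro ⟨w, hw⟩
      rcases Finset.mem_inter.1 hw with ⟨hw1, hw2⟩
      have : G w v := (Finset.mem_filter.1 hw1).2
      simp only [ctr, if_pos rfl]
      exact ⟨hva₀, w, hw2, this⟩
  have ha₀ne : a₀ ∉ Nin \ A := fun h => (Finset.mem_sdiff.1 h).2 ha₀
  have hcard : ideg (ctr G A a₀) (insert a₀ (s \ A)) v
      = (Nin \ A).card + (if (Nin ∩ A).Nonempty then 1 else 0) := by
    rw [ideg, h1, Finset.filter_insert, h2, h3]
    by_cases hc : ctr G A a₀ a₀ v
    · rw [if_pos hc, Finset.card_insert_of_notMem ha₀ne, if_pos (h4.1 hc)]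
    · rw [if_neg hc, if_neg (fun hne => hc (h4.2 hne))]; omega
  have hpart : (Nin \ A).card + (Nin ∩ A).card = Nin.card :=
    Finset.card_sdiff_add_card_inter _ _
  have hideg : ideg G s v = Nin.card := rfl
  omega

end ctrdeg

theorem RT_congr {H H' : V → V → Prop} {t : Finset V}
    (h : ∀ x ∈ t, ∀ y ∈ t, x ≠ y → (H x y ↔ H' x y)) {a b : V}
    (hr : RT H t a b) : RT H' t a b := by
  induction hr with
  | refl => exact ReflTransGen.refl
  | @tail b c _ hbc ih =>
      by_cases hbcne : b = c
      · exact hbcne ▸ ih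
      · exact ih.tail ⟨hbc.1, hbc.2.1, (h b hbc.1 c hbc.2.1 hbcne).1 hbc.2.2⟩

theorem SCs_congr {H H' : V → V → Prop} {t : Finset V}
    (h : ∀ x ∈ t, ∀ y ∈ t, x ≠ y → (H x y ↔ H' x y)) :
    SCs H t ↔ SCs H' t := by
  constructor
  · intro hs a ha b hb; exact RT_congr h (hs a ha b hb)
  · intro hs a ha b hb
    exact RT_congr (fun x hx y hy hxy => (h x hx y hy hxy).symm) (hs a ha b hb)

theorem entry_arc {G : V → V → Prop} {s : Finset V} {a b : V}
    (h : RT G s a b) (hab : a ≠ b) : ∃ u ∈ s, u ≠ b ∧ G u b ∧ b ∈ s := by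
  induction h with
  | refl => exact absurd rfl hab
  | @tail b' c _ hbc ih =>
      by_cases hb'c : b' = c
      · subst hb'c
        by_cases hab' : a = b'
        · exact ⟨b', hbc.1, fun h => hab (h ▸ hab'), hbc.2.2, hbc.2.1⟩
        · exact ih hab'
      · exact ⟨b', hbc.1, hb'c, hbc.2.2, hbc.2.1⟩

theorem exit_to {G : V → V → Prop} {s Y : Finset V} {z₀ : V}
    (hcl : ∀ ⦃x⦄, x ∈ Y → ∀ ⦃u⦄, u ∈ s.erase z₀ → G x u → u ∈ Y)
    {a w : V} (h : RT G s a w) (ha : a ∈ Y) (hw : w ∉ Y) : ∃ x ∈ Y, G x z₀ := by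
  induction h with
  | refl => exact absurd ha hw
  | @tail b c _ hbc ih =>
      by_cases hbY : b ∈ Y
      · by_cases hcz : c = z₀
        · exact ⟨b, hbY, hcz ▸ hbc.2.2⟩
        · exact absurd (hcl hbY (Finset.mem_erase.2 ⟨hcz, hbc.2.1⟩) hbc.2.2) hw
      · exact ih hbY



/-- a closed, strongly connected set avoiding `v`, witnessing non-strongness of `s.erase z` -/
def good (G : V → V → Prop) (s : Finset V) (v z : V) (Y : Finset V) : Prop :=
  z ∈ s.erase v ∧ Y ⊆ s.erase z ∧ Y.Nonempty ∧ v ∉ Y ∧ SCs G Y ∧ OutClosed G (s.erase z) Y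

theorem case_large {n : ℕ} {G : V → V → Prop} {s : Finset V} {v : V} {E : Finset V}
    (IH : ∀ (G' : V → V → Prop) (s' : Finset V), s'.card < n → ∀ (v' : V) (E' : Finset V),
      v' ∈ s' → SCs G' s' → E' ⊆ s'.erase v' →
      (∀ z ∈ s'.erase v', z ∉ E' → ¬ SCs G' (s'.erase z)) →
      s'.card + E'.card ≤ sdeg G' s' v' → False)
    (hcard : s.card = n) (hv : v ∈ s) (hSC : SCs G s) (hE : E ⊆ s.erase v)
    (hcrit : ∀ z ∈ s.erase v, z ∉ E → ¬ SCs G (s.erase z))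
    (hdeg : s.card + E.card ≤ sdeg G s v)
    {z₀ : V} {Y : Finset V}
    (hz₀sv : z₀ ∈ s.erase v) (hYsub : Y ⊆ s.erase z₀) (hYne : Y.Nonempty) (hvY : v ∉ Y)
    (hYsc : SCs G Y) (hYcl : OutClosed G (s.erase z₀) Y)
    (hmin : ∀ z' Y', good G s v z' Y' ∨ good (flip G) s v z' Y' → Y.card ≤ Y'.card)
    (hY2 : 2 ≤ Y.card) : False := by
  have hYs : Y ⊆ s := hYsub.trans (Finset.erase_subset _ _)
  have hz₀s : z₀ ∈ s := (Finset.mem_erase.1 hz₀sv).2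
  have hz₀v : z₀ ≠ v := (Finset.mem_erase.1 hz₀sv).1
  have hz₀Y : z₀ ∉ Y := fun h => (Finset.mem_erase.1 (hYsub h)).1 rfl
  have hvz₀ : v ∈ s.erase z₀ := Finset.mem_erase.2 ⟨fun h => hz₀v h.symm, hv⟩
  -- exit arc from Y to z₀
  obtain ⟨y₀, hy₀Y, hy₀z₀⟩ : ∃ x ∈ Y, G x z₀ := by
    obtain ⟨y₁, hy₁Y⟩ := hYne
    exact exit_to hYcl (hSC y₁ (hYs hy₁Y) v hv) hy₁Y hvY
  set s₁ : Finset V := insert y₀ (s \ Y) with hs₁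
  set G₁ : V → V → Prop := ctr G Y y₀ with hG₁
  have hy₀nsY : y₀ ∉ s \ Y := fun h => (Finset.mem_sdiff.1 h).2 hy₀Y
  have hvy₀ : v ≠ y₀ := fun h => hvY (h ▸ hy₀Y)
  have hvsY : v ∈ s \ Y := Finset.mem_sdiff.2 ⟨hv, hvY⟩
  have hvs₁ : v ∈ s₁ := Finset.mem_insert.2 (Or.inr hvsY)
  have hz₀s₁ : z₀ ∈ s₁ := Finset.mem_insert.2 (Or.inr (Finset.mem_sdiff.2 ⟨hz₀s, hz₀Y⟩))
  have hcards₁ : s₁.card = s.card - Y.card + 1 := by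
    rw [hs₁, Finset.card_insert_of_notMem hy₀nsY, Finset.card_sdiff_of_subset hYs]
  have hYles : Y.card ≤ s.card := Finset.card_le_card hYs
  have hlt : s₁.card < s.card := by omega
  set E₁ : Finset V := if (E ∩ Y).Nonempty then insert y₀ (E \ Y) else E \ Y with hE₁
  have hE₁card : E₁.card ≤ E.card := by
    have h1 : (E \ Y).card + (E ∩ Y).card = E.card := Finset.card_sdiff_add_card_inter _ _
    rw [hE₁]
    by_cases hne : (E ∩ Y).Nonempty
    · rw [if_pos hne]
      have h2 : 1 ≤ (E ∩ Y).card := Finset.card_pos.2 hne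
      have h3 := Finset.card_insert_le y₀ (E \ Y)
      omega
    · rw [if_neg hne]; omega
  have hE₁sub : E₁ ⊆ s₁.erase v := by
    intro u hu
    have : u = y₀ ∨ u ∈ E \ Y := by
      rw [hE₁] at hu
      by_cases hne : (E ∩ Y).Nonempty
      · rw [if_pos hne] at hu
        exact (Finset.mem_insert.1 hu).imp id id
      · rw [if_neg hne] at hu; exact Or.inr hu
    rcases this with rfl | hu'
    · exact Finset.mem_erase.2 ⟨fun h => hvy₀ h.symm, Finset.mem_insert_self _ _⟩
    · have h1 := Finset.mem_sdiff.1 hu'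
      have h2 := Finset.mem_erase.1 (hE h1.1)
      exact Finset.mem_erase.2 ⟨h2.1,
        Finset.mem_insert.2 (Or.inr (Finset.mem_sdiff.2 ⟨h2.2, h1.2⟩))⟩
  -- degrees
  have hod := odeg_ctr (G := G) hYs hy₀Y hvY
  have hid := ideg_ctr (G := G) hYs hy₀Y hvY
  rw [← hG₁, ← hs₁] at hod hid
  have hNinY : ((s.erase v).filter (fun u => G u v)) ∩ Y = ∅ := by
    rw [Finset.eq_empty_iff_forall_notMem]
    intro u hu
    rcases Finset.mem_inter.1 hu with ⟨hu1, hu2⟩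
    exact hvY (hYcl hu2 hvz₀ (Finset.mem_filter.1 hu1).2)
  have hid' : ideg G₁ s₁ v = ideg G s v := by
    rw [hNinY] at hid
    simpa using hid
  have hdeg₁ : s₁.card + E₁.card ≤ sdeg G₁ s₁ v := by
    have haY : (((s.erase v).filter (fun u => G v u)) ∩ Y).card ≤ Y.card :=
      Finset.card_le_card (Finset.inter_subset_right)
    have hkey : odeg G s v + 1 ≤ odeg G₁ s₁ v + Y.card := by
      by_cases hne : (((s.erase v).filter (fun u => G v u)) ∩ Y).Nonempty
      · rw [if_pos hne] at hod
        have h1 : 1 ≤ (((s.erase v).filter (fun u => G v u)) ∩ Y).card := Finset.card_pos.2 hne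
        omega
      · rw [if_neg hne] at hod
        have h0 : (((s.erase v).filter (fun u => G v u)) ∩ Y).card = 0 :=
          Finset.card_eq_zero.2 (Finset.not_nonempty_iff_eq_empty.1 hne)
        omega
    have hgoal : s.card + E.card ≤ odeg G s v + ideg G s v := hdeg
    show s₁.card + E₁.card ≤ odeg G₁ s₁ v + ideg G₁ s₁ v
    rw [hid']
    omega
  have hSC₁ : SCs G₁ s₁ := ctr_SCs hYs hy₀Y hSC
  -- criticality transfer
  have hcrit₁ : ∀ ζ ∈ s₁.erase v, ζ ∉ E₁ → ¬ SCs G₁ (s₁.erase ζ) := by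
    intro ζ hζ hζE hScon
    have hζv : ζ ≠ v := (Finset.mem_erase.1 hζ).1
    have hζs₁ : ζ ∈ s₁ := (Finset.mem_erase.1 hζ).2
    by_cases hζy₀ : ζ = y₀
    · -- contracted vertex: use minimality
      have hEY : ¬ (E ∩ Y).Nonempty := by
        intro hne
        apply hζE
        rw [hE₁, if_pos hne, hζy₀]
        exact Finset.mem_insert_self _ _
      have hK : s₁.erase y₀ = s \ Y := by
        rw [hs₁]; exact Finset.erase_insert hy₀nsY
      have hKs : SCs G (s \ Y) := by
        rw [hζy₀, hK] at hScon
        refine (SCs_congr ?_).1 hScon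
        intro x hx y hy hxy
        have hxA : x ∉ Y := (Finset.mem_sdiff.1 hx).2
        have hyA : y ∉ Y := (Finset.mem_sdiff.1 hy).2
        have hxa : x ≠ y₀ := fun h => hxA (h ▸ hy₀Y)
        have hya : y ≠ y₀ := fun h => hyA (h ▸ hy₀Y)
        exact ⟨ctr_off hxa hya, ctr_mk_off hxa hya⟩
      obtain ⟨y₂, hy₂Y⟩ := hYne
      have hy₂E : y₂ ∉ E := fun h =>
        hEY ⟨y₂, Finset.mem_inter.2 ⟨h, hy₂Y⟩⟩
      have hy₂v : y₂ ≠ v := fun h => hvY (h ▸ hy₂Y)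
      have hy₂s : y₂ ∈ s := hYs hy₂Y
      have hny₂ : ¬ SCs G (s.erase y₂) := hcrit y₂ (Finset.mem_erase.2 ⟨hy₂v, hy₂s⟩) hy₂E
      have hvsy₂ : v ∈ s.erase y₂ := Finset.mem_erase.2 ⟨fun h => hy₂v h.symm, hv⟩
      obtain ⟨Y', hY'sub, hY'ne, hvY', hY'sc, hY'cl⟩ :=
        exists_closed_avoiding G (s.erase y₂) v hvsy₂ hny₂
      have hsub' : s \ Y ⊆ s.erase y₂ := by
        intro x hx
        exact Finset.mem_erase.2 ⟨fun h => (Finset.mem_sdiff.1 hx).2 (h ▸ hy₂Y),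
          (Finset.mem_sdiff.1 hx).1⟩
      have hY'Y : Y' ⊆ Y.erase y₂ := by
        intro u hu
        have hus : u ∈ s.erase y₂ := hY'sub hu
        by_contra huY
        have huY' : u ∉ Y ∨ u = y₂ := by
          by_cases h1 : u ∈ Y
          · right
            by_contra h2
            exact huY (Finset.mem_erase.2 ⟨h2, h1⟩)
          · exact Or.inl h1
        have huYn : u ∉ Y := by
          rcases huY' with h | h
          · exact h
          · exact absurd ((h ▸ hus : u ∈ s.erase y₂)) (by rw [h]; simp)
        have husY : u ∈ s \ Y := Finset.mem_sdiff.2 ⟨(Finset.mem_erase.1 hus).2, huYn⟩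
        have huv : RT G (s.erase y₂) u v := (hKs u husY v hvsY).mono hsub'
        have hvu : RT G (s.erase y₂) v u := (hKs v hvsY u husY).mono hsub'
        rcases hY'cl with hcl | hcl
        · exact hvY' (hcl.rt_restrict hu huv).1
        · have : RT (flip G) (s.erase y₂) u v := RT_flip.2 hvu
          exact hvY' ((outClosed_flip.2 hcl).rt_restrict hu this).1
      have hY'lt : Y'.card < Y.card := by
        have h1 : Y'.card ≤ (Y.erase y₂).card := Finset.card_le_card hY'Y
        have h2 : (Y.erase y₂).card = Y.card - 1 := Finset.card_erase_of_mem hy₂Y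
        have h3 : 1 ≤ Y.card := Finset.card_pos.2 ⟨y₂, hy₂Y⟩
        omega
      have hgood' : good G s v y₂ Y' ∨ good (flip G) s v y₂ Y' := by
        rcases hY'cl with hcl | hcl
        · exact Or.inl ⟨Finset.mem_erase.2 ⟨hy₂v, hy₂s⟩, hY'sub, hY'ne, hvY', hY'sc, hcl⟩
        · exact Or.inr ⟨Finset.mem_erase.2 ⟨hy₂v, hy₂s⟩, hY'sub, hY'ne, hvY',
            SCs_flip hY'sc, outClosed_flip.2 hcl⟩
      exact absurd (hmin y₂ Y' hgood') (by omega)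
    · by_cases hζz₀ : ζ = z₀
      · -- no out-arc from the contracted vertex in s₁ \ {z₀}
        have hy₀m : y₀ ∈ s₁.erase ζ := by
          refine Finset.mem_erase.2 ⟨fun h => ?_, Finset.mem_insert_self _ _⟩
          exact hζy₀ h.symm
        have hvm : v ∈ s₁.erase ζ := Finset.mem_erase.2 ⟨fun h => hζv h.symm, hvs₁⟩
        obtain ⟨u, ⟨_, hum, harc⟩, _⟩ := (hScon y₀ hy₀m v hvm).head_step (fun h => hvy₀ h.symm)
        have h2 : u ≠ y₀ ∧ ∃ w ∈ Y, G w u := by simpa [hG₁, ctr] using harc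
        obtain ⟨huy₀, w, hwY, hGwu⟩ := h2
        have hum' := Finset.mem_erase.1 hum
        have husY : u ∈ s \ Y := by
          rcases Finset.mem_insert.1 hum'.2 with h | h
          · exact absurd h huy₀
          · exact h
        have huz₀ : u ≠ z₀ := fun h => hum'.1 (h ▸ (hζz₀ ▸ rfl))
        have : u ∈ Y := hYcl hwY (Finset.mem_erase.2 ⟨huz₀, (Finset.mem_sdiff.1 husY).1⟩) hGwu
        exact (Finset.mem_sdiff.1 husY).2 this
      · -- generic vertex: lift strong connectivity back to G
        have hζsY : ζ ∈ s \ Y := by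
          rcases Finset.mem_insert.1 hζs₁ with h | h
          · exact absurd h hζy₀
          · exact h
        have hζE' : ζ ∉ E := by
          intro h
          apply hζE
          have : ζ ∈ E \ Y := Finset.mem_sdiff.2 ⟨h, (Finset.mem_sdiff.1 hζsY).2⟩
          rw [hE₁]
          by_cases hne : (E ∩ Y).Nonempty
          · rw [if_pos hne]; exact Finset.mem_insert.2 (Or.inr this)
          · rw [if_neg hne]; exact this
        refine hcrit ζ (Finset.mem_erase.2 ⟨hζv, (Finset.mem_sdiff.1 hζsY).1⟩) hζE' ?_
        have hζY : ζ ∉ Y := (Finset.mem_sdiff.1 hζsY).2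
        refine ctr_lift hYs hy₀Y (Finset.mem_sdiff.1 hζsY).1 hζY hScon ?_ ?_ ?_
        · intro a haY
          exact ⟨y₀, hy₀Y, z₀, hz₀s, hz₀Y, fun h => hζz₀ h.symm, hYsc a haY y₀ hy₀Y, hy₀z₀⟩
        · intro b hbY
          have hvm : v ∈ s₁.erase ζ := Finset.mem_erase.2 ⟨fun h => hζv h.symm, hvs₁⟩
          have hy₀m : y₀ ∈ s₁.erase ζ :=
            Finset.mem_erase.2 ⟨fun h => hζy₀ h.symm, Finset.mem_insert_self _ _⟩
          obtain ⟨p, _, hpm, _, harc⟩ := (hScon v hvm y₀ hy₀m).tail_step hvy₀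
          have hpy₀ : p ≠ y₀ := by
            intro h
            rw [h] at harc
            exact ctr_self harc
          obtain ⟨w, hwY, hGpw⟩ := ctr_to hpy₀ harc
          have hpm' := Finset.mem_erase.1 hpm
          have hpsY : p ∈ s \ Y := by
            rcases Finset.mem_insert.1 hpm'.2 with h | h
            · exact absurd h hpy₀
            · exact h
          exact ⟨w, hwY, p, (Finset.mem_sdiff.1 hpsY).1, (Finset.mem_sdiff.1 hpsY).2,
            hpm'.1, hGpw, hYsc w hwY b hbY⟩
        · intro e heY _ x hxY q _ _ _ hGxq
          exact ⟨x, hxY, hYsc e heY x hxY, hGxq⟩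
  exact IH G₁ s₁ (hcard ▸ hlt) v E₁ hvs₁ hSC₁ hE₁sub hcrit₁ hdeg₁


theorem case2a {n : ℕ} {G : V → V → Prop} {s : Finset V} {v : V} {E : Finset V}
    (IH : ∀ (G' : V → V → Prop) (s' : Finset V), s'.card < n → ∀ (v' : V) (E' : Finset V),
      v' ∈ s' → SCs G' s' → E' ⊆ s'.erase v' →
      (∀ z ∈ s'.erase v', z ∉ E' → ¬ SCs G' (s'.erase z)) →
      s'.card + E'.card ≤ sdeg G' s' v' → False)
    (hcard : s.card = n) (hv : v ∈ s) (hSC : SCs G s) (hE : E ⊆ s.erase v)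
    (hcrit : ∀ z ∈ s.erase v, z ∉ E → ¬ SCs G (s.erase z))
    (hdeg : s.card + E.card ≤ sdeg G s v)
    {y z₀ : V} (hys : y ∈ s) (hz₀s : z₀ ∈ s) (hyz₀ : y ≠ z₀) (hyv : y ≠ v) (hz₀v : z₀ ≠ v)
    (hGyz₀ : G y z₀) (hyout : ∀ u ∈ s, G y u → u = y ∨ u = z₀)
    (H2a : ∀ ζ, ζ ≠ v → (G z₀ y ∨ ∃ p, (p ∈ s ∧ p ∉ ({y, z₀} : Finset V)) ∧ p ≠ ζ ∧ G p y)) :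
    False := by
  classical
  set A : Finset V := {y, z₀} with hA
  have hmemA : ∀ u : V, u ∈ A ↔ (u = y ∨ u = z₀) := by intro u; simp [hA]
  have hyA : y ∈ A := (hmemA y).2 (Or.inl rfl)
  have hz₀A : z₀ ∈ A := (hmemA z₀).2 (Or.inr rfl)
  have hAs : A ⊆ s := by
    intro u hu
    rcases (hmemA u).1 hu with rfl | rfl
    · exact hys
    · exact hz₀s
  have hvA : v ∉ A := by
    intro hu
    rcases (hmemA v).1 hu with h | h
    · exact hyv h.symm
    · exact hz₀v h.symm
  have hAcard : A.card = 2 := Finset.card_pair hyz₀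
  set s₂ : Finset V := insert y (s \ A) with hs₂
  set G₂ : V → V → Prop := ctr G A y with hG₂
  have hynsA : y ∉ s \ A := fun h => (Finset.mem_sdiff.1 h).2 hyA
  have hvsA : v ∈ s \ A := Finset.mem_sdiff.2 ⟨hv, hvA⟩
  have hvs₂ : v ∈ s₂ := Finset.mem_insert.2 (Or.inr hvsA)
  have hys₂ : y ∈ s₂ := Finset.mem_insert_self _ _
  have hvy : v ≠ y := fun h => hyv h.symm
  have hscard2 : 2 ≤ s.card := Finset.one_lt_card.2 ⟨y, hys, v, hv, hyv⟩
  have hcards₂ : s₂.card = s.card - 1 := by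
    rw [hs₂, Finset.card_insert_of_notMem hynsA, Finset.card_sdiff_of_subset hAs, hAcard]
    omega
  have hlt : s₂.card < s.card := by omega
  have hseq : s₂.erase y = s \ A := by rw [hs₂]; exact Finset.erase_insert hynsA
  -- congruence between G₂ and G on s \ A
  have hGcongr : ∀ x ∈ s \ A, ∀ u ∈ s \ A, x ≠ u → (G₂ x u ↔ G x u) := by
    intro x hx u hu _
    have hxy : x ≠ y := fun h => (Finset.mem_sdiff.1 hx).2 (h ▸ hyA)
    have huy : u ≠ y := fun h => (Finset.mem_sdiff.1 hu).2 (h ▸ hyA)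
    exact ⟨ctr_off hxy huy, ctr_mk_off hxy huy⟩
  set E₂ : Finset V := if SCs G (s \ A) then insert y (E \ A) else E \ A with hE₂
  have hE₂mem : ∀ {u : V}, u ∈ E₂ → u = y ∨ u ∈ E \ A := by
    intro u hu
    rw [hE₂] at hu
    by_cases h : SCs G (s \ A)
    · rw [if_pos h] at hu; exact (Finset.mem_insert.1 hu).imp id id
    · rw [if_neg h] at hu; exact Or.inr hu
  have hE₂sub : E₂ ⊆ s₂.erase v := by
    intro u hu
    rcases hE₂mem hu with rfl | hu'
    · exact Finset.mem_erase.2 ⟨hyv, hys₂⟩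
    · have h1 := Finset.mem_sdiff.1 hu'
      have h2 := Finset.mem_erase.1 (hE h1.1)
      exact Finset.mem_erase.2 ⟨h2.1,
        Finset.mem_insert.2 (Or.inr (Finset.mem_sdiff.2 ⟨h2.2, h1.2⟩))⟩
  have hSC₂ : SCs G₂ s₂ := ctr_SCs hAs hyA hSC
  -- criticality transfer
  have hcrit₂ : ∀ ζ ∈ s₂.erase v, ζ ∉ E₂ → ¬ SCs G₂ (s₂.erase ζ) := by
    intro ζ hζ hζE hScon
    have hζv : ζ ≠ v := (Finset.mem_erase.1 hζ).1
    have hζs₂ : ζ ∈ s₂ := (Finset.mem_erase.1 hζ).2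
    by_cases hζy : ζ = y
    · -- contracted vertex
      have hKn : ¬ SCs G (s \ A) := by
        intro hKs
        apply hζE
        rw [hE₂, if_pos hKs, hζy]
        exact Finset.mem_insert_self _ _
      apply hKn
      rw [hζy, hseq] at hScon
      exact (SCs_congr hGcongr).1 hScon
    · have hζsA : ζ ∈ s \ A := by
        rcases Finset.mem_insert.1 hζs₂ with h | h
        · exact absurd h hζy
        · exact h
      have hζs : ζ ∈ s := (Finset.mem_sdiff.1 hζsA).1
      have hζA : ζ ∉ A := (Finset.mem_sdiff.1 hζsA).2
      have hζz₀ : ζ ≠ z₀ := fun h => hζA (h ▸ hz₀A)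
      have hζE' : ζ ∉ E := by
        intro h
        apply hζE
        have h1 : ζ ∈ E \ A := Finset.mem_sdiff.2 ⟨h, hζA⟩
        rw [hE₂]
        by_cases h2 : SCs G (s \ A)
        · rw [if_pos h2]; exact Finset.mem_insert.2 (Or.inr h1)
        · rw [if_neg h2]; exact h1
      refine hcrit ζ (Finset.mem_erase.2 ⟨hζv, hζs⟩) hζE' ?_
      -- get an exit arc z₀ → q avoiding ζ from strong connectivity of the contraction
      have hym : y ∈ s₂.erase ζ := Finset.mem_erase.2 ⟨fun h => hζy h.symm, hys₂⟩
      have hvm : v ∈ s₂.erase ζ := Finset.mem_erase.2 ⟨fun h => hζv h.symm, hvs₂⟩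
      obtain ⟨u₀, ⟨_, hu₀m, harc₀⟩, _⟩ := (hScon y hym v hvm).head_step hyv
      have h2 : u₀ ≠ y ∧ ∃ w ∈ A, G w u₀ := by simpa [hG₂, ctr] using harc₀
      obtain ⟨hu₀y, w₀, hw₀A, hGw₀u₀⟩ := h2
      have hu₀m' := Finset.mem_erase.1 hu₀m
      have hu₀sA : u₀ ∈ s \ A := by
        rcases Finset.mem_insert.1 hu₀m'.2 with h | h
        · exact absurd h hu₀y
        · exact h
      have hq : G z₀ u₀ := by
        rcases (hmemA w₀).1 hw₀A with rfl | rfl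
        · rcases hyout u₀ (Finset.mem_sdiff.1 hu₀sA).1 hGw₀u₀ with rfl | rfl
          · exact absurd rfl hu₀y
          · exact absurd hz₀A (Finset.mem_sdiff.1 hu₀sA).2
        · exact hGw₀u₀
      refine ctr_lift hAs hyA hζs hζA hScon ?_ ?_ ?_
      · -- hEXIT
        intro a haA
        refine ⟨z₀, hz₀A, u₀, (Finset.mem_sdiff.1 hu₀sA).1, (Finset.mem_sdiff.1 hu₀sA).2,
          hu₀m'.1, ?_, hq⟩
        rcases (hmemA a).1 haA with rfl | rfl
        · exact RT.single hyA hz₀A hGyz₀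
        · exact RT.refl' _
      · -- hENTER
        intro b hbA
        obtain ⟨p, _, hpm, _, harc⟩ := (hScon v hvm y hym).tail_step hvy
        have hpy : p ≠ y := by
          intro h
          rw [h] at harc
          exact ctr_self harc
        obtain ⟨w, hwA, hGpw⟩ := ctr_to hpy harc
        have hpm' := Finset.mem_erase.1 hpm
        have hpsA : p ∈ s \ A := by
          rcases Finset.mem_insert.1 hpm'.2 with h | h
          · exact absurd h hpy
          · exact h
        have hps : p ∈ s := (Finset.mem_sdiff.1 hpsA).1
        have hpA : p ∉ A := (Finset.mem_sdiff.1 hpsA).2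
        have hby : b = y ∨ b = z₀ := (hmemA b).1 hbA
        rcases (hmemA w).1 hwA with hw | hw
        · -- entry at y
          refine ⟨y, hyA, p, hps, hpA, hpm'.1, by rw [← hw]; exact hGpw, ?_⟩
          rcases hby with hb | hb
          · rw [hb]; exact RT.refl' _
          · rw [hb]; exact RT.single hyA hz₀A hGyz₀
        · -- entry at z₀
          rcases hby with hb | hb
          · -- need to reach y
            rcases H2a ζ hζv with hβ | ⟨p', ⟨hp's, hp'A⟩, hp'ζ, hGp'y⟩
            · refine ⟨z₀, hz₀A, p, hps, hpA, hpm'.1, by rw [← hw]; exact hGpw, ?_⟩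
              rw [hb]; exact RT.single hz₀A hyA hβ
            · refine ⟨y, hyA, p', hp's, hp'A, hp'ζ, hGp'y, ?_⟩
              rw [hb]; exact RT.refl' _
          · refine ⟨z₀, hz₀A, p, hps, hpA, hpm'.1, by rw [← hw]; exact hGpw, ?_⟩
            rw [hb]; exact RT.refl' _
      · -- hTRAV
        intro e heA _ x hxA q hqs hqA _ hGxq
        rcases (hmemA x).1 hxA with hx | hx
        · have hGyq : G y q := by rw [← hx]; exact hGxq
          rcases hyout q hqs hGyq with h | h
          · exact absurd ((hmemA q).2 (Or.inl h)) hqA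
          · exact absurd ((hmemA q).2 (Or.inr h)) hqA
        · refine ⟨z₀, hz₀A, ?_, by rw [← hx]; exact hGxq⟩
          rcases (hmemA e).1 heA with he | he
          · rw [he]; exact RT.single hyA hz₀A hGyz₀
          · rw [he]; exact RT.refl' _
  -- degree bound
  have hod := odeg_ctr (G := G) hAs hyA hvA
  have hid := ideg_ctr (G := G) hAs hyA hvA
  rw [← hG₂, ← hs₂] at hod hid
  have hNinA : ((s.erase v).filter (fun u => G u v)) ∩ A ⊆ {z₀} := by
    intro u hu
    rcases Finset.mem_inter.1 hu with ⟨hu1, hu2⟩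
    rcases (hmemA u).1 hu2 with rfl | rfl
    · rcases hyout v hv (Finset.mem_filter.1 hu1).2 with h | h
      · exact absurd h.symm hyv
      · exact absurd h.symm hz₀v
    · exact Finset.mem_singleton_self _
  have hidge : ideg G s v ≤ ideg G₂ s₂ v := by
    have hc1 : (((s.erase v).filter (fun u => G u v)) ∩ A).card ≤ 1 := by
      calc _ ≤ ({z₀} : Finset V).card := Finset.card_le_card hNinA
        _ = 1 := Finset.card_singleton _
    by_cases hne : (((s.erase v).filter (fun u => G u v)) ∩ A).Nonempty
    · rw [if_pos hne] at hid
      have := Finset.card_pos.2 hne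
      omega
    · rw [if_neg hne] at hid
      have h0 : (((s.erase v).filter (fun u => G u v)) ∩ A).card = 0 :=
        Finset.card_eq_zero.2 (Finset.not_nonempty_iff_eq_empty.1 hne)
      omega
  have hodge : odeg G s v ≤ odeg G₂ s₂ v + 1 := by
    have hc2 : (((s.erase v).filter (fun u => G v u)) ∩ A).card ≤ 2 := by
      calc _ ≤ A.card := Finset.card_le_card Finset.inter_subset_right
        _ = 2 := hAcard
    by_cases hne : (((s.erase v).filter (fun u => G v u)) ∩ A).Nonempty
    · rw [if_pos hne] at hod
      omega
    · rw [if_neg hne] at hod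
      have h0 : (((s.erase v).filter (fun u => G v u)) ∩ A).card = 0 :=
        Finset.card_eq_zero.2 (Finset.not_nonempty_iff_eq_empty.1 hne)
      omega
  have hEsplit : (E \ A).card + (E ∩ A).card = E.card := Finset.card_sdiff_add_card_inter _ _
  have hdeg₂ : s₂.card + E₂.card ≤ sdeg G₂ s₂ v := by
    by_cases hKs : SCs G (s \ A)
    · by_cases hEA : (E ∩ A).Nonempty
      · -- an exception inside A pays for the contracted vertex
        have h1 : E₂.card ≤ E.card := by
          rw [hE₂, if_pos hKs]
          have := Finset.card_insert_le y (E \ A)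
          have := Finset.card_pos.2 hEA
          omega
        have hsd : sdeg G s v = odeg G s v + ideg G s v := rfl
        show s₂.card + E₂.card ≤ odeg G₂ s₂ v + ideg G₂ s₂ v
        omega
      · -- pattern R: no arcs into z₀ from the core
        have hyE : y ∉ E := by
          intro h
          exact hEA ⟨y, Finset.mem_inter.2 ⟨h, hyA⟩⟩
        -- existence of an arc z₀ → K
        obtain ⟨q₀, hq₀sA, hGz₀q₀⟩ : ∃ q ∈ s \ A, G z₀ q := by
          by_contra hQ
          push_neg at hQ
          have habs : OutClosed G s A := by
            intro x hx u hu hGxu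
            rcases (hmemA x).1 hx with rfl | rfl
            · rcases hyout u hu hGxu with rfl | rfl
              · exact hyA
              · exact hz₀A
            · by_contra huA
              exact hQ u (Finset.mem_sdiff.2 ⟨hu, huA⟩) hGxu
          exact hvA (habs.rt_restrict hyA (hSC y hys v hv)).1
        have hsey : s.erase y = insert z₀ (s \ A) := by
          ext u
          constructor
          · intro hu
            rcases Finset.mem_erase.1 hu with ⟨h1, h2⟩
            by_cases h3 : u = z₀
            · exact Finset.mem_insert.2 (Or.inl h3)
            · refine Finset.mem_insert.2 (Or.inr (Finset.mem_sdiff.2 ⟨h2, ?_⟩))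
              intro hA'
              rcases (hmemA u).1 hA' with h | h
              · exact h1 h
              · exact h3 h
          · intro hu
            rcases Finset.mem_insert.1 hu with rfl | h
            · exact Finset.mem_erase.2 ⟨fun h => hyz₀ h.symm, hz₀s⟩
            · rcases Finset.mem_sdiff.1 h with ⟨h1, h2⟩
              exact Finset.mem_erase.2 ⟨fun h3 => h2 (h3 ▸ hyA), h1⟩
        have hsAsub : s \ A ⊆ s.erase y := by
          rw [hsey]; exact fun x hx => Finset.mem_insert.2 (Or.inr hx)
        have hRempty : ∀ r ∈ s \ A, ¬ G r z₀ := by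
          intro r hrsA hGr
          apply hcrit y (Finset.mem_erase.2 ⟨hyv, hys⟩) hyE
          -- s.erase y is strongly connected
          have hz₀m : z₀ ∈ s.erase y := Finset.mem_erase.2 ⟨fun h => hyz₀ h.symm, hz₀s⟩
          have reachz : ∀ b' ∈ s \ A, RT G (s.erase y) z₀ b' := by
            intro b' hb'
            refine (RT.single hz₀m (hsAsub hq₀sA) hGz₀q₀).trans' ?_
            exact (hKs q₀ hq₀sA b' hb').mono hsAsub
          have toz : ∀ a' ∈ s \ A, RT G (s.erase y) a' z₀ := by
            intro a' ha'
            exact RT.trans' ((hKs a' ha' r hrsA).mono hsAsub) (RT.single (hsAsub hrsA) hz₀m hGr)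
          intro a ha b hb
          rcases Finset.mem_insert.1 (hsey ▸ ha) with rfl | ha'
          · rcases Finset.mem_insert.1 (hsey ▸ hb) with rfl | hb'
            · exact RT.refl' _
            · exact reachz b hb'
          · rcases Finset.mem_insert.1 (hsey ▸ hb) with rfl | hb'
            · exact toz a ha'
            · exact ((hKs a ha' b hb').mono hsAsub)
        -- now v → z₀ is impossible, so out-degree is preserved
        have hNoutA : ((s.erase v).filter (fun u => G v u)) ∩ A ⊆ {y} := by
          intro u hu
          rcases Finset.mem_inter.1 hu with ⟨hu1, hu2⟩
          rcases (hmemA u).1 hu2 with rfl | rfl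
          · exact Finset.mem_singleton_self _
          · exact absurd (Finset.mem_filter.1 hu1).2 (hRempty v hvsA)
        have hodge' : odeg G s v ≤ odeg G₂ s₂ v := by
          have hc1 : (((s.erase v).filter (fun u => G v u)) ∩ A).card ≤ 1 := by
            calc _ ≤ ({y} : Finset V).card := Finset.card_le_card hNoutA
              _ = 1 := Finset.card_singleton _
          by_cases hne : (((s.erase v).filter (fun u => G v u)) ∩ A).Nonempty
          · rw [if_pos hne] at hod
            have := Finset.card_pos.2 hne
            omega
          · rw [if_neg hne] at hod
            have h0 : (((s.erase v).filter (fun u => G v u)) ∩ A).card = 0 :=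
              Finset.card_eq_zero.2 (Finset.not_nonempty_iff_eq_empty.1 hne)
            omega
        have h1 : E₂.card ≤ E.card + 1 := by
          rw [hE₂, if_pos hKs]
          have := Finset.card_insert_le y (E \ A)
          omega
        have hsd : sdeg G s v = odeg G s v + ideg G s v := rfl
        show s₂.card + E₂.card ≤ odeg G₂ s₂ v + ideg G₂ s₂ v
        omega
    · have h1 : E₂.card ≤ E.card := by
        rw [hE₂, if_neg hKs]
        omega
      have hsd : sdeg G s v = odeg G s v + ideg G s v := rfl
      show s₂.card + E₂.card ≤ odeg G₂ s₂ v + ideg G₂ s₂ v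
      omega
  exact IH G₂ s₂ (hcard ▸ hlt) v E₂ hvs₂ hSC₂ hE₂sub hcrit₂ hdeg₂

theorem case2b {n : ℕ} {G : V → V → Prop} {s : Finset V} {v : V} {E : Finset V}
    (IH : ∀ (G' : V → V → Prop) (s' : Finset V), s'.card < n → ∀ (v' : V) (E' : Finset V),
      v' ∈ s' → SCs G' s' → E' ⊆ s'.erase v' →
      (∀ z ∈ s'.erase v', z ∉ E' → ¬ SCs G' (s'.erase z)) →
      s'.card + E'.card ≤ sdeg G' s' v' → False)
    (hcard : s.card = n) (hv : v ∈ s) (hSC : SCs G s) (hE : E ⊆ s.erase v)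
    (hcrit : ∀ z ∈ s.erase v, z ∉ E → ¬ SCs G (s.erase z))
    (hdeg : s.card + E.card ≤ sdeg G s v)
    {y z₀ p₀ : V} (hys : y ∈ s) (hz₀s : z₀ ∈ s) (hp₀s : p₀ ∈ s)
    (hyz₀ : y ≠ z₀) (hyv : y ≠ v) (hz₀v : z₀ ≠ v) (hp₀v : p₀ ≠ v)
    (hp₀y : p₀ ≠ y) (hp₀z₀ : p₀ ≠ z₀)
    (hGyz₀ : G y z₀) (hGp₀y : G p₀ y)
    (hyout : ∀ u ∈ s, G y u → u = y ∨ u = z₀)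
    (hyin : ∀ u ∈ s, u ≠ y → G u y → u = p₀) :
    False := by
  classical
  set B : Finset V := {y, z₀} with hB
  have hmemB : ∀ u : V, u ∈ B ↔ (u = y ∨ u = z₀) := by intro u; simp [hB]
  set A : Finset V := {p₀, y} with hA
  have hmemA : ∀ u : V, u ∈ A ↔ (u = p₀ ∨ u = y) := by intro u; simp [hA]
  have hp₀A : p₀ ∈ A := (hmemA p₀).2 (Or.inl rfl)
  have hyA : y ∈ A := (hmemA y).2 (Or.inr rfl)
  have hAs : A ⊆ s := by
    intro u hu
    rcases (hmemA u).1 hu with rfl | rfl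
    · exact hp₀s
    · exact hys
  have hvA : v ∉ A := by
    intro hu
    rcases (hmemA v).1 hu with h | h
    · exact hp₀v h.symm
    · exact hyv h.symm
  have hz₀A : z₀ ∉ A := by
    intro hu
    rcases (hmemA z₀).1 hu with h | h
    · exact hp₀z₀ h.symm
    · exact hyz₀ h.symm
  have hAcard : A.card = 2 := Finset.card_pair hp₀y
  set s₀ : Finset V := insert p₀ (s \ A) with hs₀
  set G₀ : V → V → Prop := ctr G A p₀ with hG₀
  have hp₀nsA : p₀ ∉ s \ A := fun h => (Finset.mem_sdiff.1 h).2 hp₀A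
  have hvsA : v ∈ s \ A := Finset.mem_sdiff.2 ⟨hv, hvA⟩
  have hz₀sA : z₀ ∈ s \ A := Finset.mem_sdiff.2 ⟨hz₀s, hz₀A⟩
  have hvs₀ : v ∈ s₀ := Finset.mem_insert.2 (Or.inr hvsA)
  have hp₀s₀ : p₀ ∈ s₀ := Finset.mem_insert_self _ _
  have hz₀s₀ : z₀ ∈ s₀ := Finset.mem_insert.2 (Or.inr hz₀sA)
  have hvp₀ : v ≠ p₀ := fun h => hp₀v h.symm
  have hvy : v ≠ y := fun h => hyv h.symm
  have hscard2 : 2 ≤ s.card := Finset.one_lt_card.2 ⟨y, hys, v, hv, hyv⟩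
  have hcards₀ : s₀.card = s.card - 1 := by
    rw [hs₀, Finset.card_insert_of_notMem hp₀nsA, Finset.card_sdiff_of_subset hAs, hAcard]
    omega
  have hlt : s₀.card < s.card := by omega
  -- the two exceptional subgraphs
  set K : Finset V := s \ B with hK
  have hKerase : s₀.erase z₀ = K := by
    ext u
    simp only [hs₀, hK, Finset.mem_erase, Finset.mem_insert, Finset.mem_sdiff, hA, hB,
      Finset.mem_insert, Finset.mem_singleton]
    constructor
    · rintro ⟨h1, (rfl | ⟨h2, h3⟩)⟩
      · exact ⟨hp₀s, by push_neg; exact ⟨hp₀y, hp₀z₀⟩⟩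
      · push_neg at h3
        exact ⟨h2, by push_neg; exact ⟨h3.2, h1⟩⟩
    · rintro ⟨h1, h2⟩
      push_neg at h2
      by_cases h3 : u = p₀
      · exact ⟨fun h => hp₀z₀ (h3 ▸ h), Or.inl h3⟩
      · exact ⟨h2.2, Or.inr ⟨h1, by push_neg; exact ⟨h3, h2.1⟩⟩⟩
  have hDeq : s₀.erase p₀ = s \ A := by
    rw [hs₀]; exact Finset.erase_insert hp₀nsA
  -- congruences
  have hGcongrK : ∀ x ∈ K, ∀ u ∈ K, x ≠ u → (G₀ x u ↔ G x u) := by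
    intro x hx u hu hxu
    have hxB := (Finset.mem_sdiff.1 (hK ▸ hx)).2
    have huB := (Finset.mem_sdiff.1 (hK ▸ hu)).2
    have hxs := (Finset.mem_sdiff.1 (hK ▸ hx)).1
    have hus := (Finset.mem_sdiff.1 (hK ▸ hu)).1
    have hxy : x ≠ y := fun h => hxB ((hmemB x).2 (Or.inl h))
    have huy : u ≠ y := fun h => huB ((hmemB u).2 (Or.inl h))
    by_cases hxp : x = p₀
    · constructor
      · intro h
        have h2 : u ≠ p₀ ∧ ∃ w ∈ A, G w u := by
          rw [hxp] at h; simpa [hG₀, ctr] using h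
        obtain ⟨_, w, hwA, hGwu⟩ := h2
        rcases (hmemA w).1 hwA with hw | hw
        · rw [hxp, ← hw]; exact hGwu
        · rcases hyout u hus (by rw [← hw]; exact hGwu) with h | h
          · exact absurd h huy
          · exact absurd ((hmemB u).2 (Or.inr h)) huB
      · intro h
        have hup : u ≠ p₀ := fun he => hxu (hxp.trans he.symm)
        rw [hxp]
        exact ctr_mk_from hup hp₀A (by rw [← hxp]; exact h)
    · by_cases hup : u = p₀
      · constructor
        · intro h
          have h' : G₀ x p₀ := by rw [← hup]; exact h
          obtain ⟨w, hwA, hGxw⟩ := ctr_to hxp h'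
          rcases (hmemA w).1 hwA with hw | hw
          · rw [hup, ← hw]; exact hGxw
          · exact absurd (hyin x hxs hxy (by rw [← hw]; exact hGxw)) hxp
        · intro h
          rw [hup]
          exact ctr_mk_to hxp hp₀A (by rw [← hup]; exact h)
      · exact ⟨ctr_off hxp hup, ctr_mk_off hxp hup⟩
  have hGcongrD : ∀ x ∈ s \ A, ∀ u ∈ s \ A, x ≠ u → (G₀ x u ↔ G x u) := by
    intro x hx u hu _
    have hxp : x ≠ p₀ := fun h => (Finset.mem_sdiff.1 hx).2 (h ▸ hp₀A)
    have hup : u ≠ p₀ := fun h => (Finset.mem_sdiff.1 hu).2 (h ▸ hp₀A)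
    exact ⟨ctr_off hxp hup, ctr_mk_off hxp hup⟩
  -- exceptional set
  set E₀ : Finset V :=
    (if SCs G K then insert z₀ (E \ A) else E \ A) ∪ (if SCs G (s \ A) then {p₀} else ∅)
    with hE₀
  have hE₀mem : ∀ {u : V}, u ∈ E₀ → u = z₀ ∨ u = p₀ ∨ u ∈ E \ A := by
    intro u hu
    rw [hE₀] at hu
    rcases Finset.mem_union.1 hu with h | h
    · by_cases h1 : SCs G K
      · rw [if_pos h1] at h
        rcases Finset.mem_insert.1 h with h | h
        · exact Or.inl h
        · exact Or.inr (Or.inr h)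
      · rw [if_neg h1] at h; exact Or.inr (Or.inr h)
    · by_cases h1 : SCs G (s \ A)
      · rw [if_pos h1] at h
        exact Or.inr (Or.inl (Finset.mem_singleton.1 h))
      · rw [if_neg h1] at h; exact absurd h (Finset.notMem_empty u)
  have hE₀sub : E₀ ⊆ s₀.erase v := by
    intro u hu
    rcases hE₀mem hu with rfl | rfl | hu'
    · exact Finset.mem_erase.2 ⟨hz₀v, hz₀s₀⟩
    · exact Finset.mem_erase.2 ⟨hp₀v, hp₀s₀⟩
    · have h1 := Finset.mem_sdiff.1 hu'
      have h2 := Finset.mem_erase.1 (hE h1.1)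
      exact Finset.mem_erase.2 ⟨h2.1,
        Finset.mem_insert.2 (Or.inr (Finset.mem_sdiff.2 ⟨h2.2, h1.2⟩))⟩
  have hSC₀ : SCs G₀ s₀ := ctr_SCs hAs hp₀A hSC
  -- criticality transfer
  have hcrit₀ : ∀ ζ ∈ s₀.erase v, ζ ∉ E₀ → ¬ SCs G₀ (s₀.erase ζ) := by
    intro ζ hζ hζE hScon
    have hζv : ζ ≠ v := (Finset.mem_erase.1 hζ).1
    have hζs₀ : ζ ∈ s₀ := (Finset.mem_erase.1 hζ).2
    by_cases hζz₀ : ζ = z₀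
    · have hKn : ¬ SCs G K := by
        intro hKs
        apply hζE
        rw [hE₀, hζz₀]
        exact Finset.mem_union.2 (Or.inl (by rw [if_pos hKs]; exact Finset.mem_insert_self _ _))
      apply hKn
      rw [hζz₀, hKerase] at hScon
      exact (SCs_congr hGcongrK).1 hScon
    · by_cases hζp₀ : ζ = p₀
      · have hDn : ¬ SCs G (s \ A) := by
          intro hDs
          apply hζE
          rw [hE₀, hζp₀]
          exact Finset.mem_union.2 (Or.inr (by rw [if_pos hDs]; exact Finset.mem_singleton_self _))
        apply hDn
        rw [hζp₀, hDeq] at hScon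
        exact (SCs_congr hGcongrD).1 hScon
      · have hζsA : ζ ∈ s \ A := by
          rcases Finset.mem_insert.1 hζs₀ with h | h
          · exact absurd h hζp₀
          · exact h
        have hζs : ζ ∈ s := (Finset.mem_sdiff.1 hζsA).1
        have hζA : ζ ∉ A := (Finset.mem_sdiff.1 hζsA).2
        have hζy : ζ ≠ y := fun h => hζA (h ▸ hyA)
        have hζE' : ζ ∉ E := by
          intro h
          apply hζE
          have h1 : ζ ∈ E \ A := Finset.mem_sdiff.2 ⟨h, hζA⟩
          rw [hE₀]
          refine Finset.mem_union.2 (Or.inl ?_)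
          by_cases h2 : SCs G K
          · rw [if_pos h2]; exact Finset.mem_insert.2 (Or.inr h1)
          · rw [if_neg h2]; exact h1
        refine hcrit ζ (Finset.mem_erase.2 ⟨hζv, hζs⟩) hζE' ?_
        refine ctr_lift hAs hp₀A hζs hζA hScon ?_ ?_ ?_
        · -- hEXIT : always via y → z₀
          intro a haA
          refine ⟨y, hyA, z₀, hz₀s, hz₀A, fun h => hζz₀ h.symm, ?_, hGyz₀⟩
          rcases (hmemA a).1 haA with ha | ha
          · rw [ha]; exact RT.single hp₀A hyA hGp₀y
          · rw [ha]; exact RT.refl' _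
        · -- hENTER : all entries are at p₀
          intro b hbA
          have hvm : v ∈ s₀.erase ζ := Finset.mem_erase.2 ⟨fun h => hζv h.symm, hvs₀⟩
          have hpm : p₀ ∈ s₀.erase ζ := Finset.mem_erase.2 ⟨fun h => hζp₀ h.symm, hp₀s₀⟩
          obtain ⟨u', _, hu'm, _, harc⟩ := (hScon v hvm p₀ hpm).tail_step hvp₀
          have hu'p : u' ≠ p₀ := by
            intro h
            rw [h] at harc
            exact ctr_self harc
          obtain ⟨w, hwA, hGu'w⟩ := ctr_to hu'p harc
          have hu'm' := Finset.mem_erase.1 hu'm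
          have hu'sA : u' ∈ s \ A := by
            rcases Finset.mem_insert.1 hu'm'.2 with h | h
            · exact absurd h hu'p
            · exact h
          have hu's : u' ∈ s := (Finset.mem_sdiff.1 hu'sA).1
          have hu'A : u' ∉ A := (Finset.mem_sdiff.1 hu'sA).2
          have hu'y : u' ≠ y := fun h => hu'A (h ▸ hyA)
          have hGu'p₀ : G u' p₀ := by
            rcases (hmemA w).1 hwA with hw | hw
            · rw [← hw]; exact hGu'w
            · exact absurd (hyin u' hu's hu'y (by rw [← hw]; exact hGu'w)) hu'p
          refine ⟨p₀, hp₀A, u', hu's, hu'A, hu'm'.1, hGu'p₀, ?_⟩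
          rcases (hmemA b).1 hbA with hb | hb
          · rw [hb]; exact RT.refl' _
          · rw [hb]; exact RT.single hp₀A hyA hGp₀y
        · -- hTRAV : entries are only at p₀
          intro e heA hee x hxA q hqs hqA hqζ hGxq
          have hep : e = p₀ := by
            rcases (hmemA e).1 heA with he | he
            · exact he
            · obtain ⟨u, hus, huA, _, hGue⟩ := hee
              have huy : u ≠ y := fun h => huA (h ▸ hyA)
              have h5 := hyin u hus huy (by rw [← he]; exact hGue)
              rw [h5] at huA
              exact absurd hp₀A huA
          rcases (hmemA x).1 hxA with hx | hx
          · exact ⟨x, hxA, by rw [hep, hx]; exact RT.refl' _, hGxq⟩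
          · refine ⟨y, hyA, by rw [hep]; exact RT.single hp₀A hyA hGp₀y,
              by rw [← hx]; exact hGxq⟩
  -- degree bound
  have hod := odeg_ctr (G := G) hAs hp₀A hvA
  have hid := ideg_ctr (G := G) hAs hp₀A hvA
  rw [← hG₀, ← hs₀] at hod hid
  have hNoutA : ((s.erase v).filter (fun u => G v u)) ∩ A ⊆ {p₀} := by
    intro u hu
    rcases Finset.mem_inter.1 hu with ⟨hu1, hu2⟩
    rcases (hmemA u).1 hu2 with rfl | rfl
    · exact Finset.mem_singleton_self _
    · exact absurd (hyin v hv hvy (Finset.mem_filter.1 hu1).2) hvp₀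
  have hNinA : ((s.erase v).filter (fun u => G u v)) ∩ A ⊆ {p₀} := by
    intro u hu
    rcases Finset.mem_inter.1 hu with ⟨hu1, hu2⟩
    rcases (hmemA u).1 hu2 with rfl | rfl
    · exact Finset.mem_singleton_self _
    · rcases hyout v hv (Finset.mem_filter.1 hu1).2 with h | h
      · exact absurd h.symm hyv
      · exact absurd h.symm hz₀v
  have hodge : odeg G s v ≤ odeg G₀ s₀ v := by
    have hc1 : (((s.erase v).filter (fun u => G v u)) ∩ A).card ≤ 1 := by
      calc _ ≤ ({p₀} : Finset V).card := Finset.card_le_card hNoutA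
        _ = 1 := Finset.card_singleton _
    by_cases hne : (((s.erase v).filter (fun u => G v u)) ∩ A).Nonempty
    · rw [if_pos hne] at hod
      have := Finset.card_pos.2 hne
      omega
    · rw [if_neg hne] at hod
      have h0 : (((s.erase v).filter (fun u => G v u)) ∩ A).card = 0 :=
        Finset.card_eq_zero.2 (Finset.not_nonempty_iff_eq_empty.1 hne)
      omega
  have hidge : ideg G s v ≤ ideg G₀ s₀ v := by
    have hc1 : (((s.erase v).filter (fun u => G u v)) ∩ A).card ≤ 1 := by
      calc _ ≤ ({p₀} : Finset V).card := Finset.card_le_card hNinA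
        _ = 1 := Finset.card_singleton _
    by_cases hne : (((s.erase v).filter (fun u => G u v)) ∩ A).Nonempty
    · rw [if_pos hne] at hid
      have := Finset.card_pos.2 hne
      omega
    · rw [if_neg hne] at hid
      have h0 : (((s.erase v).filter (fun u => G u v)) ∩ A).card = 0 :=
        Finset.card_eq_zero.2 (Finset.not_nonempty_iff_eq_empty.1 hne)
      omega
  -- the two exceptional graphs cannot both be strong when A carries no exception
  have hexcl : ¬ ((E ∩ A) = ∅ ∧ SCs G K ∧ SCs G (s \ A)) := by
    rintro ⟨hEA, hKs, hDs⟩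
    have hyE : y ∉ E := by
      intro h
      have : y ∈ E ∩ A := Finset.mem_inter.2 ⟨h, hyA⟩
      rw [hEA] at this
      exact Finset.notMem_empty _ this
    have hyB : y ∈ B := (hmemB y).2 (Or.inl rfl)
    have hz₀B : z₀ ∈ B := (hmemB z₀).2 (Or.inr rfl)
    have hBs : B ⊆ s := by
      intro u hu
      rcases (hmemB u).1 hu with rfl | rfl
      · exact hys
      · exact hz₀s
    have hvB : v ∉ B := by
      intro hu
      rcases (hmemB v).1 hu with h | h
      · exact hyv h.symm
      · exact hz₀v h.symm
    -- an arc z₀ → K exists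
    obtain ⟨q₀, hq₀sB, hGz₀q₀⟩ : ∃ q ∈ s \ B, G z₀ q := by
      by_contra hQ
      push_neg at hQ
      have habs : OutClosed G s B := by
        intro x hx u hu hGxu
        rcases (hmemB x).1 hx with rfl | rfl
        · rcases hyout u hu hGxu with rfl | rfl
          · exact hyB
          · exact hz₀B
        · by_contra huB
          exact hQ u (Finset.mem_sdiff.2 ⟨hu, huB⟩) hGxu
      exact hvB (habs.rt_restrict hyB (hSC y hys v hv)).1
    have hsey : s.erase y = insert z₀ (s \ B) := by
      ext u
      constructor
      · intro hu
        rcases Finset.mem_erase.1 hu with ⟨h1, h2⟩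
        by_cases h3 : u = z₀
        · exact Finset.mem_insert.2 (Or.inl h3)
        · refine Finset.mem_insert.2 (Or.inr (Finset.mem_sdiff.2 ⟨h2, ?_⟩))
          intro hB'
          rcases (hmemB u).1 hB' with h | h
          · exact h1 h
          · exact h3 h
      · intro hu
        rcases Finset.mem_insert.1 hu with rfl | h
        · exact Finset.mem_erase.2 ⟨fun h => hyz₀ h.symm, hz₀s⟩
        · rcases Finset.mem_sdiff.1 h with ⟨h1, h2⟩
          exact Finset.mem_erase.2 ⟨fun h3 => h2 (h3 ▸ hyB), h1⟩
    have hsBsub : s \ B ⊆ s.erase y := by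
      rw [hsey]; exact fun x hx => Finset.mem_insert.2 (Or.inr hx)
    have hRempty : ∀ r ∈ s \ B, ¬ G r z₀ := by
      intro r hrsB hGr
      apply hcrit y (Finset.mem_erase.2 ⟨hyv, hys⟩) hyE
      have hz₀m : z₀ ∈ s.erase y := Finset.mem_erase.2 ⟨fun h => hyz₀ h.symm, hz₀s⟩
      have hKs' : SCs G (s \ B) := hK ▸ hKs
      have reachz : ∀ b' ∈ s \ B, RT G (s.erase y) z₀ b' := by
        intro b' hb'
        refine (RT.single hz₀m (hsBsub hq₀sB) hGz₀q₀).trans' ?_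
        exact (hKs' q₀ hq₀sB b' hb').mono hsBsub
      have toz : ∀ a' ∈ s \ B, RT G (s.erase y) a' z₀ := by
        intro a' ha'
        exact RT.trans' ((hKs' a' ha' r hrsB).mono hsBsub) (RT.single (hsBsub hrsB) hz₀m hGr)
      intro a ha b hb
      rcases Finset.mem_insert.1 (hsey ▸ ha) with rfl | ha'
      · rcases Finset.mem_insert.1 (hsey ▸ hb) with rfl | hb'
        · exact RT.refl' _
        · exact reachz b hb'
      · rcases Finset.mem_insert.1 (hsey ▸ hb) with rfl | hb'
        · exact toz a ha'
        · exact ((hKs' a ha' b hb').mono hsBsub)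
    -- but SCs G (s \ A) forces an arc into z₀ from s \ B
    have hvz₀ : v ≠ z₀ := fun h => hz₀v h.symm
    obtain ⟨u, husA, huz₀, hGuz₀, _⟩ := entry_arc (hDs v hvsA z₀ hz₀sA) hvz₀
    have hus : u ∈ s := (Finset.mem_sdiff.1 husA).1
    have huA : u ∉ A := (Finset.mem_sdiff.1 husA).2
    have huy : u ≠ y := fun h => huA (h ▸ hyA)
    have huB : u ∉ B := by
      intro hB'
      rcases (hmemB u).1 hB' with h | h
      · exact huy h
      · exact huz₀ h
    exact hRempty u (Finset.mem_sdiff.2 ⟨hus, huB⟩) hGuz₀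
  -- cardinality of the exceptional set
  have hEsplit : (E \ A).card + (E ∩ A).card = E.card := Finset.card_sdiff_add_card_inter _ _
  have hE₀card : E₀.card ≤ E.card + 1 := by
    have hc1 : (if SCs G K then insert z₀ (E \ A) else E \ A).card
        ≤ (E \ A).card + (if SCs G K then 1 else 0) := by
      by_cases h : SCs G K
      · rw [if_pos h, if_pos h]
        have := Finset.card_insert_le z₀ (E \ A)
        omega
      · rw [if_neg h, if_neg h]; omega
    have hc2 : (if SCs G (s \ A) then ({p₀} : Finset V) else ∅).card
        = (if SCs G (s \ A) then 1 else 0) := by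
      by_cases h : SCs G (s \ A)
      · rw [if_pos h, if_pos h]; exact Finset.card_singleton _
      · rw [if_neg h, if_neg h]; exact Finset.card_empty
    have hc3 : E₀.card ≤ (E \ A).card + (if SCs G K then 1 else 0)
        + (if SCs G (s \ A) then 1 else 0) := by
      rw [hE₀]
      calc _ ≤ _ := Finset.card_union_le _ _
        _ ≤ _ := by rw [hc2]; omega
    by_cases hEA : (E ∩ A) = ∅
    · have h4 : ¬ (SCs G K ∧ SCs G (s \ A)) := fun h => hexcl ⟨hEA, h.1, h.2⟩
      have h5 : (E ∩ A).card = 0 := by rw [hEA]; exact Finset.card_empty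
      by_cases h6 : SCs G K
      · have h7 : ¬ SCs G (s \ A) := fun h => h4 ⟨h6, h⟩
        rw [if_pos h6] at hc3
        rw [if_neg h7] at hc3
        omega
      · rw [if_neg h6] at hc3
        by_cases h7 : SCs G (s \ A) <;> [rw [if_pos h7] at hc3; rw [if_neg h7] at hc3] <;> omega
    · have h5 : 1 ≤ (E ∩ A).card :=
        Finset.card_pos.2 (Finset.nonempty_iff_ne_empty.2 hEA)
      by_cases h6 : SCs G K <;> [rw [if_pos h6] at hc3; rw [if_neg h6] at hc3] <;>
        by_cases h7 : SCs G (s \ A) <;>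
          first
          | (rw [if_pos h7] at hc3; omega)
          | (rw [if_neg h7] at hc3; omega)
  have hdeg₀ : s₀.card + E₀.card ≤ sdeg G₀ s₀ v := by
    have hsd : sdeg G s v = odeg G s v + ideg G s v := rfl
    show s₀.card + E₀.card ≤ odeg G₀ s₀ v + ideg G₀ s₀ v
    omega
  exact IH G₀ s₀ (hcard ▸ hlt) v E₀ hvs₀ hSC₀ hE₀sub hcrit₀ hdeg₀

theorem case_small {n : ℕ} {G : V → V → Prop} {s : Finset V} {v : V} {E : Finset V}
    (IH : ∀ (G' : V → V → Prop) (s' : Finset V), s'.card < n → ∀ (v' : V) (E' : Finset V),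
      v' ∈ s' → SCs G' s' → E' ⊆ s'.erase v' →
      (∀ z ∈ s'.erase v', z ∉ E' → ¬ SCs G' (s'.erase z)) →
      s'.card + E'.card ≤ sdeg G' s' v' → False)
    (hcard : s.card = n) (hv : v ∈ s) (hSC : SCs G s) (hE : E ⊆ s.erase v)
    (hcrit : ∀ z ∈ s.erase v, z ∉ E → ¬ SCs G (s.erase z))
    (hdeg : s.card + E.card ≤ sdeg G s v)
    {z₀ : V} {Y : Finset V}
    (hz₀sv : z₀ ∈ s.erase v) (hYsub : Y ⊆ s.erase z₀) (hYne : Y.Nonempty) (hvY : v ∉ Y)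
    (hYcl : OutClosed G (s.erase z₀) Y)
    (hY1 : Y.card = 1) : False := by
  classical
  obtain ⟨y, hYy⟩ := Finset.card_eq_one.1 hY1
  have hyY : y ∈ Y := hYy ▸ Finset.mem_singleton_self y
  have hys : y ∈ s := (Finset.mem_erase.1 (hYsub hyY)).2
  have hyz₀ : y ≠ z₀ := (Finset.mem_erase.1 (hYsub hyY)).1
  have hyv : y ≠ v := fun h => hvY (h ▸ hyY)
  have hvy : v ≠ y := fun h => hyv h.symm
  have hz₀s : z₀ ∈ s := (Finset.mem_erase.1 hz₀sv).2
  have hz₀v : z₀ ≠ v := (Finset.mem_erase.1 hz₀sv).1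
  have hyout : ∀ u ∈ s, G y u → u = y ∨ u = z₀ := by
    intro u hu h
    by_cases huz : u = z₀
    · exact Or.inr huz
    · have : u ∈ Y := hYcl hyY (Finset.mem_erase.2 ⟨huz, hu⟩) h
      rw [hYy] at this
      exact Or.inl (Finset.mem_singleton.1 this)
  have hGyz₀ : G y z₀ := by
    obtain ⟨x, hxY, hGx⟩ := exit_to hYcl (hSC y hys v hv) hyY hvY
    rw [hYy] at hxY
    rw [← Finset.mem_singleton.1 hxY]
    exact hGx
  by_cases hβ : G z₀ y
  · exact case2a IH hcard hv hSC hE hcrit hdeg hys hz₀s hyz₀ hyv hz₀v hGyz₀ hyout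
      (fun ζ _ => Or.inl hβ)
  · -- find the unique entry point
    obtain ⟨p₁, hp₁s, hp₁y, hGp₁y, _⟩ := entry_arc (hSC v hv y hys) hvy
    have hp₁z₀ : p₁ ≠ z₀ := fun h => hβ (by rw [← h]; exact hGp₁y)
    have hp₁B : p₁ ∉ ({y, z₀} : Finset V) := by
      intro h
      rcases Finset.mem_insert.1 h with h | h
      · exact hp₁y h
      · exact hp₁z₀ (Finset.mem_singleton.1 h)
    by_cases hp2 : ∃ p', (p' ∈ s ∧ p' ∉ ({y, z₀} : Finset V)) ∧ p' ≠ p₁ ∧ G p' y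
    · refine case2a IH hcard hv hSC hE hcrit hdeg hys hz₀s hyz₀ hyv hz₀v hGyz₀ hyout ?_
      intro ζ _
      by_cases hζp₁ : p₁ = ζ
      · obtain ⟨p', hp'm, hp'p₁, hGp'⟩ := hp2
        exact Or.inr ⟨p', hp'm, fun h => hp'p₁ (h.trans hζp₁.symm), hGp'⟩
      · exact Or.inr ⟨p₁, ⟨hp₁s, hp₁B⟩, hζp₁, hGp₁y⟩
    · have huniq : ∀ u ∈ s, u ≠ y → G u y → u = p₁ := by
        intro u hus huy hGu
        by_cases hu1 : u = z₀
        · exact absurd (by rw [← hu1]; exact hGu) hβ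
        · by_cases hu2 : u = p₁
          · exact hu2
          · exact absurd ⟨u, ⟨hus, by
              intro h
              rcases Finset.mem_insert.1 h with h | h
              · exact huy h
              · exact hu1 (Finset.mem_singleton.1 h)⟩, hu2, hGu⟩ hp2
      by_cases hp₁v : p₁ = v
      · refine case2a IH hcard hv hSC hE hcrit hdeg hys hz₀s hyz₀ hyv hz₀v hGyz₀ hyout ?_
        intro ζ hζv
        exact Or.inr ⟨p₁, ⟨hp₁s, hp₁B⟩, fun h => hζv (by rw [← h, hp₁v]), hGp₁y⟩
      · exact case2b IH hcard hv hSC hE hcrit hdeg hys hz₀s hp₁s hyz₀ hyv hz₀v hp₁v hp₁y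
          hp₁z₀ hGyz₀ hGp₁y hyout huniq

theorem mainZ_aux {n : ℕ} {G : V → V → Prop} {s : Finset V} {v : V} {E : Finset V}
    (IH : ∀ (G' : V → V → Prop) (s' : Finset V), s'.card < n → ∀ (v' : V) (E' : Finset V),
      v' ∈ s' → SCs G' s' → E' ⊆ s'.erase v' →
      (∀ z ∈ s'.erase v', z ∉ E' → ¬ SCs G' (s'.erase z)) →
      s'.card + E'.card ≤ sdeg G' s' v' → False)
    (hcard : s.card = n) (hv : v ∈ s) (hSC : SCs G s) (hE : E ⊆ s.erase v)
    (hcrit : ∀ z ∈ s.erase v, z ∉ E → ¬ SCs G (s.erase z))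
    (hdeg : s.card + E.card ≤ sdeg G s v)
    {z₀ : V} {Y : Finset V} (hgood : good G s v z₀ Y)
    (hmin : ∀ z' Y', good G s v z' Y' ∨ good (flip G) s v z' Y' → Y.card ≤ Y'.card) :
    False := by
  obtain ⟨hz₀sv, hYsub, hYne, hvY, hYsc, hYcl⟩ := hgood
  by_cases h2 : 2 ≤ Y.card
  · exact case_large IH hcard hv hSC hE hcrit hdeg hz₀sv hYsub hYne hvY hYsc hYcl hmin h2
  · have h1 : Y.card = 1 := by
      have := Finset.card_pos.2 hYne
      omega
    exact case_small IH hcard hv hSC hE hcrit hdeg hz₀sv hYsub hYne hvY hYcl h1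

theorem odeg_flip {G : V → V → Prop} {s : Finset V} {v : V} :
    odeg (flip G) s v = ideg G s v := rfl

theorem ideg_flip {G : V → V → Prop} {s : Finset V} {v : V} :
    ideg (flip G) s v = odeg G s v := rfl

theorem sdeg_flip {G : V → V → Prop} {s : Finset V} {v : V} :
    sdeg (flip G) s v = sdeg G s v := by
  show odeg (flip G) s v + ideg (flip G) s v = odeg G s v + ideg G s v
  rw [odeg_flip, ideg_flip, Nat.add_comm]

theorem mainZ : ∀ (n : ℕ) (G : V → V → Prop) (s : Finset V) (v : V) (E : Finset V),
    s.card = n → v ∈ s → SCs G s → E ⊆ s.erase v →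
    (∀ z ∈ s.erase v, z ∉ E → ¬ SCs G (s.erase z)) →
    s.card + E.card ≤ sdeg G s v → False := by
  intro n
  induction n using Nat.strong_induction_on with
  | _ n IH =>
    intro G s v E hcard hv hSC hE hcrit hdeg
    have IH' : ∀ (G' : V → V → Prop) (s' : Finset V), s'.card < n → ∀ (v' : V) (E' : Finset V),
        v' ∈ s' → SCs G' s' → E' ⊆ s'.erase v' →
        (∀ z ∈ s'.erase v', z ∉ E' → ¬ SCs G' (s'.erase z)) →
        s'.card + E'.card ≤ sdeg G' s' v' → False := by
      intro G' s' hlt v' E' h1 h2 h3 h4 h5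
      exact IH s'.card hlt G' s' v' E' rfl h1 h2 h3 h4 h5
    classical
    have ho := odeg_le G hv
    have hi := ideg_le G hv
    have hsd : sdeg G s v = odeg G s v + ideg G s v := rfl
    have hs1 : 1 ≤ s.card := Finset.card_pos.2 ⟨v, hv⟩
    have hEn : E.card + 2 ≤ s.card := by omega
    have hsdiffne : ((s.erase v) \ E).Nonempty := by
      apply Finset.card_pos.1
      have h1 : (s.erase v).card = s.card - 1 := Finset.card_erase_of_mem hv
      have h2 : ((s.erase v) \ E).card = (s.erase v).card - E.card := Finset.card_sdiff_of_subset hE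
      omega
    obtain ⟨z, hz⟩ := hsdiffne
    have hzsv : z ∈ s.erase v := (Finset.mem_sdiff.1 hz).1
    have hzE : z ∉ E := (Finset.mem_sdiff.1 hz).2
    have hns := hcrit z hzsv hzE
    have hvsz : v ∈ s.erase z :=
      Finset.mem_erase.2 ⟨fun h => (Finset.mem_erase.1 hzsv).1 h.symm, hv⟩
    obtain ⟨Y, hYsub, hYne, hvY, hYsc, hYclor⟩ := exists_closed_avoiding G (s.erase z) v hvsz hns
    have hex : ∃ m : ℕ, ∃ z' : V, ∃ Y' : Finset V,
        (good G s v z' Y' ∨ good (flip G) s v z' Y') ∧ Y'.card = m := by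
      rcases hYclor with hcl | hcl
      · exact ⟨Y.card, z, Y, Or.inl ⟨hzsv, hYsub, hYne, hvY, hYsc, hcl⟩, rfl⟩
      · exact ⟨Y.card, z, Y, Or.inr ⟨hzsv, hYsub, hYne, hvY, SCs_flip hYsc,
          outClosed_flip.2 hcl⟩, rfl⟩
    obtain ⟨z₀, Y₀, hg, hYcard⟩ := Nat.find_spec hex
    have hminm : ∀ z' Y', (good G s v z' Y' ∨ good (flip G) s v z' Y') → Y₀.card ≤ Y'.card := by
      intro z' Y' h
      rw [hYcard]
      exact Nat.find_min' hex ⟨z', Y', h, rfl⟩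
    rcases hg with hg | hg
    · exact mainZ_aux IH' hcard hv hSC hE hcrit hdeg hg hminm
    · refine mainZ_aux (G := flip G) IH' hcard hv (SCs_flip hSC) hE
        (fun z' hz' hz'E h => hcrit z' hz' hz'E (SCs_flip_iff.1 h))
        (by rw [sdeg_flip]; exact hdeg) hg ?_
      intro z' Y' h
      refine hminm z' Y' ?_
      rcases h with h | h
      · exact Or.inr h
      · exact Or.inl h

section Assembly

theorem SC_to_SCs [Fintype V] {G : V → V → Prop} (h : StronglyConnected G) :
    SCs G (Finset.univ : Finset V) := by
  intro a _ b _
  have h2 := h a b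
  induction h2 with
  | refl => exact ReflTransGen.refl
  | tail _ hbc ih =>
      exact ReflTransGen.tail (ih (Finset.mem_univ _)) ⟨Finset.mem_univ _, Finset.mem_univ _, hbc⟩

theorem SCs_to_DelVert [Fintype V] {G : V → V → Prop} {z : V}
    (h : SCs G ((Finset.univ : Finset V).erase z)) : StronglyConnected (DelVert G z) := by
  rintro ⟨a, ha⟩ ⟨b, hb⟩
  have h2 : RT G (Finset.univ.erase z) a b :=
    h a (Finset.mem_erase.2 ⟨ha, Finset.mem_univ _⟩)
      b (Finset.mem_erase.2 ⟨hb, Finset.mem_univ _⟩)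
  clear h
  revert hb
  induction h2 with
  | refl => intro hb; exact ReflTransGen.refl
  | @tail b' c _ harc ih =>
      intro hc
      have hb' : b' ≠ z := (Finset.mem_erase.1 harc.1).1
      exact (ih hb').tail (harc.2.2 : G b' c)

theorem deg_bound [Fintype V] {G : V → V → Prop} (hSC : StronglyConnected G)
    (hcrit : ∀ z : V, ¬ StronglyConnected (DelVert G z)) (v : V) :
    sdeg G Finset.univ v + 1 ≤ (Finset.univ : Finset V).card := by
  by_contra hcon
  push_neg at hcon
  refine mainZ (Finset.univ : Finset V).card G Finset.univ v ∅ rfl (Finset.mem_univ v)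
    (SC_to_SCs hSC) (Finset.empty_subset _) ?_ ?_
  · intro z _ _ hs
    exact hcrit z (SCs_to_DelVert hs)
  · rw [Finset.card_empty]
    omega

theorem edgeCount_eq [Fintype V] (G : V → V → Prop) (hirr : Irreflexive G) :
    2 * edgeCount G = ∑ v : V, sdeg G Finset.univ v := by
  classical
  have h1 : edgeCount G = ((Finset.univ : Finset (V × V)).filter (fun p => G p.1 p.2)).card := by
    rw [edgeCount]
    rw [show {p : V × V | G p.1 p.2} =
      ↑((Finset.univ : Finset (V × V)).filter (fun p => G p.1 p.2)) by
        ext p; simp]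
    exact Set.ncard_coe_finset _
  have hfst : ((Finset.univ : Finset (V × V)).filter (fun p => G p.1 p.2)).card
      = ∑ v : V, odeg G Finset.univ v := by
    rw [Finset.card_eq_sum_card_fiberwise
      (f := fun p : V × V => p.1) (t := Finset.univ) (fun p _ => Finset.mem_univ _)]
    refine Finset.sum_congr rfl ?_
    intro v _
    rw [odeg]
    apply Finset.card_bij (i := fun p _ => p.2)
    · intro p hp
      rw [Finset.mem_filter] at hp
      obtain ⟨hp1, hfv⟩ := hp
      rw [Finset.mem_filter] at hp1
      have hG := hp1.2
      rw [hfv] at hG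
      refine Finset.mem_filter.2 ⟨Finset.mem_erase.2 ⟨?_, Finset.mem_univ _⟩, hG⟩
      intro h
      rw [h] at hG
      exact hirr v hG
    · intro p hp q hq hpq
      rw [Finset.mem_filter] at hp hq
      exact Prod.ext (hp.2.trans hq.2.symm) hpq
    · intro u hu
      rw [Finset.mem_filter] at hu
      exact ⟨(v, u), Finset.mem_filter.2 ⟨Finset.mem_filter.2 ⟨Finset.mem_univ _, hu.2⟩, rfl⟩,
        rfl⟩
  have hsnd : ((Finset.univ : Finset (V × V)).filter (fun p => G p.1 p.2)).card
      = ∑ v : V, ideg G Finset.univ v := by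
    rw [Finset.card_eq_sum_card_fiberwise
      (f := fun p : V × V => p.2) (t := Finset.univ) (fun p _ => Finset.mem_univ _)]
    refine Finset.sum_congr rfl ?_
    intro v _
    rw [ideg]
    apply Finset.card_bij (i := fun p _ => p.1)
    · intro p hp
      rw [Finset.mem_filter] at hp
      obtain ⟨hp1, hfv⟩ := hp
      rw [Finset.mem_filter] at hp1
      have hG := hp1.2
      rw [hfv] at hG
      refine Finset.mem_filter.2 ⟨Finset.mem_erase.2 ⟨?_, Finset.mem_univ _⟩, hG⟩
      intro h
      rw [h] at hG
      exact hirr v hG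
    · intro p hp q hq hpq
      rw [Finset.mem_filter] at hp hq
      exact Prod.ext hpq (hp.2.trans hq.2.symm)
    · intro u hu
      rw [Finset.mem_filter] at hu
      exact ⟨(u, v), Finset.mem_filter.2 ⟨Finset.mem_filter.2 ⟨Finset.mem_univ _, hu.2⟩, rfl⟩,
        rfl⟩
  have : ∑ v : V, sdeg G Finset.univ v
      = ∑ v : V, odeg G Finset.univ v + ∑ v : V, ideg G Finset.univ v := by
    rw [← Finset.sum_add_distrib]
    rfl
  omega

end Assembly


end VC

theorem stmt1 {V : Type*} [Fintype V] (G : V → V → Prop) (n : ℕ)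
    (hn : Fintype.card V = n) (h2 : 2 ≤ n) (hirr : Irreflexive G)
    (hcrit : Critical G) :
    edgeCount G ≤ n * (n - 1) / 2 := by
  classical
  have hcardn : (Finset.univ : Finset V).card = n := hn
  have hdeg : ∀ v : V, VC.sdeg G Finset.univ v ≤ n - 1 := by
    intro v
    have := VC.deg_bound hcrit.1 hcrit.2 v
    omega
  have hsum : ∑ v : V, VC.sdeg G Finset.univ v ≤ n * (n - 1) := by
    calc ∑ v : V, VC.sdeg G Finset.univ v ≤ ∑ _v : V, (n - 1) :=
          Finset.sum_le_sum (fun v _ => hdeg v)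
      _ = n * (n - 1) := by rw [Finset.sum_const, hcardn, smul_eq_mul]
  have h2e : 2 * edgeCount G ≤ n * (n - 1) := by
    rw [VC.edgeCount_eq G hirr]
    exact hsum
  rw [Nat.le_div_iff_mul_le (by norm_num : 0 < 2)]
  omega
end

section
/- In a vertex-critical strongly connected simple digraph on n vertices, every vertex has degree strictly less than n. -/
open Relation


universe u

lemma strong_del_of_dominated {V : Type u} (G : V → V → Prop) (hirr : Irreflexive G)
    (hstrong : StronglyConnected G) {v w : V} (hvw : G v w) (hwv : G w v)
    (hout : ∀ b, G w b → b ≠ v → G v b) (hin : ∀ c, G c w → c ≠ v → G c v) :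
    StronglyConnected (DelVert G w) := by
  have hvne : v ≠ w := fun h => hirr v (by rw [h] at hvw ⊢; exact hvw)
  have aux : ∀ {a b : V}, ReflTransGen G a b → ∀ ha : a ≠ w,
      (b = w → ReflTransGen (DelVert G w) ⟨a, ha⟩ ⟨v, hvne⟩) ∧
      (∀ hb : b ≠ w, ReflTransGen (DelVert G w) ⟨a, ha⟩ ⟨b, hb⟩) := by
    intro a b hab
    induction hab with
    | refl => exact fun ha => ⟨fun h => absurd h ha, fun hb => ReflTransGen.refl⟩
    | @tail p q hap hpq ih =>
      intro ha
      constructor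
      · intro hbq
        rw [hbq] at hpq
        have hpw : p ≠ w := fun h => hirr w (by rw [h] at hpq; exact hpq)
        have h1 := (ih ha).2 hpw
        by_cases hpv : p = v
        · subst hpv; exact h1
        · exact h1.tail (show G p v from hin p hpq hpv)
      · intro hb
        by_cases hpw : p = w
        · subst hpw
          have h1 := (ih ha).1 rfl
          by_cases hbv : q = v
          · subst hbv; exact h1
          · exact h1.tail (show G v q from hout q hpq hbv)
        · exact ((ih ha).2 hpw).tail hpq
  intro a b
  exact (aux (hstrong a.1 b.1) a.2).2 b.2

lemma contract_strong {V : Type u} (G : V → V → Prop) (hstrong : StronglyConnected G)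
    (A : Set V) {v : V} (hv : v ∈ A) :
    StronglyConnected (Contract G A) := by
  classical
  set π : V → Option {x : V // x ∉ A} := fun x => if h : x ∈ A then none else some ⟨x, h⟩ with hπ
  have hstep : ∀ a b : V, G a b → ReflTransGen (Contract G A) (π a) (π b) := by
    intro a b hab
    by_cases haA : a ∈ A
    · by_cases hbA : b ∈ A
      · have h1 : π a = none := dif_pos haA
        have h2 : π b = none := dif_pos hbA
        rw [h1, h2]
      · refine ReflTransGen.single ?_
        have h1 : π a = none := dif_pos haA
        have h2 : π b = some ⟨b, hbA⟩ := dif_neg hbA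
        rw [h1, h2]
        exact ⟨a, haA, hab⟩
    · by_cases hbA : b ∈ A
      · refine ReflTransGen.single ?_
        have h1 : π a = some ⟨a, haA⟩ := dif_neg haA
        have h2 : π b = none := dif_pos hbA
        rw [h1, h2]
        exact ⟨b, hbA, hab⟩
      · refine ReflTransGen.single ?_
        have h1 : π a = some ⟨a, haA⟩ := dif_neg haA
        have h2 : π b = some ⟨b, hbA⟩ := dif_neg hbA
        rw [h1, h2]
        exact hab
  have hrep : ∀ p : Option {x : V // x ∉ A},
      π (Option.elim p v (fun a => a.1)) = p := by
    intro p
    cases p with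
    | none => exact dif_pos hv
    | some a => exact dif_neg a.2
  intro p q
  have h : ReflTransGen (Contract G A) (π (Option.elim p v (fun a => a.1))) (π (Option.elim q v (fun a => a.1))) := ReflTransGen.lift' π hstep _ _
    (hstrong (Option.elim p v (fun a => a.1)) (Option.elim q v (fun a => a.1)))
  rwa [hrep, hrep] at h

lemma lift_del {V : Type u} (G : V → V → Prop) {v w : V} (hvw : G v w) (hwv : G w v)
    {z : V} (hz : z ∉ ({v, w} : Set V))
    (h : StronglyConnected (DelVert (Contract G ({v, w} : Set V)) (some ⟨z, hz⟩))) :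
    StronglyConnected (DelVert G z) := by
  classical
  set A : Set V := {v, w} with hA
  have hvA : v ∈ A := Or.inl rfl
  have hwA : w ∈ A := Or.inr rfl
  have hvz : v ≠ z := fun he => hz (he ▸ hvA)
  have hwz : w ≠ z := fun he => hz (he ▸ hwA)
  set z' : Option {x : V // x ∉ A} := some ⟨z, hz⟩ with hz'
  have hval : ∀ y : {y : Option {x : V // x ∉ A} // y ≠ z'},
      Option.elim y.1 v (fun u => u.1) ≠ z := by
    intro y
    cases hy : y.1 with
    | none => exact hvz
    | some u =>
      intro he
      exact y.2 (by rw [hy]; exact congrArg some (Subtype.ext he))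
  set g : {y : Option {x : V // x ∉ A} // y ≠ z'} → {x : V // x ≠ z} :=
    fun y => ⟨Option.elim y.1 v (fun u => u.1), hval y⟩ with hg
  have huz : ∀ (u : {x : V // x ∉ A}), some u ≠ z' → u.1 ≠ z := by
    intro u hu he
    exact hu (congrArg some (Subtype.ext he))
  have hstep : ∀ p q, DelVert (Contract G A) z' p q →
      ReflTransGen (DelVert G z) (g p) (g q) := by
    rintro ⟨po, hpo⟩ ⟨qo, hqo⟩ hpq
    cases po with
    | none =>
      cases qo with
      | none => exact absurd hpq id
      | some u =>
        obtain ⟨x, hxA, hxu⟩ := hpq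
        rcases hxA with hxv | hxw
        · rw [hxv] at hxu
          exact ReflTransGen.single (show G v u.1 from hxu)
        · rw [Set.mem_singleton_iff] at hxw
          rw [hxw] at hxu
          exact (ReflTransGen.single (show DelVert G z ⟨v, hvz⟩ ⟨w, hwz⟩ from hvw)).tail
            (show G w u.1 from hxu)
    | some u =>
      cases qo with
      | none =>
        obtain ⟨x, hxA, hxu⟩ := hpq
        rcases hxA with hxv | hxw
        · rw [hxv] at hxu
          exact ReflTransGen.single (show G u.1 v from hxu)
        · rw [Set.mem_singleton_iff] at hxw
          rw [hxw] at hxu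
          exact (ReflTransGen.single
            (show DelVert G z ⟨u.1, huz u hpo⟩ ⟨w, hwz⟩ from hxu)).tail
            (show G w v from hwv)
      | some u' =>
        exact ReflTransGen.single (show G u.1 u'.1 from hpq)
  have hnode : ∀ a : {x : V // x ≠ z}, ∃ p : {y : Option {x : V // x ∉ A} // y ≠ z'},
      ReflTransGen (DelVert G z) a (g p) ∧ ReflTransGen (DelVert G z) (g p) a := by
    intro a
    by_cases haA : a.1 ∈ A
    · refine ⟨⟨none, fun hne => Option.some_ne_none _ (hne.trans hz').symm⟩, ?_, ?_⟩
      · rcases haA with hav | haw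
        · have he : a = ⟨v, hvz⟩ := Subtype.ext hav
          rw [he]
          exact ReflTransGen.refl
        · rw [Set.mem_singleton_iff] at haw
          have he : a = ⟨w, hwz⟩ := Subtype.ext haw
          rw [he]
          exact ReflTransGen.single (show G w v from hwv)
      · rcases haA with hav | haw
        · have he : a = ⟨v, hvz⟩ := Subtype.ext hav
          rw [he]
          exact ReflTransGen.refl
        · rw [Set.mem_singleton_iff] at haw
          have he : a = ⟨w, hwz⟩ := Subtype.ext haw
          rw [he]
          exact ReflTransGen.single (show G v w from hvw)
    · refine ⟨⟨some ⟨a.1, haA⟩, fun hne => a.2 (congrArg Subtype.val (Option.some.inj hne))⟩, ?_, ?_⟩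
      · have he : g ⟨some ⟨a.1, haA⟩, fun hne => a.2 (congrArg Subtype.val (Option.some.inj hne))⟩ = a :=
          Subtype.ext rfl
        rw [he]
      · have he : g ⟨some ⟨a.1, haA⟩, fun hne => a.2 (congrArg Subtype.val (Option.some.inj hne))⟩ = a :=
          Subtype.ext rfl
        rw [he]
  intro a b
  obtain ⟨pa, ha1, -⟩ := hnode a
  obtain ⟨pb, -, hb2⟩ := hnode b
  exact ha1.trans ((ReflTransGen.lift' g hstep _ _ (h pa pb)).trans hb2)

lemma keyL (n : ℕ) : ∀ {V : Type u} [Fintype V] (G : V → V → Prop),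
    Irreflexive G → StronglyConnected G → ∀ v : V, Fintype.card V = n →
    n ≤ deg G v → ∃ z : V, z ≠ v ∧ StronglyConnected (DelVert G z) := by
  induction n using Nat.strong_induction_on with
  | _ n ih =>
  intro V _ G hirr hstrong v hcard hdeg
  classical
  have hpos : 0 < n := hcard ▸ Fintype.card_pos_iff.mpr ⟨v⟩
  set Np : Set V := {u | G v u} with hNp
  set Nm : Set V := {u | G u v} with hNm
  have hdeg' : n ≤ Np.ncard + Nm.ncard := hdeg
  have hsubp : Np ⊆ {u | u ≠ v} := fun u hu he => hirr v (by rw [he] at hu; exact hu)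
  have hsubm : Nm ⊆ {u | u ≠ v} := fun u hu he => hirr v (by rw [he] at hu; exact hu)
  have hcompl : ({u : V | u ≠ v}).ncard = n - 1 := by
    have h1 : ({v} : Set V).ncard + ({v} : Set V)ᶜ.ncard = Nat.card V :=
      Set.ncard_add_ncard_compl _
    rw [Set.ncard_singleton, Nat.card_eq_fintype_card, hcard] at h1
    have h2 : ({v} : Set V)ᶜ = {u : V | u ≠ v} := by ext u; simp
    rw [h2] at h1
    omega
  have hdigon : (Np ∩ Nm).Nonempty := by
    by_contra hemp
    rw [Set.not_nonempty_iff_eq_empty] at hemp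
    have h1 := Set.ncard_union_add_ncard_inter Np Nm
    rw [hemp, Set.ncard_empty, add_zero] at h1
    have h2 : (Np ∪ Nm).ncard ≤ n - 1 := by
      rw [← hcompl]
      exact Set.ncard_le_ncard (Set.union_subset hsubp hsubm)
    omega
  obtain ⟨w, hvw, hwv⟩ := hdigon
  have hvw : G v w := hvw
  have hwv : G w v := hwv
  have hwv' : w ≠ v := fun h => hirr v (by rw [h] at hvw; exact hvw)
  have hvwne : v ≠ w := fun h => hwv' h.symm
  by_cases hdom : (∀ b, G w b → b ≠ v → G v b) ∧ (∀ c, G c w → c ≠ v → G c v)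
  · exact ⟨w, hwv', strong_del_of_dominated G hirr hstrong hvw hwv hdom.1 hdom.2⟩
  · have hu : ∃ u, u ∉ ({v, w} : Set V) ∧ ((G w u ∧ ¬ G v u) ∨ (G u w ∧ ¬ G u v)) := by
      rw [not_and_or] at hdom
      rcases hdom with h | h
      · push_neg at h
        obtain ⟨b, hwb, hbv, hnvb⟩ := h
        refine ⟨b, ?_, Or.inl ⟨hwb, hnvb⟩⟩
        intro h1
        rcases h1 with h1 | h1
        · exact hbv h1
        · rw [Set.mem_singleton_iff] at h1; rw [h1] at hwb; exact hirr w hwb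
      · push_neg at h
        obtain ⟨c, hcw, hcv, hncv⟩ := h
        refine ⟨c, ?_, Or.inr ⟨hcw, hncv⟩⟩
        intro h1
        rcases h1 with h1 | h1
        · exact hcv h1
        · rw [Set.mem_singleton_iff] at h1; rw [h1] at hcw; exact hirr w hcw
    obtain ⟨u, huA, hucase⟩ := hu
    set A : Set V := {v, w} with hA
    have hvA : v ∈ A := Or.inl rfl
    have hwA : w ∈ A := Or.inr rfl
    have hvu : v ≠ u := fun h => huA (h ▸ hvA)
    have hwu : w ≠ u := fun h => huA (h ▸ hwA)
    have hcardA : Fintype.card {x : V // x ∈ A} = 2 := by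
      rw [← Nat.card_eq_fintype_card]
      rw [show Nat.card {x : V // x ∈ A} = A.ncard from Nat.card_coe_set_eq A]
      exact Set.ncard_pair hvwne
    have hcardS : Fintype.card {x : V // x ∉ A} = n - 2 := by
      have h := Fintype.card_subtype_compl (· ∈ A)
      rw [hcard, hcardA] at h
      exact h
    have h3n : 3 ≤ n := by
      have hset : ({v, w, u} : Finset V).card = 3 :=
        Finset.card_eq_three.mpr ⟨v, w, u, hvwne, hvu, hwu, rfl⟩
      have hle := Finset.card_le_univ ({v, w, u} : Finset V)
      rw [hset] at hle
      rw [hcard] at hle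
      exact hle
    have hcardO : Fintype.card (Option {x : V // x ∉ A}) = n - 1 := by
      rw [Fintype.card_option, hcardS]
      omega
    set G' := Contract G A with hG'
    have hirr' : Irreflexive G' := by
      intro p hp
      cases p with
      | none => exact hp
      | some u' => exact hirr u'.1 hp
    have hstrong' : StronglyConnected G' := contract_strong G hstrong A hvA
    set π : V → Option {x : V // x ∉ A} := fun x => if h : x ∈ A then none else some ⟨x, h⟩ with hπ
    have hmemNp : w ∈ Np := hvw
    have hmemNm : w ∈ Nm := hwv
    have hinj : ∀ s : Set V, (∀ x ∈ s, x ∉ A) → Set.InjOn π s := by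
      intro s hs x hx y hy hxy
      simp only [hπ] at hxy
      rw [dif_neg (hs x hx), dif_neg (hs y hy)] at hxy
      exact congrArg Subtype.val (Option.some.inj hxy)
    have hdegO : n - 1 ≤ deg G' none := by
      have hdegeq : deg G' none = {q | G' none q}.ncard + {q | G' q none}.ncard := rfl
      rcases hucase with ⟨hu1, hu2⟩ | ⟨hu1, hu2⟩
      · -- extra out-neighbor
        have e1 : (Np \ {w}).ncard + 1 = Np.ncard := Set.ncard_diff_singleton_add_one hmemNp
        have hune : u ∉ Np \ {w} := fun hx => hu2 hx.1
        have e2 : (insert u (Np \ {w})).ncard = (Np \ {w}).ncard + 1 :=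
          Set.ncard_insert_of_notMem hune
        have hmain : ∀ x ∈ insert u (Np \ {w}), x ∉ A ∧ (∃ y ∈ A, G y x) := by
          intro x hx
          rw [Set.mem_insert_iff] at hx
          rcases hx with rfl | ⟨hxNp, hxw⟩
          · exact ⟨huA, w, hwA, hu1⟩
          · rw [Set.mem_singleton_iff] at hxw
            have hxv : x ≠ v := fun h => hirr v (by rw [h] at hxNp; exact hxNp)
            refine ⟨?_, v, hvA, hxNp⟩
            intro h1
            rcases h1 with h1 | h1
            · exact hxv h1
            · rw [Set.mem_singleton_iff] at h1; exact hxw h1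
        have hle1 : (insert u (Np \ {w})).ncard ≤ {q | G' none q}.ncard := by
          refine Set.ncard_le_ncard_of_injOn π ?_ (hinj _ (fun x hx => (hmain x hx).1)) ?_
          · intro x hx
            obtain ⟨hxA, y, hyA, hyx⟩ := hmain x hx
            have hπx : π x = some ⟨x, hxA⟩ := dif_neg hxA
            rw [Set.mem_setOf_eq, hπx]
            exact ⟨y, hyA, hyx⟩
          · exact Set.toFinite _
        have hmain2 : ∀ x ∈ Nm \ {w}, x ∉ A ∧ (∃ y ∈ A, G x y) := by
          intro x hx
          obtain ⟨hxNm, hxw⟩ := hx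
          rw [Set.mem_singleton_iff] at hxw
          have hxv : x ≠ v := fun h => hirr v (by rw [h] at hxNm; exact hxNm)
          refine ⟨?_, v, hvA, hxNm⟩
          intro h1
          rcases h1 with h1 | h1
          · exact hxv h1
          · rw [Set.mem_singleton_iff] at h1; exact hxw h1
        have e3 : (Nm \ {w}).ncard + 1 = Nm.ncard := Set.ncard_diff_singleton_add_one hmemNm
        have hle2 : (Nm \ {w}).ncard ≤ {q | G' q none}.ncard := by
          refine Set.ncard_le_ncard_of_injOn π ?_ (hinj _ (fun x hx => (hmain2 x hx).1)) ?_
          · intro x hx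
            obtain ⟨hxA, y, hyA, hxy⟩ := hmain2 x hx
            have hπx : π x = some ⟨x, hxA⟩ := dif_neg hxA
            rw [Set.mem_setOf_eq, hπx]
            exact ⟨y, hyA, hxy⟩
          · exact Set.toFinite _
        omega
      · -- extra in-neighbor
        have e1 : (Nm \ {w}).ncard + 1 = Nm.ncard := Set.ncard_diff_singleton_add_one hmemNm
        have hune : u ∉ Nm \ {w} := fun hx => hu2 hx.1
        have e2 : (insert u (Nm \ {w})).ncard = (Nm \ {w}).ncard + 1 :=
          Set.ncard_insert_of_notMem hune
        have hmain : ∀ x ∈ insert u (Nm \ {w}), x ∉ A ∧ (∃ y ∈ A, G x y) := by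
          intro x hx
          rw [Set.mem_insert_iff] at hx
          rcases hx with rfl | ⟨hxNm, hxw⟩
          · exact ⟨huA, w, hwA, hu1⟩
          · rw [Set.mem_singleton_iff] at hxw
            have hxv : x ≠ v := fun h => hirr v (by rw [h] at hxNm; exact hxNm)
            refine ⟨?_, v, hvA, hxNm⟩
            intro h1
            rcases h1 with h1 | h1
            · exact hxv h1
            · rw [Set.mem_singleton_iff] at h1; exact hxw h1
        have hle1 : (insert u (Nm \ {w})).ncard ≤ {q | G' q none}.ncard := by
          refine Set.ncard_le_ncard_of_injOn π ?_ (hinj _ (fun x hx => (hmain x hx).1)) ?_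
          · intro x hx
            obtain ⟨hxA, y, hyA, hxy⟩ := hmain x hx
            have hπx : π x = some ⟨x, hxA⟩ := dif_neg hxA
            rw [Set.mem_setOf_eq, hπx]
            exact ⟨y, hyA, hxy⟩
          · exact Set.toFinite _
        have hmain2 : ∀ x ∈ Np \ {w}, x ∉ A ∧ (∃ y ∈ A, G y x) := by
          intro x hx
          obtain ⟨hxNp, hxw⟩ := hx
          rw [Set.mem_singleton_iff] at hxw
          have hxv : x ≠ v := fun h => hirr v (by rw [h] at hxNp; exact hxNp)
          refine ⟨?_, v, hvA, hxNp⟩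
          intro h1
          rcases h1 with h1 | h1
          · exact hxv h1
          · rw [Set.mem_singleton_iff] at h1; exact hxw h1
        have e3 : (Np \ {w}).ncard + 1 = Np.ncard := Set.ncard_diff_singleton_add_one hmemNp
        have hle2 : (Np \ {w}).ncard ≤ {q | G' none q}.ncard := by
          refine Set.ncard_le_ncard_of_injOn π ?_ (hinj _ (fun x hx => (hmain2 x hx).1)) ?_
          · intro x hx
            obtain ⟨hxA, y, hyA, hyx⟩ := hmain2 x hx
            have hπx : π x = some ⟨x, hxA⟩ := dif_neg hxA
            rw [Set.mem_setOf_eq, hπx]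
            exact ⟨y, hyA, hyx⟩
          · exact Set.toFinite _
        omega
    obtain ⟨z', hz'ne, hz'strong⟩ := ih (n - 1) (by omega) G' hirr' hstrong' none hcardO hdegO
    cases z' with
    | none => exact absurd rfl hz'ne
    | some zs =>
      have hz : zs.1 ∉ A := zs.2
      refine ⟨zs.1, fun h => hz (h ▸ hvA), ?_⟩
      exact lift_del G hvw hwv hz hz'strong

theorem stmt2 {V : Type*} [Fintype V] (G : V → V → Prop)
    (hirr : Irreflexive G) (hcrit : Critical G) (v : V) :
    deg G v < Fintype.card V := by
  by_contra hlt
  push_neg at hlt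
  obtain ⟨z, -, hstr⟩ := keyL (Fintype.card V) G hirr hcrit.1 v rfl hlt
  exact hcrit.2 z hstr
end

section
/- Let D be a vertex-critical strongly connected simple digraph on n vertices, let C be a chordless directed cycle in D with k = |V(C)| vertices, V(C) ≠ V(D), and suppose D − V(C) is strongly connected. Then the sum of degrees of the vertices of C satisfies Σ_{v ∈ V(C)} d(v) ≤ (n−1)k − n + 4. -/
open Relation

set_option linter.unusedSectionVars false
namespace StmtAux

/-- split a walk at the last occurrence of `t` (tail version). -/
lemma splitLast {α : Type*} (r : α → α → Prop) (t : α) {x y : α}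
    (h : ReflTransGen r x y) :
    ReflTransGen (fun p q => r p q ∧ q ≠ t) x y ∨
      ReflTransGen (fun p q => r p q ∧ q ≠ t) t y := by
  induction h with
  | refl => exact Or.inl .refl
  | @tail b c hw hbc ih =>
    by_cases hc : c = t
    · subst hc; exact Or.inr .refl
    · rcases ih with h | h
      · exact Or.inl (h.tail ⟨hbc, hc⟩)
      · exact Or.inr (h.tail ⟨hbc, hc⟩)

/-- split a walk at the first occurrence of `t` (head version). -/
lemma splitFirst {α : Type*} (r : α → α → Prop) (t : α) {x y : α}
    (h : ReflTransGen r x y) :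
    ReflTransGen (fun p q => r p q ∧ q ≠ t) x y ∨
      ∃ p, ReflTransGen (fun p q => r p q ∧ q ≠ t) x p ∧ r p t := by
  induction h with
  | refl => exact Or.inl .refl
  | @tail b c hw hbc ih =>
    rcases ih with h | h
    · by_cases hc : c = t
      · exact Or.inr ⟨b, h, hc ▸ hbc⟩
      · exact Or.inl (h.tail ⟨hbc, hc⟩)
    · exact Or.inr h

/-- strengthen a walk avoiding `z` as target to one avoiding `z` everywhere. -/
lemma strengthenQ {α : Type*} (r : α → α → Prop) (z : α) {x y : α}
    (h : ReflTransGen (fun p q => r p q ∧ q ≠ z) x y) (hx : x ≠ z) :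
    ReflTransGen (fun p q => r p q ∧ p ≠ z ∧ q ≠ z) x y ∧ y ≠ z := by
  induction h with
  | refl => exact ⟨.refl, hx⟩
  | @tail b c hw hbc ih => exact ⟨ih.1.tail ⟨hbc.1, ih.2, hbc.2⟩, hbc.2⟩

lemma revWalk {α : Type*} {r : α → α → Prop} {x y : α}
    (h : ReflTransGen (fun p q => r q p) x y) : ReflTransGen r y x := by
  induction h with
  | refl => exact .refl
  | @tail b c hw hbc ih => exact ReflTransGen.head hbc ih

/-- lift a walk avoiding `z` to the vertex-deleted digraph. -/
lemma liftDel {α : Type*} (K : α → α → Prop) (z : α) {x y : α}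
    (h : ReflTransGen (fun p q => K p q ∧ p ≠ z ∧ q ≠ z) x y)
    (hx : x ≠ z) (hy : y ≠ z) :
    ReflTransGen (DelVert K z) ⟨x, hx⟩ ⟨y, hy⟩ := by
  revert hy
  induction h with
  | refl => intro hy; exact .refl
  | @tail b c hw hbc ih =>
    intro hy; exact ReflTransGen.tail (ih hbc.2.1) hbc.1

section LemL

variable {W : Type*} [Fintype W] (H : Option W → Option W → Prop)

/-- reachability from the root `none` avoiding `z`. -/
def ReachA (z : W) (x : W) : Prop :=
  ReflTransGen (fun p q => H p q ∧ q ≠ some z) none (some x)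

/-- the set of vertices dominated by `a` (every walk from the root hits `a`). -/
def Dom (a : W) : Set W := {x : W | ¬ ReachA H a x}

lemma mem_dom_self (a : W) : a ∈ Dom H a := by
  intro h
  rcases h.cases_tail with h | ⟨c, _, hc⟩
  · exact nomatch h
  · exact hc.2 rfl

lemma dom_trans {a x y : W} (hx : x ∈ Dom H a) (hy : y ∈ Dom H x) : y ∈ Dom H a := by
  intro hcon
  rcases splitFirst _ (some x) hcon with h | ⟨p, h, hp⟩
  · exact hy (ReflTransGen.mono (fun p q hpq => ⟨hpq.1.1, hpq.2⟩) _ _ h)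
  · exact hx ((ReflTransGen.mono (fun p q hpq => hpq.1) _ _ h).tail ⟨hp.1, hp.2⟩)

lemma dom_antisymm (hs : StronglyConnected H) {x y : W} (hx : x ∈ Dom H y)
    (hy : y ∈ Dom H x) : x = y := by
  by_contra hne
  rcases splitFirst H (some x) (hs none (some y)) with h | ⟨p, h, hp⟩
  · exact hy h
  · rcases splitFirst _ (some y) h with h' | ⟨p', h', hp'⟩
    · exact hx ((ReflTransGen.mono (fun p q hpq => ⟨hpq.1.1, hpq.2⟩) _ _ h').tail
        ⟨hp, fun hc => hne (Option.some_injective _ hc)⟩)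
    · exact hy ((ReflTransGen.mono (fun p q hpq => ⟨hpq.1.1, hpq.1.2⟩) _ _ h').tail ⟨hp'.1, hp'.2⟩)

lemma dom_disjoint (hs : StronglyConnected H) {a a' : W} (ha : H none (some a))
    (ha' : H none (some a')) (hne : a ≠ a') {x : W}
    (hx : x ∈ Dom H a) (hx' : x ∈ Dom H a') : False := by
  rcases splitLast H (some a) (hs none (some x)) with h | h
  · exact hx h
  · rcases splitLast _ (some a') h with h' | h'
    · exact hx' (ReflTransGen.head ⟨ha, fun hc => hne (Option.some_injective _ hc)⟩
        (ReflTransGen.mono (fun p q hpq => ⟨hpq.1.1, hpq.2⟩) _ _ h'))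
    · exact hx (ReflTransGen.head
        ⟨ha', fun hc => hne (Option.some_injective _ hc).symm⟩
        (ReflTransGen.mono (fun p q hpq => hpq.1) _ _ h'))

lemma exists_dom_min (hs : StronglyConnected H) (a : W) :
    ∃ x ∈ Dom H a, Dom H x = {x} := by
  classical
  have hfin : ∀ b : W, (Dom H b).Finite := fun b => Set.toFinite _
  obtain ⟨x, hxmem, hxmin⟩ := Finset.exists_min_image
    ((Finset.univ : Finset W).filter (· ∈ Dom H a)) (fun b => (Dom H b).ncard)
    ⟨a, by simp [mem_dom_self]⟩
  simp only [Finset.mem_filter, Finset.mem_univ, true_and] at hxmem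
  refine ⟨x, hxmem, ?_⟩
  have hsub : ∀ y ∈ Dom H x, y = x := by
    intro y hy
    by_contra hyne
    have hya : y ∈ Dom H a := dom_trans H hxmem hy
    have h1 : Dom H y ⊆ Dom H x := fun w hw => dom_trans H hy hw
    have h2 : (Dom H x).ncard ≤ (Dom H y).ncard :=
      hxmin y (by simp [hya])
    have : Dom H y = Dom H x := Set.eq_of_subset_of_ncard_le h1 h2 (hfin x)
    have hxy : x ∈ Dom H y := by rw [this]; exact mem_dom_self H x
    exact hyne (dom_antisymm H hs hxy hy).symm
  ext y
  simp only [Set.mem_singleton_iff]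
  exact ⟨hsub y, fun h => h ▸ mem_dom_self H x⟩

/-- key counting step: the out-neighbours of the root inject into the
"dominator-leaves". -/
lemma side (hs : StronglyConnected H) :
    {w : W | H none (some w)}.ncard ≤ {z : W | Dom H z = {z}}.ncard := by
  classical
  set A := {w : W | H none (some w)} with hA
  set L := {z : W | Dom H z = {z}} with hL
  have hchoice : ∀ a : W, H none (some a) → ∃ x, x ∈ Dom H a ∧ Dom H x = {x} := by
    intro a _
    obtain ⟨x, h1, h2⟩ := exists_dom_min H hs a
    exact ⟨x, h1, h2⟩
  let φ : W → W := fun a => if h : H none (some a) then (hchoice a h).choose else a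
  have hφdom : ∀ a ∈ A, φ a ∈ Dom H a := by
    intro a ha
    simp only [hA, Set.mem_setOf_eq] at ha
    simp only [φ, dif_pos ha]
    exact (hchoice a ha).choose_spec.1
  have hφL : ∀ a ∈ A, φ a ∈ L := by
    intro a ha
    simp only [hA, Set.mem_setOf_eq] at ha
    simp only [φ, dif_pos ha, hL, Set.mem_setOf_eq]
    exact (hchoice a ha).choose_spec.2
  have hinj : Set.InjOn φ A := by
    intro a ha a' ha' heq
    by_contra hne
    exact dom_disjoint H hs ha ha' hne (hφdom a ha) (heq ▸ hφdom a' ha')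
  calc A.ncard = (φ '' A).ncard := (Set.ncard_image_of_injOn hinj).symm
    _ ≤ L.ncard := Set.ncard_le_ncard (fun y ⟨a, ha, hay⟩ => hay ▸ hφL a ha)
      (Set.toFinite _)

/-- The main abstract lemma: in a strong digraph on `Option W` in which every
vertex except possibly `none` is critical, the degree of `none` is at most
`|W|`. -/
lemma lemL (hs : StronglyConnected H)
    (hcr : ∀ z : W, ¬ StronglyConnected (DelVert H (some z))) :
    {w : W | H none (some w)}.ncard + {w : W | H (some w) none}.ncard ≤
      Fintype.card W := by
  classical
  set H' : Option W → Option W → Prop := fun p q => H q p with hH'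
  have hs' : StronglyConnected H' := by
    intro a b
    exact Relation.reflTransGen_swap.mpr (hs b a)
  have h1 := side H hs
  have h2 := side H' hs'
  have hBeq : {w : W | H' none (some w)} = {w : W | H (some w) none} := rfl
  rw [hBeq] at h2
  -- the two leaf sets are disjoint
  have hdisj : Disjoint {z : W | Dom H z = {z}} {z : W | Dom H' z = {z}} := by
    rw [Set.disjoint_left]
    intro z hz hz'
    simp only [Set.mem_setOf_eq] at hz hz'
    apply hcr z
    -- build strong connectivity of the deleted digraph
    have hzne : (none : Option W) ≠ some z := by simp
    have reach_from_root : ∀ b : {ξ : Option W // ξ ≠ some z},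
        ReflTransGen (DelVert H (some z)) ⟨none, hzne⟩ b := by
      rintro ⟨b, hb⟩
      match b with
      | none => exact .refl
      | some y =>
        have hy : y ≠ z := fun h => hb (h ▸ rfl)
        have : ReachA H z y := by
          by_contra hcon
          have : y ∈ Dom H z := hcon
          rw [hz] at this
          exact hy this
        have h3 := strengthenQ H (some z) this hzne
        exact liftDel H (some z) h3.1 hzne hb
    have reach_to_root : ∀ b : {ξ : Option W // ξ ≠ some z},
        ReflTransGen (DelVert H (some z)) b ⟨none, hzne⟩ := by
      rintro ⟨b, hb⟩
      match b with
      | none => exact .refl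
      | some y =>
        have hy : y ≠ z := fun h => hb (h ▸ rfl)
        have hra : ReachA H' z y := by
          by_contra hcon
          have : y ∈ Dom H' z := hcon
          rw [hz'] at this
          exact hy this
        have h3 := strengthenQ H' (some z) hra hzne
        have h4 : ReflTransGen
            (fun p q => (fun p q => H p q ∧ p ≠ some z ∧ q ≠ some z) q p)
            none (some y) := ReflTransGen.mono (fun p q hpq => ⟨hpq.1, hpq.2.2, hpq.2.1⟩) _ _ h3.1
        exact liftDel H (some z) (revWalk h4) hb hzne
    intro a b
    exact (reach_to_root a).trans (reach_from_root b)
  calc {w : W | H none (some w)}.ncard + {w : W | H (some w) none}.ncard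
      ≤ {z : W | Dom H z = {z}}.ncard + {z : W | Dom H' z = {z}}.ncard :=
        Nat.add_le_add h1 h2
    _ = ({z : W | Dom H z = {z}} ∪ {z : W | Dom H' z = {z}}).ncard :=
        (Set.ncard_union_eq hdisj (Set.toFinite _) (Set.toFinite _)).symm
    _ ≤ (Set.univ : Set W).ncard :=
        Set.ncard_le_ncard (Set.subset_univ _) (Set.toFinite _)
    _ = Fintype.card W := by rw [Set.ncard_univ, Nat.card_eq_fintype_card]

end LemL

section Main
variable {V : Type*} (G : V → V → Prop) {k : ℕ} (v : ZMod k → V)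

/-- Criticality at the cycle vertex `v (j-1)` forbids having simultaneously an
arc from `v (j-2)` out of the cycle and an arc from outside into `v j`. -/
lemma key [NeZero k] (hk : 2 ≤ k) (hC : IsChordlessCycle G v) (hcrit : Critical G)
    (hdel : StronglyConnected (DelSet G (Set.range v)))
    (j : ZMod k) (w₁ w₂ : V) (h1m : w₁ ∉ Set.range v) (h2m : w₂ ∉ Set.range v)
    (h1 : G (v (j - 2)) w₁) (h2 : G w₂ (v j)) : False := by
  set z := v (j - 1) with hz
  apply hcrit.2 z
  -- basic cast facts
  have hcast : ∀ t : ℕ, t ≤ k - 2 → ((t : ZMod k) ≠ -1) := by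
    intro t ht hcon
    have e1 : ((t : ZMod k)).val = t := ZMod.val_cast_of_lt (by omega)
    have e2 : ((-1 : ZMod k)) = ((k - 1 : ℕ) : ZMod k) := by
      rw [Nat.cast_sub (by omega : 1 ≤ k), ZMod.natCast_self]; ring
    rw [e2] at hcon
    have e3 : (((k - 1 : ℕ) : ZMod k)).val = k - 1 := ZMod.val_cast_of_lt (by omega)
    rw [hcon, e3] at e1
    omega
  have hne_t : ∀ t : ℕ, t ≤ k - 2 → v (j + (t : ZMod k)) ≠ z := by
    intro t ht h
    have h' := hC.inj h
    have h2' : j + (t : ZMod k) = j + (-1) := by rw [h']; ring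
    exact hcast t ht (add_left_cancel h2')
  have hRz : ∀ w : V, w ∉ Set.range v → w ≠ z := by
    intro w hw h
    exact hw ⟨j - 1, h.symm⟩
  -- forward walks along the cycle avoiding z
  have FWD : ∀ d s : ℕ, s + d ≤ k - 2 → ∀ (a b : ZMod k), a = j + (s : ZMod k) →
      b = j + ((s + d : ℕ) : ZMod k) → ∀ (ha : v a ≠ z) (hb : v b ≠ z),
      Relation.ReflTransGen (DelVert G z) ⟨v a, ha⟩ ⟨v b, hb⟩ := by
    intro d
    induction d with
    | zero =>
      intro s hs a b hA hB ha hb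
      have : a = b := by rw [hA, hB]; norm_num
      subst this
      exact .refl
    | succ d ih =>
      intro s hs a b hA hB ha hb
      have hstep : G (v a) (v (a + 1)) := hC.edges a
      have hmem : v (a + 1) ≠ z := by
        have : a + 1 = j + ((s + 1 : ℕ) : ZMod k) := by
          rw [hA]; push_cast; ring
        rw [this]
        exact hne_t (s + 1) (by omega)
      refine Relation.ReflTransGen.head (show DelVert G z ⟨v a, ha⟩ ⟨v (a+1), hmem⟩ from hstep) ?_
      refine ih (s + 1) (by omega) (a + 1) b ?_ ?_ hmem hb
      · rw [hA]; push_cast; ring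
      · rw [hB]; congr 1; congr 1; omega
  -- decomposition of cycle vertices
  have cyc_t : ∀ i : ZMod k, i ≠ j - 1 → ∃ t : ℕ, t ≤ k - 2 ∧ i = j + (t : ZMod k) := by
    intro i hi
    refine ⟨(i - j).val, ?_, ?_⟩
    · have h1' : (i - j).val < k := ZMod.val_lt _
      have h2' : (i - j).val ≠ k - 1 := by
        intro hcon
        apply hi
        have hval : ((i - j).val : ZMod k) = i - j := ZMod.natCast_rightInverse _
        rw [hcon] at hval
        have e2 : ((k - 1 : ℕ) : ZMod k) = -1 := by
          rw [Nat.cast_sub (by omega : 1 ≤ k), ZMod.natCast_self]; ring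
        rw [e2] at hval
        have hij : i = -1 + j := by rw [hval]; ring
        rw [hij]; ring
      omega
    · have : ((i - j).val : ZMod k) = i - j := ZMod.natCast_rightInverse _
      rw [this]; ring
  have hj0 : (0 : ZMod k) ≠ -1 := by
    have := hcast 0 (by omega)
    simpa using this
  have hjne : v j ≠ z := by
    intro h
    have := hC.inj h
    apply hj0
    exact add_left_cancel (a := j) (by rw [← sub_eq_add_neg, ← this]; ring)
  have hhub : j + ((k - 2 : ℕ) : ZMod k) = j - 2 := by
    rw [Nat.cast_sub hk, ZMod.natCast_self]
    push_cast
    ring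
  have hhubne : v (j - 2) ≠ z := by
    have := hne_t (k - 2) le_rfl
    rwa [hhub] at this
  -- lifted walks inside R
  have pRR : ∀ (w w' : V) (hw : w ∉ Set.range v) (hw' : w' ∉ Set.range v),
      Relation.ReflTransGen (DelVert G z) ⟨w, hRz w hw⟩ ⟨w', hRz w' hw'⟩ := by
    intro w w' hw hw'
    have := hdel ⟨w, hw⟩ ⟨w', hw'⟩
    exact Relation.ReflTransGen.lift (p := DelVert G z)
      (fun (x : {x : V // x ∉ Set.range v}) => (⟨x.1, hRz x.1 x.2⟩ : {x : V // x ≠ z}))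
      (fun a b hab => hab) _ _ this
  -- pieces
  have pc1 : ∀ (i : ZMod k) (hi : i ≠ j - 1) (hvi : v i ≠ z),
      Relation.ReflTransGen (DelVert G z) ⟨v i, hvi⟩ ⟨v (j - 2), hhubne⟩ := by
    intro i hi hvi
    obtain ⟨t, ht, hit⟩ := cyc_t i hi
    exact FWD (k - 2 - t) t (by omega) i (j - 2) hit
      (by rw [show t + (k - 2 - t) = k - 2 by omega, hhub]) hvi hhubne
  have pc4 : ∀ (i : ZMod k) (hi : i ≠ j - 1) (hvi : v i ≠ z),
      Relation.ReflTransGen (DelVert G z) ⟨v j, hjne⟩ ⟨v i, hvi⟩ := by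
    intro i hi hvi
    obtain ⟨t, ht, hit⟩ := cyc_t i hi
    exact FWD t 0 (by omega) j i (by push_cast; ring)
      (by rw [Nat.zero_add]; exact hit) hjne hvi
  have pc2 : DelVert G z ⟨v (j - 2), hhubne⟩ ⟨w₁, hRz w₁ h1m⟩ := h1
  have pc3 : DelVert G z ⟨w₂, hRz w₂ h2m⟩ ⟨v j, hjne⟩ := h2
  -- index extraction for cycle vertices
  have cycIdx : ∀ (x : {x : V // x ≠ z}), x.1 ∈ Set.range v →
      ∃ i : ZMod k, i ≠ j - 1 ∧ x.1 = v i := by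
    rintro ⟨x, hx⟩ ⟨i, rfl⟩
    exact ⟨i, fun h => hx (by rw [h]), rfl⟩
  have reachHub : ∀ x : {x : V // x ≠ z},
      Relation.ReflTransGen (DelVert G z) x ⟨v (j - 2), hhubne⟩ := by
    intro x
    by_cases hx : x.1 ∈ Set.range v
    · obtain ⟨i, hi, hxi⟩ := cycIdx x hx
      have : x = ⟨v i, hxi ▸ x.2⟩ := Subtype.ext hxi
      rw [this]
      exact pc1 i hi _
    · have hw := pRR x.1 w₂ hx h2m
      have : x = ⟨x.1, hRz x.1 hx⟩ := Subtype.ext rfl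
      rw [this]
      exact (hw.tail pc3).trans (pc1 j (fun h => hj0
        (add_left_cancel (a := j) (by rw [← sub_eq_add_neg, ← h]; ring))) hjne)
  have hubReach : ∀ x : {x : V // x ≠ z},
      Relation.ReflTransGen (DelVert G z) ⟨v (j - 2), hhubne⟩ x := by
    intro x
    by_cases hx : x.1 ∈ Set.range v
    · obtain ⟨i, hi, hxi⟩ := cycIdx x hx
      have hxeq : x = ⟨v i, hxi ▸ x.2⟩ := Subtype.ext hxi
      rw [hxeq]
      exact (Relation.ReflTransGen.head pc2 ((pRR w₁ w₂ h1m h2m).tail pc3)).trans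
        (pc4 i hi _)
    · have hxeq : x = ⟨x.1, hRz x.1 hx⟩ := Subtype.ext rfl
      rw [hxeq]
      exact Relation.ReflTransGen.head pc2 (pRR w₁ x.1 h1m hx)
  intro a b
  exact (reachHub a).trans (hubReach b)

/-- canonical representative in `G - z` of a vertex of the contracted deleted graph -/
def repC (v : ZMod k → V) (z : {x : V // x ∉ Set.range v})
    (ξ : {ξ : Option {x : V // x ∉ Set.range v} // ξ ≠ some z}) : {x : V // x ≠ z.1} :=
  match ξ with
  | ⟨none, _⟩ => ⟨v 0, fun h => z.2 ⟨0, h⟩⟩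
  | ⟨some w, hw⟩ => ⟨w.1, fun h => hw (by rw [show w = z from Subtype.ext h])⟩

lemma contract_strong (hs : StronglyConnected G) :
    StronglyConnected (Contract G (Set.range v)) := by
  classical
  set C := Set.range v with hCdef
  set π : V → Option {x : V // x ∉ C} :=
    fun x => if h : x ∈ C then none else some ⟨x, h⟩ with hπ
  have mapG : ∀ {x y : V}, Relation.ReflTransGen G x y →
      Relation.ReflTransGen (Contract G C) (π x) (π y) := by
    intro x y h
    induction h with
    | refl => exact .refl
    | @tail b c hw hbc ih =>
      refine ih.trans ?_
      by_cases hb : b ∈ C <;> by_cases hc : c ∈ C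
      · simp only [π, dif_pos hb, dif_pos hc]
        exact .refl
      · simp only [π, dif_pos hb, dif_neg hc]
        exact Relation.ReflTransGen.single ⟨b, hb, hbc⟩
      · simp only [π, dif_neg hb, dif_pos hc]
        exact Relation.ReflTransGen.single ⟨c, hc, hbc⟩
      · simp only [π, dif_neg hb, dif_neg hc]
        exact Relation.ReflTransGen.single hbc
  intro a b
  set rep : Option {x : V // x ∉ C} → V := fun ξ => ξ.elim (v 0) Subtype.val with hrepdef
  have hrep : ∀ ξ, π (rep ξ) = ξ := by
    rintro (_ | w)
    · simp only [π, rep, Option.elim]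
      rw [dif_pos ⟨0, rfl⟩]
    · simp only [π, rep, Option.elim]
      rw [dif_neg w.2]
  have := mapG (hs (rep a) (rep b))
  rwa [hrep, hrep] at this

lemma contract_crit [NeZero k] (hC : IsChordlessCycle G v) (hcrit : Critical G) :
    ∀ z : {x : V // x ∉ Set.range v},
      ¬ StronglyConnected (DelVert (Contract G (Set.range v)) (some z)) := by
  intro z hstr
  apply hcrit.2 z.1
  have hvne : ∀ i : ZMod k, v i ≠ z.1 := fun i h => z.2 ⟨i, h⟩
  -- walks along the cycle
  have cyc : ∀ (t : ℕ) (i b : ZMod k), b = i + (t : ZMod k) →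
      Relation.ReflTransGen (DelVert G z.1) ⟨v i, hvne i⟩ ⟨v b, hvne b⟩ := by
    intro t
    induction t with
    | zero =>
      intro i b hb
      have : b = i := by rw [hb]; push_cast; ring
      subst this
      exact .refl
    | succ t ih =>
      intro i b hb
      refine Relation.ReflTransGen.head
        (show DelVert G z.1 ⟨v i, hvne i⟩ ⟨v (i+1), hvne _⟩ from hC.edges i) ?_
      exact ih (i + 1) b (by rw [hb]; push_cast; ring)
  have cyc2 : ∀ i i' : ZMod k,
      Relation.ReflTransGen (DelVert G z.1) ⟨v i, hvne i⟩ ⟨v i', hvne i'⟩ := by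
    intro i i'
    refine cyc ((i' - i).val) i i' ?_
    rw [(ZMod.natCast_rightInverse (i' - i) : (((i' - i).val : ℕ) : ZMod k) = i' - i)]
    ring
  have expand : ∀ {ξ η}, Relation.ReflTransGen
      (DelVert (Contract G (Set.range v)) (some z)) ξ η →
      Relation.ReflTransGen (DelVert G z.1) (repC v z ξ) (repC v z η) := by
    intro ξ η h
    induction h with
    | refl => exact .refl
    | @tail β η hw hβη ih =>
      refine ih.trans ?_
      obtain ⟨β1, hβ⟩ := β
      obtain ⟨η1, hη⟩ := η
      match β1, hβ, η1, hη, hβη with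
      | some u, hb', some w, he', hstep =>
        exact Relation.ReflTransGen.single
          (show DelVert G z.1 (repC v z ⟨some u, hb'⟩) (repC v z ⟨some w, he'⟩) from hstep)
      | some u, hb', none, he', hstep =>
        obtain ⟨x, ⟨i, rfl⟩, hG⟩ := (hstep : ∃ x ∈ Set.range v, G u.1 x)
        exact Relation.ReflTransGen.head
          (show DelVert G z.1 (repC v z ⟨some u, hb'⟩) ⟨v i, hvne i⟩ from hG) (cyc2 i 0)
      | none, hb', some w, he', hstep =>
        obtain ⟨x, ⟨i, rfl⟩, hG⟩ := (hstep : ∃ x ∈ Set.range v, G x w.1)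
        exact Relation.ReflTransGen.tail (cyc2 0 i)
          (show DelVert G z.1 ⟨v i, hvne i⟩ (repC v z ⟨some w, he'⟩) from hG)
      | none, _, none, _, hstep => exact hstep.elim
  have toRep : ∀ (x : {x : V // x ≠ z.1}),
      ∃ ξ, Relation.ReflTransGen (DelVert G z.1) x (repC v z ξ) ∧
        Relation.ReflTransGen (DelVert G z.1) (repC v z ξ) x := by
    intro x
    by_cases h : x.1 ∈ Set.range v
    · obtain ⟨i, hi⟩ := h
      have hx : x = ⟨v i, hvne i⟩ := Subtype.ext hi.symm
      exact ⟨⟨none, by simp⟩, by rw [hx]; exact cyc2 i 0, by rw [hx]; exact cyc2 0 i⟩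
    · refine ⟨⟨some ⟨x.1, h⟩, fun hc => x.2 ?_⟩, ?_, ?_⟩
      · have := Option.some_injective _ hc
        exact congrArg Subtype.val this
      · exact .refl
      · exact .refl
  intro x y
  obtain ⟨ξ, hx1, _⟩ := toRep x
  obtain ⟨η, _, hy2⟩ := toRep y
  exact hx1.trans ((expand (hstr ξ η)).trans hy2)

lemma crossIn {α : Type*} (r : α → α → Prop) (S : Set α) {x y : α}
    (h : Relation.ReflTransGen r x y) (hx : x ∉ S) (hy : y ∈ S) :
    ∃ p q, p ∉ S ∧ q ∈ S ∧ r p q := by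
  induction h with
  | refl => exact absurd hy hx
  | @tail b c hw hbc ih =>
    by_cases hb : b ∈ S
    · exact ih hb
    · exact ⟨b, c, hb, hy, hbc⟩

lemma crossOut {α : Type*} (r : α → α → Prop) (S : Set α) {x y : α}
    (h : Relation.ReflTransGen r x y) (hx : x ∈ S) (hy : y ∉ S) :
    ∃ p q, p ∈ S ∧ q ∉ S ∧ r p q := by
  induction h with
  | refl => exact absurd hx hy
  | @tail b c hw hbc ih =>
    by_cases hb : b ∈ S
    · exact ⟨b, c, hb, hy, hbc⟩
    · exact ih hb

end Main
end StmtAux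

open StmtAux in
theorem stmt10 {V : Type*} [Fintype V] (G : V → V → Prop) (n k : ℕ)
    (hn : Fintype.card V = n) (hirr : Irreflexive G) (hcrit : Critical G)
    (hk : 2 ≤ k) (v : ZMod k → V) (hC : IsChordlessCycle G v)
    (hne : Set.range v ≠ Set.univ)
    (hdel : StronglyConnected (DelSet G (Set.range v))) :
    ∑ i ∈ Finset.range k, deg G (v (i : ZMod k)) ≤ (n - 1) * k - n + 4 := by
  classical
  haveI : NeZero k := ⟨by omega⟩
  set C := Set.range v with hCdef
  -- witnesses of crossing arcs
  obtain ⟨w₀, hw₀⟩ : ∃ w, w ∉ C := Set.ne_univ_iff_exists_notMem C |>.mp hne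
  obtain ⟨p₀, q₀, hp₀, hq₀, hpq₀⟩ := crossIn G C (hcrit.1 w₀ (v 0)) hw₀ ⟨0, rfl⟩
  obtain ⟨j₀, hj₀⟩ := hq₀
  obtain ⟨p₁, q₁, hp₁, hq₁, hpq₁⟩ := crossOut G C (hcrit.1 (v 0) w₀) ⟨0, rfl⟩ hw₀
  obtain ⟨i₀, hi₀⟩ := hp₁
  -- the two forbidden indices
  have hO : ∀ (i : ZMod k) (w : {x : V // x ∉ C}), G (v i) w.1 → i ≠ j₀ - 2 := by
    intro i w hG hcon
    refine key G v hk hC hcrit hdel j₀ w.1 p₀ w.2 hp₀ ?_ ?_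
    · rw [← hcon]; exact hG
    · rw [hj₀]; exact hpq₀
  have hI : ∀ (i : ZMod k) (w : {x : V // x ∉ C}), G w.1 (v i) → i ≠ i₀ + 2 := by
    intro i w hG hcon
    refine key G v hk hC hcrit hdel (i₀ + 2) q₁ w.1 hq₁ w.2 ?_ ?_
    · have he : i₀ + 2 - 2 = i₀ := by ring
      rw [he, hi₀]; exact hpq₁
    · rw [← hcon]; exact hG
  have hcardZ : Fintype.card (ZMod k) = k := ZMod.card k
  -- per-vertex filter bounds
  have cardO : ∀ w : {x : V // x ∉ C},
      (Finset.univ.filter (fun i : ZMod k => G (v i) w.1)).card ≤ k - 1 := by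
    intro w
    have hsub : Finset.univ.filter (fun i : ZMod k => G (v i) w.1) ⊆
        Finset.univ.erase (j₀ - 2) := by
      intro i hi
      rw [Finset.mem_filter] at hi
      exact Finset.mem_erase.mpr ⟨hO i w hi.2, Finset.mem_univ i⟩
    calc _ ≤ (Finset.univ.erase (j₀ - 2)).card := Finset.card_le_card hsub
      _ = k - 1 := by
        rw [Finset.card_erase_of_mem (Finset.mem_univ _), Finset.card_univ, hcardZ]
  have cardI : ∀ w : {x : V // x ∉ C},
      (Finset.univ.filter (fun i : ZMod k => G w.1 (v i))).card ≤ k - 1 := by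
    intro w
    have hsub : Finset.univ.filter (fun i : ZMod k => G w.1 (v i)) ⊆
        Finset.univ.erase (i₀ + 2) := by
      intro i hi
      rw [Finset.mem_filter] at hi
      exact Finset.mem_erase.mpr ⟨hI i w hi.2, Finset.mem_univ i⟩
    calc _ ≤ (Finset.univ.erase (i₀ + 2)).card := Finset.card_le_card hsub
      _ = k - 1 := by
        rw [Finset.card_erase_of_mem (Finset.mem_univ _), Finset.card_univ, hcardZ]
  -- the contraction and the key counting lemma
  have hsH := contract_strong G v hcrit.1
  have hcrH := contract_crit G v hC hcrit
  have hcount := lemL (Contract G C) hsH hcrH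
  -- degree decomposition
  set a : ZMod k → ℕ :=
    fun i => (Finset.univ.filter (fun w : {x : V // x ∉ C} => G (v i) w.1)).card with ha
  set b : ZMod k → ℕ :=
    fun i => (Finset.univ.filter (fun w : {x : V // x ∉ C} => G w.1 (v i))).card with hb
  have degEq : ∀ i : ZMod k, deg G (v i) = (1 + a i) + (1 + b i) := by
    intro i
    have hout : {u : V | G (v i) u} =
        {v (i+1)} ∪ (Subtype.val '' {w : {x : V // x ∉ C} | G (v i) w.1}) := by
      ext u
      simp only [Set.mem_union, Set.mem_singleton_iff, Set.mem_image, Set.mem_setOf_eq]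
      constructor
      · intro hu
        by_cases hC' : u ∈ C
        · obtain ⟨jj, rfl⟩ := hC'
          left; rw [hC.chordless i jj hu]
        · right; exact ⟨⟨u, hC'⟩, hu, rfl⟩
      · rintro (rfl | ⟨w, hw, rfl⟩)
        · exact hC.edges i
        · exact hw
    have hin : {u : V | G u (v i)} =
        {v (i-1)} ∪ (Subtype.val '' {w : {x : V // x ∉ C} | G w.1 (v i)}) := by
      ext u
      simp only [Set.mem_union, Set.mem_singleton_iff, Set.mem_image, Set.mem_setOf_eq]
      constructor
      · intro hu
        by_cases hC' : u ∈ C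
        · obtain ⟨jj, rfl⟩ := hC'
          left
          have h' := hC.chordless jj i hu
          rw [h']; congr 1; ring
        · right; exact ⟨⟨u, hC'⟩, hu, rfl⟩
      · rintro (rfl | ⟨w, hw, rfl⟩)
        · have := hC.edges (i - 1)
          rwa [sub_add_cancel] at this
        · exact hw
    have hdisj1 : Disjoint {v (i+1)}
        (Subtype.val '' {w : {x : V // x ∉ C} | G (v i) w.1}) := by
      rw [Set.disjoint_left]
      rintro x rfl ⟨w, _, hwx⟩
      exact w.2 ⟨i + 1, hwx.symm⟩
    have hdisj2 : Disjoint {v (i-1)}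
        (Subtype.val '' {w : {x : V // x ∉ C} | G w.1 (v i)}) := by
      rw [Set.disjoint_left]
      rintro x rfl ⟨w, _, hwx⟩
      exact w.2 ⟨i - 1, hwx.symm⟩
    have hfin : ∀ (s : Set V), s.Finite := fun s => Set.toFinite s
    rw [deg, hout, hin, Set.ncard_union_eq hdisj1 (hfin _) (hfin _),
      Set.ncard_union_eq hdisj2 (hfin _) (hfin _)]
    simp only [Set.ncard_singleton, Set.ncard_image_of_injective _ Subtype.val_injective,
      Set.ncard_eq_toFinset_card', Set.toFinset_setOf, Set.toFinset_singleton,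
      Finset.card_singleton]
    rfl
  -- reindex the sum
  have hsum : ∑ i ∈ Finset.range k, deg G (v (i : ZMod k)) = ∑ i : ZMod k, deg G (v i) := by
    refine Finset.sum_nbij' (fun i => ((i : ZMod k))) (fun j => j.val) ?_ ?_ ?_ ?_ ?_
    · intro i _; exact Finset.mem_univ _
    · intro j _; exact Finset.mem_range.mpr (ZMod.val_lt j)
    · intro i hi; exact ZMod.val_cast_of_lt (Finset.mem_range.mp hi)
    · intro j _; exact ZMod.natCast_rightInverse j
    · intro i _; rfl
  -- double counting
  have hdca : ∑ i : ZMod k, a i =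
      ∑ w : {x : V // x ∉ C},
        (Finset.univ.filter (fun i : ZMod k => G (v i) w.1)).card := by
    simp only [ha, Finset.card_filter]
    exact Finset.sum_comm
  have hdcb : ∑ i : ZMod k, b i =
      ∑ w : {x : V // x ∉ C},
        (Finset.univ.filter (fun i : ZMod k => G w.1 (v i))).card := by
    simp only [hb, Finset.card_filter]
    exact Finset.sum_comm
  -- restrict to vertices with at least one arc
  set Af : Finset {x : V // x ∉ C} :=
    Finset.univ.filter (fun w => Contract G C none (some w)) with hAf
  set Bf : Finset {x : V // x ∉ C} :=
    Finset.univ.filter (fun w => Contract G C (some w) none) with hBf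
  have hsuma : ∑ w : {x : V // x ∉ C},
      (Finset.univ.filter (fun i : ZMod k => G (v i) w.1)).card ≤ (k - 1) * Af.card := by
    have he : ∀ w ∈ Finset.univ, w ∉ Af →
        (Finset.univ.filter (fun i : ZMod k => G (v i) w.1)).card = 0 := by
      intro w _ hw
      rw [Finset.card_eq_zero, Finset.filter_eq_empty_iff]
      intro i _
      intro hG
      exact hw (Finset.mem_filter.mpr ⟨Finset.mem_univ _,
        (⟨v i, ⟨i, rfl⟩, hG⟩ : ∃ x ∈ C, G x w.1)⟩)
    rw [← Finset.sum_subset (Finset.subset_univ Af) he]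
    calc _ ≤ Af.card * (k - 1) :=
        Finset.sum_le_card_nsmul _ _ _ (fun w _ => cardO w)
      _ = (k - 1) * Af.card := Nat.mul_comm _ _
  have hsumb : ∑ w : {x : V // x ∉ C},
      (Finset.univ.filter (fun i : ZMod k => G w.1 (v i))).card ≤ (k - 1) * Bf.card := by
    have he : ∀ w ∈ Finset.univ, w ∉ Bf →
        (Finset.univ.filter (fun i : ZMod k => G w.1 (v i))).card = 0 := by
      intro w _ hw
      rw [Finset.card_eq_zero, Finset.filter_eq_empty_iff]
      intro i _
      intro hG
      exact hw (Finset.mem_filter.mpr ⟨Finset.mem_univ _,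
        (⟨v i, ⟨i, rfl⟩, hG⟩ : ∃ x ∈ C, G w.1 x)⟩)
    rw [← Finset.sum_subset (Finset.subset_univ Bf) he]
    calc _ ≤ Bf.card * (k - 1) :=
        Finset.sum_le_card_nsmul _ _ _ (fun w _ => cardI w)
      _ = (k - 1) * Bf.card := Nat.mul_comm _ _
  -- identify the lemL sets with the finsets
  have hAcard : {w : {x : V // x ∉ C} | Contract G C none (some w)}.ncard = Af.card := by
    rw [Set.ncard_eq_toFinset_card', Set.toFinset_setOf]
  have hBcard : {w : {x : V // x ∉ C} | Contract G C (some w) none}.ncard = Bf.card := by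
    rw [Set.ncard_eq_toFinset_card', Set.toFinset_setOf]
  rw [hAcard, hBcard] at hcount
  -- cardinalities
  set m := Fintype.card {x : V // x ∉ C} with hm
  have hkn : k + m = n := by
    have h1 : Fintype.card {x : V // x ∈ C} = k := by
      rw [← Nat.card_eq_fintype_card]
      have : Nat.card {x : V // x ∈ C} = Nat.card C := rfl
      rw [this, Nat.card_range_of_injective hC.inj, Nat.card_eq_fintype_card, hcardZ]
    have h2 : Fintype.card {x : V // x ∉ C} = Fintype.card V - Fintype.card {x : V // x ∈ C} :=
      Fintype.card_subtype_compl _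
    have h3 : Fintype.card {x : V // x ∈ C} ≤ Fintype.card V := by
      apply Fintype.card_le_of_injective (fun w => w.1) (fun x y h => Subtype.ext h)
    omega
  have hm1 : 1 ≤ m := by
    rw [hm]
    have : Nonempty {x : V // x ∉ C} := ⟨⟨w₀, hw₀⟩⟩
    exact Fintype.card_pos
  -- assemble
  have hfinal : ∑ i ∈ Finset.range k, deg G (v (i : ZMod k)) ≤ 2 * k + (k - 1) * m := by
    rw [hsum]
    calc ∑ i : ZMod k, deg G (v i) = ∑ i : ZMod k, ((1 + a i) + (1 + b i)) :=
        Finset.sum_congr rfl (fun i _ => degEq i)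
      _ = 2 * k + (∑ i : ZMod k, a i + ∑ i : ZMod k, b i) := by
        rw [Finset.sum_add_distrib, Finset.sum_add_distrib, Finset.sum_add_distrib,
          Finset.sum_const, Finset.card_univ, hcardZ, smul_eq_mul, mul_one]
        ring
      _ ≤ 2 * k + ((k - 1) * Af.card + (k - 1) * Bf.card) := by
        rw [hdca, hdcb]
        exact Nat.add_le_add_left (Nat.add_le_add hsuma hsumb) _
      _ = 2 * k + (k - 1) * (Af.card + Bf.card) := by ring
      _ ≤ 2 * k + (k - 1) * m := by
        exact Nat.add_le_add_left (Nat.mul_le_mul_left _ hcount) _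
  -- arithmetic conclusion
  have hn2 : 2 ≤ n := by omega
  have hTn : n ≤ (n - 1) * k := by
    calc n ≤ (n - 1) * 2 := by omega
      _ ≤ (n - 1) * k := Nat.mul_le_mul_left _ hk
  have hmain : 2 * k + (k - 1) * m + n ≤ (n - 1) * k + 4 := by
    have hkm : n = k + m := hkn.symm
    subst hkm
    have h2 : 1 ≤ k := by omega
    zify [h2, show 1 ≤ k + m by omega]
    nlinarith [sq_nonneg ((k : ℤ) - 2)]
  have := hfinal
  set T := (n - 1) * k with hT
  omega
end

section
/- Let D be a vertex-critical strongly connected simple digraph, and let C be a chordless directed cycle in D with V(C) ≠ V(D). Then n ≥ |V(C)| + 2, i.e., at least two vertices of D lie outside C. -/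
theorem stmt11 {V : Type*} [Fintype V] (G : V → V → Prop)
    (hirr : Irreflexive G) (hcrit : Critical G) {k : ℕ} (hk : 2 ≤ k)
    (v : ZMod k → V) (hC : IsChordlessCycle G v)
    (hne : Set.range v ≠ Set.univ) :
    k + 2 ≤ Fintype.card V := by
  haveI : NeZero k := ⟨by omega⟩
  by_contra hlt
  push_neg at hlt
  obtain ⟨z, hz⟩ : ∃ z, z ∉ Set.range v := by
    by_contra h; push_neg at h
    exact hne (Set.eq_univ_of_forall fun x => h x)
  have hall : ∀ x : V, x ≠ z → x ∈ Set.range v := by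
    intro x hx
    by_contra hxv
    have hinj : Function.Injective
        (Sum.elim v (fun j : Fin 2 => if j = 0 then z else x)) := by
      rintro (i | i) (j | j) h <;>
        simp only [Sum.elim_inl, Sum.elim_inr] at h
      · exact congrArg _ (hC.inj h)
      · split_ifs at h
        · exact absurd ⟨i, h⟩ hz
        · exact absurd ⟨i, h⟩ hxv
      · split_ifs at h
        · exact absurd ⟨j, h.symm⟩ hz
        · exact absurd ⟨j, h.symm⟩ hxv
      · congr 1
        fin_cases i <;> fin_cases j <;> simp_all <;>
          first
            | exact (hx ‹x = z›).elim
            | exact (hx (Eq.symm ‹z = x›)).elim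
    have := Fintype.card_le_of_injective _ hinj
    simp [ZMod.card] at this
    omega
  apply hcrit.2 z
  have key : ∀ (m : ℕ) (i j : ZMod k), j = i + (m : ZMod k) →
      ∀ (hi : v i ≠ z) (hj : v j ≠ z),
      Relation.ReflTransGen (DelVert G z) ⟨v i, hi⟩ ⟨v j, hj⟩ := by
    intro m
    induction m with
    | zero =>
      intro i j hij hi hj
      simp only [Nat.cast_zero, add_zero] at hij
      subst hij
      exact Relation.ReflTransGen.refl
    | succ n ih =>
      intro i j hij hi hj
      have h1 : v (i + 1) ≠ z := fun h => hz ⟨i + 1, h⟩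
      have hij' : j = (i + 1) + (n : ZMod k) := by push_cast at hij ⊢; rw [hij]; ring
      exact Relation.ReflTransGen.head (show DelVert G z ⟨v i, hi⟩ ⟨v (i+1), h1⟩ from hC.edges i) (ih (i + 1) j hij' h1 hj)
  intro a b
  obtain ⟨i, hi⟩ := hall a.1 a.2
  obtain ⟨j, hj⟩ := hall b.1 b.2
  have ha : a = ⟨v i, hi ▸ a.2⟩ := Subtype.ext hi.symm
  have hb : b = ⟨v j, hj ▸ b.2⟩ := Subtype.ext hj.symm
  rw [ha, hb]
  exact key (j - i).val i j (by rw [ZMod.natCast_val, ZMod.cast_id]; ring) _ _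
end
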